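/- arXiv:2405.16780 — 12 statements merged into one kernel-verified Lean document; each statement's English description precedes it below -/
import Mathlib

section
/- Under randomization and monotonicity, the proportions of the compliance strata are identified from the observed data: P(a) = E[D | Z=0], P(c) = E[D | Z=1] − E[D | Z=0], and P(n) = 1 − E[D | Z=1]. -/
open MeasureTheory ProbabilityTheory

variable {Ω : Type*} [MeasurableSpace Ω]

/-- Conditional expectation of `X` given the event `A`: `E[X | A] = E[X·1_A] / P(A)`. -/
noncomputable def cexp (P : Measure Ω) (A : Set Ω) (X : Ω → ℝ) : ℝ :=
  (∫ ω in A, X ω ∂P) / (P A).toReal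

/-- Conditional probability of `B` given the event `A`: `P(B | A) = P(B ∩ A) / P(A)`. -/
noncomputable def cprob (P : Measure Ω) (A B : Set Ω) : ℝ :=
  (P (B ∩ A)).toReal / (P A).toReal

/-- A {0,1}-valued function equals the indicator of its level-1 set. -/
lemma bin_eq_indicator (X : Ω → ℝ) (hb : ∀ ω, X ω = 0 ∨ X ω = 1) :
    X = Set.indicator {ω | X ω = 1} (fun _ => (1:ℝ)) := by
  funext ω
  by_cases h : ω ∈ {ω | X ω = 1}
  · rw [Set.indicator_of_mem h]; exact h
  · rw [Set.indicator_of_notMem h]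
    rcases hb ω with h0 | h1
    · exact h0
    · exact absurd h1 h

lemma bin_integrable (P : Measure Ω) [IsProbabilityMeasure P]
    {X : Ω → ℝ} (hX : Measurable X) (hb : ∀ ω, X ω = 0 ∨ X ω = 1) :
    Integrable X P := by
  rw [bin_eq_indicator X hb]
  exact (integrable_const (1:ℝ)).indicator (hX (measurableSet_singleton 1))

lemma bin_integral (P : Measure Ω) [IsProbabilityMeasure P]
    {X : Ω → ℝ} (hX : Measurable X) (hb : ∀ ω, X ω = 0 ∨ X ω = 1) :
    ∫ ω, X ω ∂P = (P {ω | X ω = 1}).toReal := by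
  have hs : MeasurableSet {ω | X ω = 1} := hX (measurableSet_singleton 1)
  conv_lhs => rw [bin_eq_indicator X hb]
  rw [integral_indicator_const (1:ℝ) hs]
  simp
  rfl

/-- Under randomization and monotonicity, the proportions of the compliance
strata are identified: `P(a) = E[D | Z=0]`, `P(c) = E[D | Z=1] − E[D | Z=0]`,
`P(n) = 1 − E[D | Z=1]`. -/
theorem stmt_0
    (P : Measure Ω) [IsProbabilityMeasure P]
    (Z D0 D1 S0 S1 Y0 Y1 D S Y : Ω → ℝ)
    (hZm : Measurable Z) (hD0m : Measurable D0) (hD1m : Measurable D1)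
    (hS0m : Measurable S0) (hS1m : Measurable S1)
    (hY0i : Integrable Y0 P) (hY1i : Integrable Y1 P)
    (hZb : ∀ ω, Z ω = 0 ∨ Z ω = 1)
    (hD0b : ∀ ω, D0 ω = 0 ∨ D0 ω = 1)
    (hD1b : ∀ ω, D1 ω = 0 ∨ D1 ω = 1)
    (hS0b : ∀ ω, S0 ω = 0 ∨ S0 ω = 1)
    (hS1b : ∀ ω, S1 ω = 0 ∨ S1 ω = 1)
    (hD : ∀ ω, D ω = Z ω * D1 ω + (1 - Z ω) * D0 ω)
    (hS : ∀ ω, S ω = D ω * S1 ω + (1 - D ω) * S0 ω)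
    (hY : ∀ ω, Y ω = D ω * Y1 ω + (1 - D ω) * Y0 ω)
    (hindep : IndepFun Z (fun ω => (D0 ω, D1 ω, S0 ω, S1 ω, Y0 ω, Y1 ω)) P)
    (hZpos : 0 < (P {ω | Z ω = 1}).toReal)
    (hZlt1 : (P {ω | Z ω = 1}).toReal < 1)
    (hmono : ∀ᵐ ω ∂P, D0 ω ≤ D1 ω) :
    (P {ω | D1 ω = 1 ∧ D0 ω = 1}).toReal = cexp P {ω | Z ω = 0} D ∧
    (P {ω | D1 ω = 1 ∧ D0 ω = 0}).toReal
      = cexp P {ω | Z ω = 1} D - cexp P {ω | Z ω = 0} D ∧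
    (P {ω | D1 ω = 0 ∧ D0 ω = 0}).toReal = 1 - cexp P {ω | Z ω = 1} D := by
  set q : ℝ := (P {ω | Z ω = 1}).toReal with hq
  set p1 : ℝ := (P {ω | D1 ω = 1}).toReal with hp1
  set p0 : ℝ := (P {ω | D0 ω = 1}).toReal with hp0
  -- independence of Z with D0 and with D1
  have hindZ0 : IndepFun Z D0 P := by
    have := hindep.comp (φ := id) (ψ := fun p => p.1) measurable_id measurable_fst
    exact this
  have hindZ1 : IndepFun Z D1 P := by
    have := hindep.comp (φ := id) (ψ := fun p => p.2.1) measurable_id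
      (measurable_fst.comp measurable_snd)
    exact this
  have hZint : Integrable Z P := bin_integrable P hZm hZb
  have hD0int : Integrable D0 P := bin_integrable P hD0m hD0b
  have hD1int : Integrable D1 P := bin_integrable P hD1m hD1b
  have hZ1meas : MeasurableSet {ω | Z ω = 1} := hZm (measurableSet_singleton 1)
  have hZ0meas : MeasurableSet {ω | Z ω = 0} := hZm (measurableSet_singleton 0)
  have hZint' : ∫ ω, Z ω ∂P = q := bin_integral P hZm hZb
  have hD1int' : ∫ ω, D1 ω ∂P = p1 := bin_integral P hD1m hD1b
  have hD0int' : ∫ ω, D0 ω ∂P = p0 := bin_integral P hD0m hD0b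
  -- P{Z=0}.toReal = 1 - q
  have hZ0val : (P {ω | Z ω = 0}).toReal = 1 - q := by
    have hb : ∀ ω, (1 - Z ω) = 0 ∨ (1 - Z ω) = 1 := by
      intro ω; rcases hZb ω with h | h <;> simp [h]
    have hm : Measurable (fun ω => 1 - Z ω) := measurable_const.sub hZm
    have h1 := bin_integral P hm hb
    have hset : {ω | 1 - Z ω = 1} = {ω | Z ω = 0} := by
      ext ω
      simp only [Set.mem_setOf_eq]
      constructor <;> intro h <;> linarith
    rw [hset] at h1
    rw [← h1, integral_sub (integrable_const 1) hZint, hZint']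
    simp
  -- E[D | Z=1] = p1
  have hE1 : cexp P {ω | Z ω = 1} D = p1 := by
    have hstep : ∫ ω in {ω | Z ω = 1}, D ω ∂P = ∫ ω, Z ω * D1 ω ∂P := by
      rw [← integral_indicator hZ1meas]
      congr 1; funext ω
      by_cases h : ω ∈ {ω | Z ω = 1}
      · rw [Set.indicator_of_mem h, hD ω]
        have h1 : Z ω = 1 := h
        rw [h1]; ring
      · rw [Set.indicator_of_notMem h]
        rcases hZb ω with h0 | h1
        · rw [h0]; ring
        · exact absurd h1 h
    have hmul : ∫ ω, Z ω * D1 ω ∂P = (∫ ω, Z ω ∂P) * ∫ ω, D1 ω ∂P :=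
      hindZ1.integral_fun_mul_eq_mul_integral hZint.1 hD1int.1
    rw [cexp, hstep, hmul, hZint', hD1int', ← hq]
    field_simp
  -- E[D | Z=0] = p0
  have hE0 : cexp P {ω | Z ω = 0} D = p0 := by
    have hstep : ∫ ω in {ω | Z ω = 0}, D ω ∂P = ∫ ω, (1 - Z ω) * D0 ω ∂P := by
      rw [← integral_indicator hZ0meas]
      congr 1; funext ω
      by_cases h : ω ∈ {ω | Z ω = 0}
      · rw [Set.indicator_of_mem h, hD ω]
        have h0 : Z ω = 0 := h
        rw [h0]; ring
      · rw [Set.indicator_of_notMem h]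
        rcases hZb ω with h0 | h1
        · exact absurd h0 h
        · rw [h1]; ring
    have hindZ0' : IndepFun (fun ω => 1 - Z ω) D0 P := by
      have := hindZ0.comp (φ := fun x => 1 - x) (ψ := id)
        (measurable_const.sub measurable_id) measurable_id
      exact this
    have hmul : ∫ ω, (1 - Z ω) * D0 ω ∂P
        = (∫ ω, (1 - Z ω) ∂P) * ∫ ω, D0 ω ∂P :=
      hindZ0'.integral_fun_mul_eq_mul_integral ((integrable_const 1).sub hZint).1 hD0int.1
    have h1Z : ∫ ω, (1 - Z ω) ∂P = 1 - q := by
      rw [integral_sub (integrable_const 1) hZint, hZint']; simp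
    have hq1 : (1 : ℝ) - q ≠ 0 := by linarith
    rw [cexp, hstep, hmul, h1Z, hD0int', hZ0val]
    field_simp
  -- monotonicity: a.e. set equalities
  have haeq : P {ω | D1 ω = 1 ∧ D0 ω = 1} = P {ω | D0 ω = 1} := by
    apply measure_congr
    filter_upwards [hmono] with ω h
    simp only [Set.mem_setOf_eq, eq_iff_iff]
    constructor
    · exact And.right
    · intro h01
      refine ⟨?_, h01⟩
      rcases hD1b ω with h0 | h1
      · rw [h01, h0] at h; linarith
      · exact h1
  have hneq : P {ω | D1 ω = 0 ∧ D0 ω = 0} = P {ω | D1 ω = 0} := by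
    apply measure_congr
    filter_upwards [hmono] with ω h
    simp only [Set.mem_setOf_eq, eq_iff_iff]
    constructor
    · exact And.left
    · intro h10
      refine ⟨h10, ?_⟩
      rcases hD0b ω with h0 | h1
      · exact h0
      · rw [h10, h1] at h; linarith
  -- P{D1=0}.toReal = 1 - p1
  have hD10 : (P {ω | D1 ω = 0}).toReal = 1 - p1 := by
    have hb : ∀ ω, (1 - D1 ω) = 0 ∨ (1 - D1 ω) = 1 := by
      intro ω; rcases hD1b ω with h | h <;> simp [h]
    have hm : Measurable (fun ω => 1 - D1 ω) := measurable_const.sub hD1m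
    have h1 := bin_integral P hm hb
    have hset : {ω | 1 - D1 ω = 1} = {ω | D1 ω = 0} := by
      ext ω
      simp only [Set.mem_setOf_eq]
      constructor
      · intro h; linarith
      · intro h; rw [h]; ring
    rw [hset] at h1
    rw [← h1, integral_sub (integrable_const 1) hD1int, hD1int']
    simp
  -- splitting P{D1=1}
  have hsplit : p1 = (P {ω | D1 ω = 1 ∧ D0 ω = 0}).toReal
      + (P {ω | D1 ω = 1 ∧ D0 ω = 1}).toReal := by
    have hu : {ω | D1 ω = 1} = {ω | D1 ω = 1 ∧ D0 ω = 0} ∪ {ω | D1 ω = 1 ∧ D0 ω = 1} := by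
      ext ω
      simp only [Set.mem_setOf_eq, Set.mem_union]
      constructor
      · intro h; rcases hD0b ω with h0 | h1
        · exact Or.inl ⟨h, h0⟩
        · exact Or.inr ⟨h, h1⟩
      · rintro (⟨h, _⟩ | ⟨h, _⟩) <;> exact h
    have hdisj : Disjoint {ω | D1 ω = 1 ∧ D0 ω = 0} {ω | D1 ω = 1 ∧ D0 ω = 1} := by
      rw [Set.disjoint_left]
      rintro ω ⟨_, h0⟩ ⟨_, h1⟩
      rw [h0] at h1; norm_num at h1
    have hm2 : MeasurableSet {ω | D1 ω = 1 ∧ D0 ω = 1} := by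
      have : {ω | D1 ω = 1 ∧ D0 ω = 1}
          = {ω | D1 ω = 1} ∩ {ω | D0 ω = 1} := by ext ω; simp [Set.mem_setOf_eq]
      rw [this]
      exact (hD1m (measurableSet_singleton 1)).inter (hD0m (measurableSet_singleton 1))
    rw [hp1, hu, measure_union hdisj hm2,
      ENNReal.toReal_add (measure_ne_top P _) (measure_ne_top P _)]
  refine ⟨?_, ?_, ?_⟩
  · rw [hE0, hp0, ← haeq]
  · rw [hE1, hE0]
    have := hsplit
    have ha : (P {ω | D1 ω = 1 ∧ D0 ω = 1}).toReal = p0 := by rw [haeq, ← hp0]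
    rw [ha] at this
    linarith
  · rw [hE1, hneq, hD10]
end

section
/- Under randomization and monotonicity: if P(Z=0, D=1) > 0, then P(a) > 0 and E[S | Z=0, D=1] = P(S₁=1 | a); and if P(Z=1, D=0) > 0, then P(n) > 0 and E[S | Z=1, D=0] = P(S₀=1 | n). That is, individuals observed with Z=0, D=1 are exactly always-takers and individuals observed with Z=1, D=0 are exactly never-takers. -/
open MeasureTheory ProbabilityTheory
open scoped ENNReal Classical

variable {Ω : Type*} [MeasurableSpace Ω]

lemma abstract_key (P : Measure Ω) [IsProbabilityMeasure P] (E a s : Set Ω) (S : Ω → ℝ)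
    (hEm : MeasurableSet E) (hsm : MeasurableSet s)
    (hSon : ∀ ω ∈ E, S ω = if ω ∈ s then (1:ℝ) else 0)
    (q : ℝ≥0∞) (hq : q ≠ ⊤)
    (hE : P E = q * P a)
    (hsE : P (s ∩ E) = q * P (s ∩ a))
    (hpos : 0 < (P E).toReal) :
    0 < (P a).toReal ∧ cexp P E S = cprob P a s := by
  have hEne : P E ≠ 0 := by
    intro h; rw [h] at hpos; simp at hpos
  have hqne : q ≠ 0 := by
    intro h; rw [h, zero_mul] at hE; exact hEne hE
  have hane : P a ≠ 0 := by
    intro h; rw [h, mul_zero] at hE; exact hEne hE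
  have hafin : P a ≠ ⊤ := measure_ne_top P a
  have hapos : 0 < (P a).toReal := ENNReal.toReal_pos hane hafin
  refine ⟨hapos, ?_⟩
  have hint : (∫ ω in E, S ω ∂P) = (P (s ∩ E)).toReal := by
    rw [setIntegral_congr_fun hEm (g := s.indicator (fun _ => (1:ℝ)))
      (fun ω hω => by rw [hSon ω hω, Set.indicator_apply])]
    rw [setIntegral_indicator hsm, setIntegral_const, smul_eq_mul, mul_one, Set.inter_comm]
    rfl
  have hqtop : q.toReal ≠ 0 := ENNReal.toReal_ne_zero.2 ⟨hqne, hq⟩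
  rw [cexp, cprob, hint, hsE, hE, ENNReal.toReal_mul, ENNReal.toReal_mul,
    mul_div_mul_left _ _ hqtop]

/-- Under randomization and monotonicity, individuals observed with `Z=0, D=1` are exactly always-takers and those with `Z=1, D=0` are exactly never-takers: if `P(Z=0, D=1) > 0` then `P(a) > 0` and `E[S | Z=0, D=1] = P(S₁=1 | a)`; if `P(Z=1, D=0) > 0` then `P(n) > 0` and `E[S | Z=1, D=0] = P(S₀=1 | n)`. -/
theorem stmt_1
    (P : Measure Ω) [IsProbabilityMeasure P]
    (Z D0 D1 S0 S1 Y0 Y1 D S Y : Ω → ℝ)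
    (hZm : Measurable Z) (hD0m : Measurable D0) (hD1m : Measurable D1)
    (hS0m : Measurable S0) (hS1m : Measurable S1)
    (hY0i : Integrable Y0 P) (hY1i : Integrable Y1 P)
    (hZb : ∀ ω, Z ω = 0 ∨ Z ω = 1)
    (hD0b : ∀ ω, D0 ω = 0 ∨ D0 ω = 1)
    (hD1b : ∀ ω, D1 ω = 0 ∨ D1 ω = 1)
    (hS0b : ∀ ω, S0 ω = 0 ∨ S0 ω = 1)
    (hS1b : ∀ ω, S1 ω = 0 ∨ S1 ω = 1)
    (hD : ∀ ω, D ω = Z ω * D1 ω + (1 - Z ω) * D0 ω)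
    (hS : ∀ ω, S ω = D ω * S1 ω + (1 - D ω) * S0 ω)
    (hY : ∀ ω, Y ω = D ω * Y1 ω + (1 - D ω) * Y0 ω)
    (hindep : IndepFun Z (fun ω => (D0 ω, D1 ω, S0 ω, S1 ω, Y0 ω, Y1 ω)) P)
    (hZpos : 0 < (P {ω | Z ω = 1}).toReal)
    (hZlt1 : (P {ω | Z ω = 1}).toReal < 1)
    (hmono : ∀ᵐ ω ∂P, D0 ω ≤ D1 ω)
    :
    (0 < (P {ω | Z ω = 0 ∧ D ω = 1}).toReal →
      0 < (P {ω | D1 ω = 1 ∧ D0 ω = 1}).toReal ∧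
      cexp P {ω | Z ω = 0 ∧ D ω = 1} S
        = cprob P {ω | D1 ω = 1 ∧ D0 ω = 1} {ω | S1 ω = 1}) ∧
    (0 < (P {ω | Z ω = 1 ∧ D ω = 0}).toReal →
      0 < (P {ω | D1 ω = 0 ∧ D0 ω = 0}).toReal ∧
      cexp P {ω | Z ω = 1 ∧ D ω = 0} S
        = cprob P {ω | D1 ω = 0 ∧ D0 ω = 0} {ω | S0 ω = 1}) := by
  set W : Ω → ℝ × ℝ × ℝ × ℝ × ℝ × ℝ := fun ω => (D0 ω, D1 ω, S0 ω, S1 ω, Y0 ω, Y1 ω) with hW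
  constructor
  · -- always-takers
    intro hpos
    set E : Set Ω := {ω | Z ω = 0 ∧ D ω = 1} with hEdef
    have hEeq : E = Z ⁻¹' {0} ∩ D0 ⁻¹' {1} := by
      ext ω
      simp only [hEdef, Set.mem_setOf_eq, Set.mem_inter_iff, Set.mem_preimage,
        Set.mem_singleton_iff]
      constructor
      · rintro ⟨hz, hd⟩
        refine ⟨hz, ?_⟩
        rw [hD ω, hz] at hd; linarith
      · rintro ⟨hz, hd⟩
        refine ⟨hz, ?_⟩
        rw [hD ω, hz, hd]; ring
    have hEm : MeasurableSet E := hEeq ▸ ((hZm (measurableSet_singleton 0)).inter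
      (hD0m (measurableSet_singleton 1)))
    have hsm : MeasurableSet {ω | S1 ω = 1} := hS1m (measurableSet_singleton 1)
    have ht1 : MeasurableSet {p : ℝ × ℝ × ℝ × ℝ × ℝ × ℝ | p.1 = 1} :=
      measurable_fst (measurableSet_singleton 1)
    have ht2 : MeasurableSet {p : ℝ × ℝ × ℝ × ℝ × ℝ × ℝ | p.1 = 1 ∧ p.2.2.2.1 = 1} := by
      exact (measurable_fst (measurableSet_singleton 1)).inter
        ((measurable_fst.comp (measurable_snd.comp (measurable_snd.comp measurable_snd)))
          (measurableSet_singleton 1))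
    have hae1 : P (W ⁻¹' {p | p.1 = 1}) = P {ω | D1 ω = 1 ∧ D0 ω = 1} := by
      apply measure_congr
      filter_upwards [hmono] with ω hm
      show (D0 ω = 1) = (D1 ω = 1 ∧ D0 ω = 1)
      rw [eq_iff_iff]
      constructor
      · intro h0
        refine ⟨?_, h0⟩
        rcases hD1b ω with h | h
        · rw [h0, h] at hm; linarith
        · exact h
      · exact fun h => h.2
    have hae2 : P (W ⁻¹' {p | p.1 = 1 ∧ p.2.2.2.1 = 1})
        = P ({ω | S1 ω = 1} ∩ {ω | D1 ω = 1 ∧ D0 ω = 1}) := by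
      apply measure_congr
      filter_upwards [hmono] with ω hm
      show (D0 ω = 1 ∧ S1 ω = 1) = (S1 ω = 1 ∧ D1 ω = 1 ∧ D0 ω = 1)
      rw [eq_iff_iff]
      constructor
      · rintro ⟨h0, h1⟩
        refine ⟨h1, ?_, h0⟩
        rcases hD1b ω with h | h
        · rw [h0, h] at hm; linarith
        · exact h
      · rintro ⟨h1, h2, h3⟩; exact ⟨h3, h1⟩
    have hind1 := hindep.measure_inter_preimage_eq_mul {(0:ℝ)} {p | p.1 = 1}
      (measurableSet_singleton (0:ℝ)) ht1
    have hind2 := hindep.measure_inter_preimage_eq_mul {(0:ℝ)} {p | p.1 = 1 ∧ p.2.2.2.1 = 1}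
      (measurableSet_singleton (0:ℝ)) ht2
    have hE : P E = P (Z ⁻¹' {0}) * P {ω | D1 ω = 1 ∧ D0 ω = 1} := by
      have hD0W : D0 ⁻¹' {1} = W ⁻¹' {p | p.1 = 1} := by
        ext ω; simp [hW]
      rw [hEeq, hD0W, hind1, hae1]
    have hsE : P ({ω | S1 ω = 1} ∩ E)
        = P (Z ⁻¹' {0}) * P ({ω | S1 ω = 1} ∩ {ω | D1 ω = 1 ∧ D0 ω = 1}) := by
      have : {ω | S1 ω = 1} ∩ E
          = Z ⁻¹' {0} ∩ W ⁻¹' {p | p.1 = 1 ∧ p.2.2.2.1 = 1} := by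
        rw [hEeq]; ext ω
        simp only [Set.mem_inter_iff, Set.mem_preimage, Set.mem_setOf_eq,
          Set.mem_singleton_iff, hW]
        tauto
      rw [this, hind2, hae2]
    have hSon : ∀ ω ∈ E, S ω = if ω ∈ {ω | S1 ω = 1} then (1:ℝ) else 0 := by
      intro ω hω
      rw [hEdef] at hω
      have hS1 : S ω = S1 ω := by rw [hS ω, hω.2]; ring
      rcases hS1b ω with h | h <;> simp [hS1, h, Set.mem_setOf_eq]
    exact abstract_key P E {ω | D1 ω = 1 ∧ D0 ω = 1} {ω | S1 ω = 1} S hEm hsm hSon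
      (P (Z ⁻¹' {0})) (measure_ne_top P _) hE hsE hpos
  · -- never-takers
    intro hpos
    set E : Set Ω := {ω | Z ω = 1 ∧ D ω = 0} with hEdef
    have hEeq : E = Z ⁻¹' {1} ∩ D1 ⁻¹' {0} := by
      ext ω
      simp only [hEdef, Set.mem_setOf_eq, Set.mem_inter_iff, Set.mem_preimage,
        Set.mem_singleton_iff]
      constructor
      · rintro ⟨hz, hd⟩
        refine ⟨hz, ?_⟩
        rw [hD ω, hz] at hd; linarith
      · rintro ⟨hz, hd⟩
        refine ⟨hz, ?_⟩
        rw [hD ω, hz, hd]; ring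
    have hEm : MeasurableSet E := hEeq ▸ ((hZm (measurableSet_singleton 1)).inter
      (hD1m (measurableSet_singleton 0)))
    have hsm : MeasurableSet {ω | S0 ω = 1} := hS0m (measurableSet_singleton 1)
    have ht1 : MeasurableSet {p : ℝ × ℝ × ℝ × ℝ × ℝ × ℝ | p.2.1 = 0} :=
      (measurable_fst.comp measurable_snd) (measurableSet_singleton 0)
    have ht2 : MeasurableSet {p : ℝ × ℝ × ℝ × ℝ × ℝ × ℝ | p.2.1 = 0 ∧ p.2.2.1 = 1} := by
      exact ((measurable_fst.comp measurable_snd) (measurableSet_singleton 0)).inter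
        ((measurable_fst.comp (measurable_snd.comp measurable_snd))
          (measurableSet_singleton 1))
    have hae1 : P (W ⁻¹' {p | p.2.1 = 0}) = P {ω | D1 ω = 0 ∧ D0 ω = 0} := by
      apply measure_congr
      filter_upwards [hmono] with ω hm
      show (D1 ω = 0) = (D1 ω = 0 ∧ D0 ω = 0)
      rw [eq_iff_iff]
      constructor
      · intro h0
        refine ⟨h0, ?_⟩
        rcases hD0b ω with h | h
        · exact h
        · rw [h0, h] at hm; linarith
      · exact fun h => h.1
    have hae2 : P (W ⁻¹' {p | p.2.1 = 0 ∧ p.2.2.1 = 1})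
        = P ({ω | S0 ω = 1} ∩ {ω | D1 ω = 0 ∧ D0 ω = 0}) := by
      apply measure_congr
      filter_upwards [hmono] with ω hm
      show (D1 ω = 0 ∧ S0 ω = 1) = (S0 ω = 1 ∧ D1 ω = 0 ∧ D0 ω = 0)
      rw [eq_iff_iff]
      constructor
      · rintro ⟨h0, h1⟩
        refine ⟨h1, h0, ?_⟩
        rcases hD0b ω with h | h
        · exact h
        · rw [h0, h] at hm; linarith
      · rintro ⟨h1, h2, h3⟩; exact ⟨h2, h1⟩
    have hind1 := hindep.measure_inter_preimage_eq_mul {(1:ℝ)} {p | p.2.1 = 0}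
      (measurableSet_singleton (1:ℝ)) ht1
    have hind2 := hindep.measure_inter_preimage_eq_mul {(1:ℝ)} {p | p.2.1 = 0 ∧ p.2.2.1 = 1}
      (measurableSet_singleton (1:ℝ)) ht2
    have hE : P E = P (Z ⁻¹' {1}) * P {ω | D1 ω = 0 ∧ D0 ω = 0} := by
      have hD1W : D1 ⁻¹' {0} = W ⁻¹' {p | p.2.1 = 0} := by
        ext ω; simp [hW]
      rw [hEeq, hD1W, hind1, hae1]
    have hsE : P ({ω | S0 ω = 1} ∩ E)
        = P (Z ⁻¹' {1}) * P ({ω | S0 ω = 1} ∩ {ω | D1 ω = 0 ∧ D0 ω = 0}) := by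
      have : {ω | S0 ω = 1} ∩ E
          = Z ⁻¹' {1} ∩ W ⁻¹' {p | p.2.1 = 0 ∧ p.2.2.1 = 1} := by
        rw [hEeq]; ext ω
        simp only [Set.mem_inter_iff, Set.mem_preimage, Set.mem_setOf_eq,
          Set.mem_singleton_iff, hW]
        tauto
      rw [this, hind2, hae2]
    have hSon : ∀ ω ∈ E, S ω = if ω ∈ {ω | S0 ω = 1} then (1:ℝ) else 0 := by
      intro ω hω
      rw [hEdef] at hω
      have hS0 : S ω = S0 ω := by rw [hS ω, hω.2]; ring
      rcases hS0b ω with h | h <;> simp [hS0, h, Set.mem_setOf_eq]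
    exact abstract_key P E {ω | D1 ω = 0 ∧ D0 ω = 0} {ω | S0 ω = 1} S hEm hsm hSon
      (P (Z ⁻¹' {1})) (measure_ne_top P _) hE hsE hpos
end

section
/- Under randomization and monotonicity, the second-stage mixture equations hold: if P(Z=1, D=1) > 0, P(a) > 0 and P(c) > 0, then E[S | Z=1, D=1] = (P(a)/(P(a)+P(c)))·P(S₁=1 | a) + (P(c)/(P(a)+P(c)))·P(S₁=1 | c); and if P(Z=0, D=0) > 0, P(n) > 0 and P(c) > 0, then E[S | Z=0, D=0] = (P(c)/(P(c)+P(n)))·P(S₀=1 | c) + (P(n)/(P(c)+P(n)))·P(S₀=1 | n). -/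
open MeasureTheory ProbabilityTheory

variable {Ω : Type*} [MeasurableSpace Ω]

lemma main_helper (P : Measure Ω) [IsProbabilityMeasure P]
    (A Z1 B1 B2 C : Set Ω)
    (hZ1 : MeasurableSet Z1) (hB1 : MeasurableSet B1) (hB2 : MeasurableSet B2)
    (hC : MeasurableSet C)
    (hAeq : A = Z1 ∩ (B1 ∪ B2))
    (hdisj : Disjoint B1 B2)
    (hindep1 : P (Z1 ∩ (B1 ∪ B2)) = P Z1 * P (B1 ∪ B2))
    (hindep2 : P (Z1 ∩ ((B1 ∪ B2) ∩ C)) = P Z1 * P ((B1 ∪ B2) ∩ C))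
    (S : Ω → ℝ)
    (hSA : ∀ ω ∈ A, S ω = C.indicator (fun _ => (1:ℝ)) ω)
    (hPA : 0 < (P A).toReal)
    (hPB1 : 0 < (P B1).toReal) (hPB2 : 0 < (P B2).toReal) :
    cexp P A S = (P B1).toReal / ((P B1).toReal + (P B2).toReal) * cprob P B1 C
      + (P B2).toReal / ((P B1).toReal + (P B2).toReal) * cprob P B2 C := by
  have hBu : MeasurableSet (B1 ∪ B2) := hB1.union hB2
  have hAm : MeasurableSet A := hAeq ▸ hZ1.inter hBu
  have hne : ∀ s : Set Ω, P s ≠ ⊤ := fun s => measure_ne_top P s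
  unfold cexp cprob
  set z := (P Z1).toReal with hzdef
  set b1 := (P B1).toReal with hb1
  set b2 := (P B2).toReal with hb2
  set c1 := (P (C ∩ B1)).toReal with hc1
  set c2 := (P (C ∩ B2)).toReal with hc2
  have hb : (P (B1 ∪ B2)).toReal = b1 + b2 := by
    rw [measure_union hdisj hB2, ENNReal.toReal_add (hne _) (hne _)]
  have hcu : (P ((B1 ∪ B2) ∩ C)).toReal = c1 + c2 := by
    rw [Set.union_inter_distrib_right,
      measure_union (hdisj.mono Set.inter_subset_left Set.inter_subset_left) (hB2.inter hC),
      ENNReal.toReal_add (hne _) (hne _), Set.inter_comm B1 C, Set.inter_comm B2 C]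
  have hPAval : (P A).toReal = z * (b1 + b2) := by
    rw [hAeq, hindep1, ENNReal.toReal_mul, hb]
  have hnum : ∫ ω in A, S ω ∂P = z * (c1 + c2) := by
    rw [setIntegral_congr_fun hAm hSA, setIntegral_indicator hC, setIntegral_const,
      smul_eq_mul, mul_one]
    have h : A ∩ C = Z1 ∩ ((B1 ∪ B2) ∩ C) := by rw [hAeq, Set.inter_assoc]
    rw [h, measureReal_def, hindep2, ENNReal.toReal_mul, hcu]
  rw [hPAval] at hPA
  rw [hnum, hPAval]
  have hz : 0 < z := by by_contra h; push_neg at h; nlinarith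
  field_simp

/-- Under randomization and monotonicity, the second-stage mixture equations hold: `E[S | Z=1, D=1]` is the `P(a)/(P(a)+P(c))`, `P(c)/(P(a)+P(c))` mixture of `P(S₁=1 | a)` and `P(S₁=1 | c)`, and `E[S | Z=0, D=0]` is the corresponding mixture over `c` and `n`. -/
theorem stmt_2
    (P : Measure Ω) [IsProbabilityMeasure P]
    (Z D0 D1 S0 S1 Y0 Y1 D S Y : Ω → ℝ)
    (hZm : Measurable Z) (hD0m : Measurable D0) (hD1m : Measurable D1)
    (hS0m : Measurable S0) (hS1m : Measurable S1)
    (hY0i : Integrable Y0 P) (hY1i : Integrable Y1 P)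
    (hZb : ∀ ω, Z ω = 0 ∨ Z ω = 1)
    (hD0b : ∀ ω, D0 ω = 0 ∨ D0 ω = 1)
    (hD1b : ∀ ω, D1 ω = 0 ∨ D1 ω = 1)
    (hS0b : ∀ ω, S0 ω = 0 ∨ S0 ω = 1)
    (hS1b : ∀ ω, S1 ω = 0 ∨ S1 ω = 1)
    (hD : ∀ ω, D ω = Z ω * D1 ω + (1 - Z ω) * D0 ω)
    (hS : ∀ ω, S ω = D ω * S1 ω + (1 - D ω) * S0 ω)
    (hY : ∀ ω, Y ω = D ω * Y1 ω + (1 - D ω) * Y0 ω)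
    (hindep : IndepFun Z (fun ω => (D0 ω, D1 ω, S0 ω, S1 ω, Y0 ω, Y1 ω)) P)
    (hZpos : 0 < (P {ω | Z ω = 1}).toReal)
    (hZlt1 : (P {ω | Z ω = 1}).toReal < 1)
    (hmono : ∀ᵐ ω ∂P, D0 ω ≤ D1 ω)
    :
    (0 < (P {ω | Z ω = 1 ∧ D ω = 1}).toReal →
      0 < (P {ω | D1 ω = 1 ∧ D0 ω = 1}).toReal →
      0 < (P {ω | D1 ω = 1 ∧ D0 ω = 0}).toReal →
      cexp P {ω | Z ω = 1 ∧ D ω = 1} S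
        = (P {ω | D1 ω = 1 ∧ D0 ω = 1}).toReal
            / ((P {ω | D1 ω = 1 ∧ D0 ω = 1}).toReal
                + (P {ω | D1 ω = 1 ∧ D0 ω = 0}).toReal)
            * cprob P {ω | D1 ω = 1 ∧ D0 ω = 1} {ω | S1 ω = 1}
          + (P {ω | D1 ω = 1 ∧ D0 ω = 0}).toReal
            / ((P {ω | D1 ω = 1 ∧ D0 ω = 1}).toReal
                + (P {ω | D1 ω = 1 ∧ D0 ω = 0}).toReal)
            * cprob P {ω | D1 ω = 1 ∧ D0 ω = 0} {ω | S1 ω = 1}) ∧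
    (0 < (P {ω | Z ω = 0 ∧ D ω = 0}).toReal →
      0 < (P {ω | D1 ω = 0 ∧ D0 ω = 0}).toReal →
      0 < (P {ω | D1 ω = 1 ∧ D0 ω = 0}).toReal →
      cexp P {ω | Z ω = 0 ∧ D ω = 0} S
        = (P {ω | D1 ω = 1 ∧ D0 ω = 0}).toReal
            / ((P {ω | D1 ω = 1 ∧ D0 ω = 0}).toReal
                + (P {ω | D1 ω = 0 ∧ D0 ω = 0}).toReal)
            * cprob P {ω | D1 ω = 1 ∧ D0 ω = 0} {ω | S0 ω = 1}
          + (P {ω | D1 ω = 0 ∧ D0 ω = 0}).toReal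
            / ((P {ω | D1 ω = 1 ∧ D0 ω = 0}).toReal
                + (P {ω | D1 ω = 0 ∧ D0 ω = 0}).toReal)
            * cprob P {ω | D1 ω = 0 ∧ D0 ω = 0} {ω | S0 ω = 1}) := by
  set W : Ω → ℝ × ℝ × ℝ × ℝ × ℝ × ℝ := fun ω => (D0 ω, D1 ω, S0 ω, S1 ω, Y0 ω, Y1 ω) with hW
  have hind : ∀ (s : Set ℝ) (B : Set (ℝ × ℝ × ℝ × ℝ × ℝ × ℝ)), MeasurableSet s →
      MeasurableSet B → P (Z ⁻¹' s ∩ W ⁻¹' B) = P (Z ⁻¹' s) * P (W ⁻¹' B) :=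
    fun s B hs hB => hindep.measure_inter_preimage_eq_mul s B hs hB
  have m1 : MeasurableSet {p : ℝ × ℝ × ℝ × ℝ × ℝ × ℝ | p.2.1 = 1 ∧ p.1 = 1} := by
    exact ((measurable_fst.comp measurable_snd) (measurableSet_singleton 1)).inter
      (measurable_fst (measurableSet_singleton 1))
  have m2 : MeasurableSet {p : ℝ × ℝ × ℝ × ℝ × ℝ × ℝ | p.2.1 = 1 ∧ p.1 = 0} := by
    exact ((measurable_fst.comp measurable_snd) (measurableSet_singleton 1)).inter
      (measurable_fst (measurableSet_singleton 0))
  have m3 : MeasurableSet {p : ℝ × ℝ × ℝ × ℝ × ℝ × ℝ | p.2.1 = 0 ∧ p.1 = 0} := by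
    exact ((measurable_fst.comp measurable_snd) (measurableSet_singleton 0)).inter
      (measurable_fst (measurableSet_singleton 0))
  have mS1 : MeasurableSet {p : ℝ × ℝ × ℝ × ℝ × ℝ × ℝ | p.2.2.2.1 = 1} :=
    (measurable_fst.comp (measurable_snd.comp (measurable_snd.comp measurable_snd)))
      (measurableSet_singleton 1)
  have mS0 : MeasurableSet {p : ℝ × ℝ × ℝ × ℝ × ℝ × ℝ | p.2.2.1 = 1} :=
    (measurable_fst.comp (measurable_snd.comp measurable_snd)) (measurableSet_singleton 1)
  have ha : MeasurableSet {ω | D1 ω = 1 ∧ D0 ω = 1} :=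
    (hD1m (measurableSet_singleton 1)).inter (hD0m (measurableSet_singleton 1))
  have hc : MeasurableSet {ω | D1 ω = 1 ∧ D0 ω = 0} :=
    (hD1m (measurableSet_singleton 1)).inter (hD0m (measurableSet_singleton 0))
  have hn : MeasurableSet {ω | D1 ω = 0 ∧ D0 ω = 0} :=
    (hD1m (measurableSet_singleton 0)).inter (hD0m (measurableSet_singleton 0))
  have hs1 : MeasurableSet {ω | S1 ω = 1} := hS1m (measurableSet_singleton 1)
  have hs0 : MeasurableSet {ω | S0 ω = 1} := hS0m (measurableSet_singleton 1)
  constructor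
  · intro hPA hPa hPc
    -- B1 = always-takers, B2 = compliers, C = {S1 = 1}
    refine main_helper P _ (Z ⁻¹' {1})
      {ω | D1 ω = 1 ∧ D0 ω = 1} {ω | D1 ω = 1 ∧ D0 ω = 0} {ω | S1 ω = 1}
      (hZm (measurableSet_singleton 1)) ha hc hs1 ?_ ?_ ?_ ?_ S ?_ hPA hPa hPc
    · ext ω
      simp only [Set.mem_setOf_eq, Set.mem_inter_iff, Set.mem_union, Set.mem_preimage,
        Set.mem_singleton_iff]
      constructor
      · rintro ⟨hz, hd⟩
        rw [hD ω, hz] at hd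
        have hd1 : D1 ω = 1 := by linarith
        rcases hD0b ω with h | h
        · exact ⟨hz, Or.inr ⟨hd1, h⟩⟩
        · exact ⟨hz, Or.inl ⟨hd1, h⟩⟩
      · rintro ⟨hz, h | h⟩ <;>
        · refine ⟨hz, ?_⟩
          rw [hD ω, hz, h.1]
          ring
    · rw [Set.disjoint_left]
      rintro ω ⟨_, h0⟩ ⟨_, h1⟩
      rw [h0] at h1; norm_num at h1
    · exact hind {1} ({p | p.2.1 = 1 ∧ p.1 = 1} ∪ {p | p.2.1 = 1 ∧ p.1 = 0})
        (measurableSet_singleton 1) (m1.union m2)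
    · exact hind {1} (({p | p.2.1 = 1 ∧ p.1 = 1} ∪ {p | p.2.1 = 1 ∧ p.1 = 0}) ∩
        {p | p.2.2.2.1 = 1}) (measurableSet_singleton 1) ((m1.union m2).inter mS1)
    · rintro ω ⟨hz, hd⟩
      rw [hS ω, hd]
      rcases hS1b ω with h | h
      · rw [Set.indicator_of_notMem (by simp [Set.mem_setOf_eq, h])]
        rw [h]; ring
      · rw [Set.indicator_of_mem (by simpa [Set.mem_setOf_eq] using h)]
        rw [h]; ring
  · intro hPA hPn hPc
    refine main_helper P _ (Z ⁻¹' {0})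
      {ω | D1 ω = 1 ∧ D0 ω = 0} {ω | D1 ω = 0 ∧ D0 ω = 0} {ω | S0 ω = 1}
      (hZm (measurableSet_singleton 0)) hc hn hs0 ?_ ?_ ?_ ?_ S ?_ hPA hPc hPn
    · ext ω
      simp only [Set.mem_setOf_eq, Set.mem_inter_iff, Set.mem_union, Set.mem_preimage,
        Set.mem_singleton_iff]
      constructor
      · rintro ⟨hz, hd⟩
        rw [hD ω, hz] at hd
        have hd0 : D0 ω = 0 := by linarith
        rcases hD1b ω with h | h
        · exact ⟨hz, Or.inr ⟨h, hd0⟩⟩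
        · exact ⟨hz, Or.inl ⟨h, hd0⟩⟩
      · rintro ⟨hz, h | h⟩ <;>
        · refine ⟨hz, ?_⟩
          rw [hD ω, hz, h.2]
          ring
    · rw [Set.disjoint_left]
      rintro ω ⟨h1, _⟩ ⟨h0, _⟩
      rw [h1] at h0; norm_num at h0
    · exact hind {0} ({p | p.2.1 = 1 ∧ p.1 = 0} ∪ {p | p.2.1 = 0 ∧ p.1 = 0})
        (measurableSet_singleton 0) (m2.union m3)
    · exact hind {0} (({p | p.2.1 = 1 ∧ p.1 = 0} ∪ {p | p.2.1 = 0 ∧ p.1 = 0}) ∩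
        {p | p.2.2.1 = 1}) (measurableSet_singleton 0) ((m2.union m3).inter mS0)
    · rintro ω ⟨hz, hd⟩
      rw [hS ω, hd]
      rcases hS0b ω with h | h
      · rw [Set.indicator_of_notMem (by simp [Set.mem_setOf_eq, h])]
        rw [h]; ring
      · rw [Set.indicator_of_mem (by simpa [Set.mem_setOf_eq] using h)]
        rw [h]; ring
end

section
/- Under randomization, monotonicity and relevance, the survival probability of compliers under treatment is identified: P(c) = E[D | Z=1] − E[D | Z=0] > 0 and P(S₁=1 | c) = (E[D·S | Z=1] − E[D·S | Z=0]) / (E[D | Z=1] − E[D | Z=0]). -/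
open MeasureTheory ProbabilityTheory

variable {Ω : Type*} [MeasurableSpace Ω]

lemma aux_indicator_integral (P : Measure Ω) [IsFiniteMeasure P] {s A : Set Ω}
    (hs : MeasurableSet s) :
    ∫ ω in A, s.indicator (fun _ => (1:ℝ)) ω ∂P = (P (s ∩ A)).toReal := by
  rw [integral_indicator hs, setIntegral_const, smul_eq_mul, mul_one,
    measureReal_def, Measure.restrict_apply hs]

lemma aux_diff (P : Measure Ω) [IsFiniteMeasure P] {u v : Set Ω}
    (hu : MeasurableSet u) (hv : MeasurableSet v) (hnull : P (v \ u) = 0) :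
    (P (u \ v)).toReal = (P u).toReal - (P v).toReal := by
  have h1 : P (u ∩ v) + P (u \ v) = P u := measure_inter_add_diff u hv
  have h2 : P (v ∩ u) + P (v \ u) = P v := measure_inter_add_diff v hu
  rw [hnull, add_zero, Set.inter_comm] at h2
  rw [← h1, h2, ENNReal.toReal_add (measure_ne_top P _) (measure_ne_top P _)]
  ring

/-- Under randomization, monotonicity and relevance, `P(c) = E[D | Z=1] − E[D | Z=0] > 0` and the survival probability of compliers under treatment is identified: `P(S₁=1 | c) = (E[D·S | Z=1] − E[D·S | Z=0]) / (E[D | Z=1] − E[D | Z=0])`. -/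
theorem stmt_3
    (P : Measure Ω) [IsProbabilityMeasure P]
    (Z D0 D1 S0 S1 Y0 Y1 D S Y : Ω → ℝ)
    (hZm : Measurable Z) (hD0m : Measurable D0) (hD1m : Measurable D1)
    (hS0m : Measurable S0) (hS1m : Measurable S1)
    (hY0i : Integrable Y0 P) (hY1i : Integrable Y1 P)
    (hZb : ∀ ω, Z ω = 0 ∨ Z ω = 1)
    (hD0b : ∀ ω, D0 ω = 0 ∨ D0 ω = 1)
    (hD1b : ∀ ω, D1 ω = 0 ∨ D1 ω = 1)
    (hS0b : ∀ ω, S0 ω = 0 ∨ S0 ω = 1)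
    (hS1b : ∀ ω, S1 ω = 0 ∨ S1 ω = 1)
    (hD : ∀ ω, D ω = Z ω * D1 ω + (1 - Z ω) * D0 ω)
    (hS : ∀ ω, S ω = D ω * S1 ω + (1 - D ω) * S0 ω)
    (hY : ∀ ω, Y ω = D ω * Y1 ω + (1 - D ω) * Y0 ω)
    (hindep : IndepFun Z (fun ω => (D0 ω, D1 ω, S0 ω, S1 ω, Y0 ω, Y1 ω)) P)
    (hZpos : 0 < (P {ω | Z ω = 1}).toReal)
    (hZlt1 : (P {ω | Z ω = 1}).toReal < 1)
    (hmono : ∀ᵐ ω ∂P, D0 ω ≤ D1 ω)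
    (hrel : ∫ ω, D1 ω ∂P ≠ ∫ ω, D0 ω ∂P)
    :
    (P {ω | D1 ω = 1 ∧ D0 ω = 0}).toReal
      = cexp P {ω | Z ω = 1} D - cexp P {ω | Z ω = 0} D ∧
    0 < (P {ω | D1 ω = 1 ∧ D0 ω = 0}).toReal ∧
    cprob P {ω | D1 ω = 1 ∧ D0 ω = 0} {ω | S1 ω = 1}
      = (cexp P {ω | Z ω = 1} (fun ω => D ω * S ω)
          - cexp P {ω | Z ω = 0} (fun ω => D ω * S ω))
        / (cexp P {ω | Z ω = 1} D - cexp P {ω | Z ω = 0} D) := by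
  classical
  set W : Ω → ℝ × ℝ × ℝ × ℝ × ℝ × ℝ :=
    fun ω => (D0 ω, D1 ω, S0 ω, S1 ω, Y0 ω, Y1 ω) with hWdef
  set A1 : Set Ω := {ω | Z ω = 1} with hA1def
  set A0 : Set Ω := {ω | Z ω = 0} with hA0def
  set s1 : Set Ω := {ω | D1 ω = 1} with hs1def
  set s0 : Set Ω := {ω | D0 ω = 1} with hs0def
  set t : Set Ω := {ω | S1 ω = 1} with htdef
  have hA1m : MeasurableSet A1 := hZm (measurableSet_singleton 1)
  have hA0m : MeasurableSet A0 := hZm (measurableSet_singleton 0)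
  have hs1m : MeasurableSet s1 := hD1m (measurableSet_singleton 1)
  have hs0m : MeasurableSet s0 := hD0m (measurableSet_singleton 1)
  have htm : MeasurableSet t := hS1m (measurableSet_singleton 1)
  -- independence key
  have key : ∀ (B : Set (ℝ × ℝ × ℝ × ℝ × ℝ × ℝ)), MeasurableSet B → ∀ z : ℝ,
      P (W ⁻¹' B ∩ Z ⁻¹' {z}) = P (W ⁻¹' B) * P (Z ⁻¹' {z}) := by
    intro B hB z
    rw [Set.inter_comm, hindep.measure_inter_preimage_eq_mul {z} B
      (measurableSet_singleton z) hB, mul_comm]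
  have key1 : P (s1 ∩ A1) = P s1 * P A1 := by
    have : s1 = W ⁻¹' {p | p.2.1 = 1} := rfl
    have hB : MeasurableSet {p : ℝ × ℝ × ℝ × ℝ × ℝ × ℝ | p.2.1 = 1} :=
      (measurable_fst.comp measurable_snd) (measurableSet_singleton 1)
    exact key _ hB 1
  have key0 : P (s0 ∩ A0) = P s0 * P A0 := by
    have hB : MeasurableSet {p : ℝ × ℝ × ℝ × ℝ × ℝ × ℝ | p.1 = 1} :=
      measurable_fst (measurableSet_singleton 1)
    exact key _ hB 0
  have key1' : P ((s1 ∩ t) ∩ A1) = P (s1 ∩ t) * P A1 := by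
    have hB : MeasurableSet ({p : ℝ × ℝ × ℝ × ℝ × ℝ × ℝ | p.2.1 = 1}
        ∩ {p | p.2.2.2.1 = 1}) :=
      ((measurable_fst.comp measurable_snd) (measurableSet_singleton 1)).inter
        ((measurable_fst.comp (measurable_snd.comp (measurable_snd.comp
          measurable_snd))) (measurableSet_singleton 1))
    exact key _ hB 1
  have key0' : P ((s0 ∩ t) ∩ A0) = P (s0 ∩ t) * P A0 := by
    have hB : MeasurableSet ({p : ℝ × ℝ × ℝ × ℝ × ℝ × ℝ | p.1 = 1}
        ∩ {p | p.2.2.2.1 = 1}) :=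
      (measurable_fst (measurableSet_singleton 1)).inter
        ((measurable_fst.comp (measurable_snd.comp (measurable_snd.comp
          measurable_snd))) (measurableSet_singleton 1))
    exact key _ hB 0
  -- positivity of P(A0), P(A1)
  have pA1ne : (P A1).toReal ≠ 0 := ne_of_gt hZpos
  have hA0c : A0 = A1ᶜ := by
    ext ω; rcases hZb ω with h | h <;> simp [hA1def, hA0def, h] <;> norm_num
  have pA0 : (P A0).toReal = 1 - (P A1).toReal := by
    rw [hA0c, prob_compl_eq_one_sub hA1m,
      ENNReal.toReal_sub_of_le prob_le_one ENNReal.one_ne_top, ENNReal.toReal_one]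
  have pA0ne : (P A0).toReal ≠ 0 := by rw [pA0]; linarith
  -- set integrals
  have e1 : ∫ ω in A1, D ω ∂P = (P (s1 ∩ A1)).toReal := by
    rw [← aux_indicator_integral P hs1m]
    refine setIntegral_congr_fun hA1m fun ω hω => ?_
    have hz : Z ω = 1 := hω
    have hd : D ω = D1 ω := by rw [hD ω, hz]; ring
    rcases hD1b ω with h | h <;>
      simp [Set.indicator_apply, hs1def, hd, h] <;> norm_num
  have e0 : ∫ ω in A0, D ω ∂P = (P (s0 ∩ A0)).toReal := by
    rw [← aux_indicator_integral P hs0m]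
    refine setIntegral_congr_fun hA0m fun ω hω => ?_
    have hz : Z ω = 0 := hω
    have hd : D ω = D0 ω := by rw [hD ω, hz]; ring
    rcases hD0b ω with h | h <;>
      simp [Set.indicator_apply, hs0def, hd, h] <;> norm_num
  have e1' : ∫ ω in A1, D ω * S ω ∂P = (P ((s1 ∩ t) ∩ A1)).toReal := by
    rw [← aux_indicator_integral P (hs1m.inter htm)]
    refine setIntegral_congr_fun hA1m fun ω hω => ?_
    have hz : Z ω = 1 := hω
    have hd : D ω = D1 ω := by rw [hD ω, hz]; ring
    rcases hD1b ω with h | h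
    · simp [Set.indicator_apply, hs1def, htdef, hd, h]
    · have hs' : S ω = S1 ω := by rw [hS ω, hd, h]; ring
      rcases hS1b ω with h2 | h2 <;>
        simp [Set.indicator_apply, hs1def, htdef, hd, hs', h, h2] <;> norm_num
  have e0' : ∫ ω in A0, D ω * S ω ∂P = (P ((s0 ∩ t) ∩ A0)).toReal := by
    rw [← aux_indicator_integral P (hs0m.inter htm)]
    refine setIntegral_congr_fun hA0m fun ω hω => ?_
    have hz : Z ω = 0 := hω
    have hd : D ω = D0 ω := by rw [hD ω, hz]; ring
    rcases hD0b ω with h | h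
    · simp [Set.indicator_apply, hs0def, htdef, hd, h]
    · have hs' : S ω = S1 ω := by rw [hS ω, hd, h]; ring
      rcases hS1b ω with h2 | h2 <;>
        simp [Set.indicator_apply, hs0def, htdef, hd, hs', h, h2] <;> norm_num
  -- cexp values
  have c1 : cexp P A1 D = (P s1).toReal := by
    rw [cexp, e1, key1, ENNReal.toReal_mul, mul_div_assoc, div_self pA1ne, mul_one]
  have c0 : cexp P A0 D = (P s0).toReal := by
    rw [cexp, e0, key0, ENNReal.toReal_mul, mul_div_assoc, div_self pA0ne, mul_one]
  have c1' : cexp P A1 (fun ω => D ω * S ω) = (P (s1 ∩ t)).toReal := by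
    rw [cexp, e1', key1', ENNReal.toReal_mul, mul_div_assoc, div_self pA1ne, mul_one]
  have c0' : cexp P A0 (fun ω => D ω * S ω) = (P (s0 ∩ t)).toReal := by
    rw [cexp, e0', key0', ENNReal.toReal_mul, mul_div_assoc, div_self pA0ne, mul_one]
  -- null set from monotonicity
  have hnull : P (s0 \ s1) = 0 := by
    refine measure_mono_null ?_ (ae_iff.mp hmono)
    rintro ω ⟨h0, h1⟩
    have hd0 : D0 ω = 1 := h0
    have hd1 : D1 ω = 0 := by
      rcases hD1b ω with h | h
      · exact h
      · exact absurd h h1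
    simp only [Set.mem_setOf_eq, hd0, hd1]
    norm_num
  have hnull' : P ((s0 ∩ t) \ (s1 ∩ t)) = 0 := by
    refine measure_mono_null ?_ hnull
    rintro ω ⟨⟨h0, ht0⟩, h1⟩
    exact ⟨h0, fun hmem => h1 ⟨hmem, ht0⟩⟩
  have hdiff : (P (s1 \ s0)).toReal = (P s1).toReal - (P s0).toReal :=
    aux_diff P hs1m hs0m hnull
  have hdiff' : (P ((s1 ∩ t) \ (s0 ∩ t))).toReal
      = (P (s1 ∩ t)).toReal - (P (s0 ∩ t)).toReal :=
    aux_diff P (hs1m.inter htm) (hs0m.inter htm) hnull'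
  -- c = s1 \ s0
  have hc : {ω | D1 ω = 1 ∧ D0 ω = 0} = s1 \ s0 := by
    ext ω
    simp only [Set.mem_setOf_eq, Set.mem_diff, hs1def, hs0def]
    rcases hD0b ω with h | h <;> simp [h] <;> norm_num
  -- relevance gives positivity
  have hint1 : ∫ ω, D1 ω ∂P = (P s1).toReal := by
    have hfe : D1 = s1.indicator (fun _ => (1:ℝ)) := by
      funext ω
      rcases hD1b ω with h | h <;>
        simp [Set.indicator_apply, hs1def, h] <;> norm_num
    rw [hfe, integral_indicator hs1m, setIntegral_const, smul_eq_mul, mul_one, measureReal_def]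
  have hint0 : ∫ ω, D0 ω ∂P = (P s0).toReal := by
    have hfe : D0 = s0.indicator (fun _ => (1:ℝ)) := by
      funext ω
      rcases hD0b ω with h | h <;>
        simp [Set.indicator_apply, hs0def, h] <;> norm_num
    rw [hfe, integral_indicator hs0m, setIntegral_const, smul_eq_mul, mul_one, measureReal_def]
  have hne : (P s1).toReal ≠ (P s0).toReal := by
    rw [← hint1, ← hint0]; exact hrel
  have hpos : 0 < (P (s1 \ s0)).toReal := by
    refine lt_of_le_of_ne ENNReal.toReal_nonneg (Ne.symm ?_)
    rw [hdiff]
    exact sub_ne_zero.mpr hne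
  refine ⟨?_, ?_, ?_⟩
  · rw [hc, c1, c0, hdiff]
  · rw [hc]; exact hpos
  · have hset : t ∩ (s1 \ s0) = (s1 ∩ t) \ (s0 ∩ t) := by
      ext ω
      simp only [Set.mem_diff, Set.mem_inter_iff]
      tauto
    rw [cprob, hc, c1, c0, c1', c0', ← hdiff, ← hdiff', hset]
end

section
/- Under randomization, monotonicity and relevance, the survival probability of compliers under control is identified: P(c) = E[D | Z=1] − E[D | Z=0] > 0 and P(S₀=1 | c) = (E[(1−D)·S | Z=0] − E[(1−D)·S | Z=1]) / (E[D | Z=1] − E[D | Z=0]). -/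
open MeasureTheory ProbabilityTheory

variable {Ω : Type*} [MeasurableSpace Ω]

lemma indep_setIntegral (P : Measure Ω) [IsProbabilityMeasure P]
    {Z X : Ω → ℝ} (hind : IndepFun Z X P)
    (hZm : Measurable Z) (hXm : Measurable X) (z : ℝ) :
    ∫ ω in {ω | Z ω = z}, X ω ∂P
      = (∫ ω, X ω ∂P) * (P {ω | Z ω = z}).toReal := by
  have hA : MeasurableSet {ω | Z ω = z} := hZm (measurableSet_singleton z)
  have h1 : ∫ ω in {ω | Z ω = z}, X ω ∂P
      = ∫ ω, (({ω | Z ω = z}).indicator (fun _ => (1:ℝ)) * X) ω ∂P := by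
    rw [← integral_indicator hA]
    congr 1
    funext ω
    by_cases h : ω ∈ {ω | Z ω = z} <;> simp [Set.indicator, h]
  have hindI : IndepFun (({ω | Z ω = z}).indicator (fun _ => (1:ℝ))) X P := by
    have he : ({ω | Z ω = z}).indicator (fun _ => (1:ℝ))
        = (Set.indicator {z} (fun _ => (1:ℝ))) ∘ Z := by
      funext ω; by_cases h : Z ω = z <;> simp [h]
    rw [he]
    exact hind.comp (measurable_const.indicator (measurableSet_singleton z)) measurable_id
  rw [h1, hindI.integral_mul_eq_mul_integral
        ((measurable_const.indicator hA).aestronglyMeasurable) hXm.aestronglyMeasurable]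
  have : ∫ ω, ({ω | Z ω = z}).indicator (fun _ => (1:ℝ)) ω ∂P
      = (P {ω | Z ω = z}).toReal := by
    simp [integral_indicator hA]
    rfl
  rw [this, mul_comm]

/-- Under randomization, monotonicity and relevance, `P(c) = E[D | Z=1] − E[D | Z=0] > 0` and the survival probability of compliers under control is identified: `P(S₀=1 | c) = (E[(1−D)·S | Z=0] − E[(1−D)·S | Z=1]) / (E[D | Z=1] − E[D | Z=0])`. -/
theorem stmt_4
    (P : Measure Ω) [IsProbabilityMeasure P]
    (Z D0 D1 S0 S1 Y0 Y1 D S Y : Ω → ℝ)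
    (hZm : Measurable Z) (hD0m : Measurable D0) (hD1m : Measurable D1)
    (hS0m : Measurable S0) (hS1m : Measurable S1)
    (hY0i : Integrable Y0 P) (hY1i : Integrable Y1 P)
    (hZb : ∀ ω, Z ω = 0 ∨ Z ω = 1)
    (hD0b : ∀ ω, D0 ω = 0 ∨ D0 ω = 1)
    (hD1b : ∀ ω, D1 ω = 0 ∨ D1 ω = 1)
    (hS0b : ∀ ω, S0 ω = 0 ∨ S0 ω = 1)
    (hS1b : ∀ ω, S1 ω = 0 ∨ S1 ω = 1)
    (hD : ∀ ω, D ω = Z ω * D1 ω + (1 - Z ω) * D0 ω)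
    (hS : ∀ ω, S ω = D ω * S1 ω + (1 - D ω) * S0 ω)
    (hY : ∀ ω, Y ω = D ω * Y1 ω + (1 - D ω) * Y0 ω)
    (hindep : IndepFun Z (fun ω => (D0 ω, D1 ω, S0 ω, S1 ω, Y0 ω, Y1 ω)) P)
    (hZpos : 0 < (P {ω | Z ω = 1}).toReal)
    (hZlt1 : (P {ω | Z ω = 1}).toReal < 1)
    (hmono : ∀ᵐ ω ∂P, D0 ω ≤ D1 ω)
    (hrel : ∫ ω, D1 ω ∂P ≠ ∫ ω, D0 ω ∂P)
    :
    (P {ω | D1 ω = 1 ∧ D0 ω = 0}).toReal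
      = cexp P {ω | Z ω = 1} D - cexp P {ω | Z ω = 0} D ∧
    0 < (P {ω | D1 ω = 1 ∧ D0 ω = 0}).toReal ∧
    cprob P {ω | D1 ω = 1 ∧ D0 ω = 0} {ω | S0 ω = 1}
      = (cexp P {ω | Z ω = 0} (fun ω => (1 - D ω) * S ω)
          - cexp P {ω | Z ω = 1} (fun ω => (1 - D ω) * S ω))
        / (cexp P {ω | Z ω = 1} D - cexp P {ω | Z ω = 0} D) := by
  -- measurability / integrability of basic pieces
  have hD1i : Integrable D1 P := by
    refine (integrable_const (1:ℝ)).mono' hD1m.aestronglyMeasurable (ae_of_all _ fun ω => ?_)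
    rcases hD1b ω with h | h <;> simp [h]
  have hD0i : Integrable D0 P := by
    refine (integrable_const (1:ℝ)).mono' hD0m.aestronglyMeasurable (ae_of_all _ fun ω => ?_)
    rcases hD0b ω with h | h <;> simp [h]
  have hG1m : Measurable (fun ω => (1 - D1 ω) * S0 ω) :=
    (measurable_const.sub hD1m).mul hS0m
  have hG0m : Measurable (fun ω => (1 - D0 ω) * S0 ω) :=
    (measurable_const.sub hD0m).mul hS0m
  have hbd : ∀ (f g : Ω → ℝ), (∀ ω, f ω = 0 ∨ f ω = 1) → (∀ ω, g ω = 0 ∨ g ω = 1) →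
      ∀ ω, ‖(1 - f ω) * g ω‖ ≤ 1 := by
    intro f g hf hg ω
    rcases hf ω with h | h <;> rcases hg ω with h' | h' <;> simp [h, h']
  have hG1i : Integrable (fun ω => (1 - D1 ω) * S0 ω) P :=
    (integrable_const (1:ℝ)).mono' hG1m.aestronglyMeasurable
      (ae_of_all _ (hbd D1 S0 hD1b hS0b))
  have hG0i : Integrable (fun ω => (1 - D0 ω) * S0 ω) P :=
    (integrable_const (1:ℝ)).mono' hG0m.aestronglyMeasurable
      (ae_of_all _ (hbd D0 S0 hD0b hS0b))
  -- independence of Z with derived quantities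
  have hiD1 : IndepFun Z D1 P :=
    hindep.comp measurable_id (measurable_fst.comp measurable_snd)
  have hiD0 : IndepFun Z D0 P :=
    hindep.comp measurable_id measurable_fst
  have hiG1 : IndepFun Z (fun ω => (1 - D1 ω) * S0 ω) P :=
    hindep.comp measurable_id
      (show Measurable (fun p : ℝ × ℝ × ℝ × ℝ × ℝ × ℝ => (1 - p.2.1) * p.2.2.1) by fun_prop)
  have hiG0 : IndepFun Z (fun ω => (1 - D0 ω) * S0 ω) P :=
    hindep.comp measurable_id
      (show Measurable (fun p : ℝ × ℝ × ℝ × ℝ × ℝ × ℝ => (1 - p.1) * p.2.2.1) by fun_prop)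
  -- probabilities of Z events
  have hA1 : MeasurableSet {ω | Z ω = 1} := hZm (measurableSet_singleton 1)
  have hA0 : MeasurableSet {ω | Z ω = 0} := hZm (measurableSet_singleton 0)
  have hP1ne : (P {ω | Z ω = 1}).toReal ≠ 0 := ne_of_gt hZpos
  have hcompl : {ω | Z ω = (0:ℝ)} = {ω | Z ω = 1}ᶜ := by
    ext ω; rcases hZb ω with h | h <;> simp [h]
  have hP0 : (P {ω | Z ω = 0}).toReal = 1 - (P {ω | Z ω = 1}).toReal := by
    rw [hcompl, measure_compl hA1 (measure_ne_top P _), measure_univ,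
      ENNReal.toReal_sub_of_le prob_le_one ENNReal.one_ne_top]
    simp
  have hP0ne : (P {ω | Z ω = 0}).toReal ≠ 0 := by rw [hP0]; linarith
  -- cexp computations
  have hcexp1D : cexp P {ω | Z ω = 1} D = ∫ ω, D1 ω ∂P := by
    have hcongr : ∫ ω in {ω | Z ω = 1}, D ω ∂P = ∫ ω in {ω | Z ω = 1}, D1 ω ∂P := by
      refine setIntegral_congr_fun hA1 fun ω hω => ?_
      have : Z ω = 1 := hω
      rw [hD ω, this]; ring
    rw [cexp, hcongr, indep_setIntegral P hiD1 hZm hD1m]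
    field_simp
  have hcexp0D : cexp P {ω | Z ω = 0} D = ∫ ω, D0 ω ∂P := by
    have hcongr : ∫ ω in {ω | Z ω = 0}, D ω ∂P = ∫ ω in {ω | Z ω = 0}, D0 ω ∂P := by
      refine setIntegral_congr_fun hA0 fun ω hω => ?_
      have : Z ω = 0 := hω
      rw [hD ω, this]; ring
    rw [cexp, hcongr, indep_setIntegral P hiD0 hZm hD0m]
    field_simp
  have hcexp1G : cexp P {ω | Z ω = 1} (fun ω => (1 - D ω) * S ω)
      = ∫ ω, (1 - D1 ω) * S0 ω ∂P := by
    have hcongr : ∫ ω in {ω | Z ω = 1}, (1 - D ω) * S ω ∂P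
        = ∫ ω in {ω | Z ω = 1}, (1 - D1 ω) * S0 ω ∂P := by
      refine setIntegral_congr_fun hA1 fun ω hω => ?_
      have hz : Z ω = 1 := hω
      have hd : D ω = D1 ω := by rw [hD ω, hz]; ring
      rw [hS ω, hd]
      rcases hD1b ω with h | h <;> simp [h] <;> ring
    rw [cexp, hcongr, indep_setIntegral P hiG1 hZm hG1m]
    field_simp
  have hcexp0G : cexp P {ω | Z ω = 0} (fun ω => (1 - D ω) * S ω)
      = ∫ ω, (1 - D0 ω) * S0 ω ∂P := by
    have hcongr : ∫ ω in {ω | Z ω = 0}, (1 - D ω) * S ω ∂P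
        = ∫ ω in {ω | Z ω = 0}, (1 - D0 ω) * S0 ω ∂P := by
      refine setIntegral_congr_fun hA0 fun ω hω => ?_
      have hz : Z ω = 0 := hω
      have hd : D ω = D0 ω := by rw [hD ω, hz]; ring
      rw [hS ω, hd]
      rcases hD0b ω with h | h <;> simp [h] <;> ring
    rw [cexp, hcongr, indep_setIntegral P hiG0 hZm hG0m]
    field_simp
  -- complier set
  set C : Set Ω := {ω | D1 ω = 1 ∧ D0 ω = 0} with hCdef
  have hCm : MeasurableSet C := by
    have : C = D1 ⁻¹' {1} ∩ D0 ⁻¹' {0} := by ext ω; simp [hCdef, Set.mem_setOf_eq]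
    rw [this]
    exact (hD1m (measurableSet_singleton 1)).inter (hD0m (measurableSet_singleton 0))
  -- P(c) = E[D1] - E[D0]
  have hPc : (P C).toReal = ∫ ω, D1 ω ∂P - ∫ ω, D0 ω ∂P := by
    rw [← integral_sub hD1i hD0i]
    have hae : (fun ω => D1 ω - D0 ω) =ᵐ[P] C.indicator (fun _ => (1:ℝ)) := by
      filter_upwards [hmono] with ω hω
      rcases hD1b ω with h1 | h1 <;> rcases hD0b ω with h0 | h0 <;>
        simp [Set.indicator, hCdef, Set.mem_setOf_eq, h1, h0] <;>
        first | linarith [hω] | rfl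
    rw [integral_congr_ae hae, integral_indicator hCm]
    simp
    rfl
  -- numerator
  have hB : MeasurableSet ({ω | S0 ω = 1} ∩ C) :=
    (hS0m (measurableSet_singleton 1)).inter hCm
  have hNum : ∫ ω, (1 - D0 ω) * S0 ω ∂P - ∫ ω, (1 - D1 ω) * S0 ω ∂P
      = (P ({ω | S0 ω = 1} ∩ C)).toReal := by
    rw [← integral_sub hG0i hG1i]
    have hae : (fun ω => (1 - D0 ω) * S0 ω - (1 - D1 ω) * S0 ω)
        =ᵐ[P] ({ω | S0 ω = 1} ∩ C).indicator (fun _ => (1:ℝ)) := by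
      filter_upwards [hmono] with ω hω
      rcases hD1b ω with h1 | h1 <;> rcases hD0b ω with h0 | h0 <;>
        rcases hS0b ω with hs | hs <;>
        simp [Set.indicator, hCdef, Set.mem_setOf_eq, h1, h0, hs] <;>
        first | linarith [hω] | rfl
    rw [integral_congr_ae hae, integral_indicator hB]
    simp
    rfl
  have hcexpdiff : cexp P {ω | Z ω = 1} D - cexp P {ω | Z ω = 0} D = (P C).toReal := by
    rw [hcexp1D, hcexp0D, hPc]
  have hPcpos : 0 < (P C).toReal := by
    have hne : (P C).toReal ≠ 0 := by
      rw [hPc]; exact sub_ne_zero.mpr hrel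
    exact lt_of_le_of_ne ENNReal.toReal_nonneg (Ne.symm hne)
  refine ⟨hcexpdiff.symm, hPcpos, ?_⟩
  rw [cprob, hcexpdiff, hcexp0G, hcexp1G, hNum]
end

section
/- Under randomization and monotonicity, the following exact identities hold: E[D·S | Z=1] − E[D·S | Z=0] = P(c ∩ {S₁=1}) and E[(1−D)·S | Z=0] − E[(1−D)·S | Z=1] = P(c ∩ {S₀=1}). -/
open MeasureTheory ProbabilityTheory

variable {Ω : Type*} [MeasurableSpace Ω]

/-- Under randomization and monotonicity, `E[D·S | Z=1] − E[D·S | Z=0] = P(c ∩ {S₁=1})` and `E[(1−D)·S | Z=0] − E[(1−D)·S | Z=1] = P(c ∩ {S₀=1})`. -/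
theorem stmt_5
    (P : Measure Ω) [IsProbabilityMeasure P]
    (Z D0 D1 S0 S1 Y0 Y1 D S Y : Ω → ℝ)
    (hZm : Measurable Z) (hD0m : Measurable D0) (hD1m : Measurable D1)
    (hS0m : Measurable S0) (hS1m : Measurable S1)
    (hY0i : Integrable Y0 P) (hY1i : Integrable Y1 P)
    (hZb : ∀ ω, Z ω = 0 ∨ Z ω = 1)
    (hD0b : ∀ ω, D0 ω = 0 ∨ D0 ω = 1)
    (hD1b : ∀ ω, D1 ω = 0 ∨ D1 ω = 1)
    (hS0b : ∀ ω, S0 ω = 0 ∨ S0 ω = 1)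
    (hS1b : ∀ ω, S1 ω = 0 ∨ S1 ω = 1)
    (hD : ∀ ω, D ω = Z ω * D1 ω + (1 - Z ω) * D0 ω)
    (hS : ∀ ω, S ω = D ω * S1 ω + (1 - D ω) * S0 ω)
    (hY : ∀ ω, Y ω = D ω * Y1 ω + (1 - D ω) * Y0 ω)
    (hindep : IndepFun Z (fun ω => (D0 ω, D1 ω, S0 ω, S1 ω, Y0 ω, Y1 ω)) P)
    (hZpos : 0 < (P {ω | Z ω = 1}).toReal)
    (hZlt1 : (P {ω | Z ω = 1}).toReal < 1)
    (hmono : ∀ᵐ ω ∂P, D0 ω ≤ D1 ω)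
    :
    cexp P {ω | Z ω = 1} (fun ω => D ω * S ω)
        - cexp P {ω | Z ω = 0} (fun ω => D ω * S ω)
      = (P ({ω | D1 ω = 1 ∧ D0 ω = 0} ∩ {ω | S1 ω = 1})).toReal ∧
    cexp P {ω | Z ω = 0} (fun ω => (1 - D ω) * S ω)
        - cexp P {ω | Z ω = 1} (fun ω => (1 - D ω) * S ω)
      = (P ({ω | D1 ω = 1 ∧ D0 ω = 0} ∩ {ω | S0 ω = 1})).toReal := by
  classical
  set V : Ω → ℝ × ℝ × ℝ × ℝ × ℝ × ℝ := fun ω => (D0 ω, D1 ω, S0 ω, S1 ω, Y0 ω, Y1 ω) with hVdef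
  -- general factorization lemma
  have key : ∀ (r : ℝ) (g : Ω → ℝ) (ψ : ℝ × ℝ × ℝ × ℝ × ℝ × ℝ → ℝ), Measurable g →
      Measurable ψ → (∀ ω, g ω = ψ (V ω)) →
      ∫ ω in {ω | Z ω = r}, g ω ∂P = (P {ω | Z ω = r}).toReal * ∫ ω, g ω ∂P := by
    intro r g ψ hg hψ hgv
    have hφ : Measurable (fun z : ℝ => if z = r then (1 : ℝ) else 0) :=
      Measurable.ite measurableSet_eq measurable_const measurable_const
    have hψV : (ψ ∘ V) = g := funext fun ω => (hgv ω).symm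
    have hind : IndepFun ((fun z : ℝ => if z = r then (1 : ℝ) else 0) ∘ Z) (ψ ∘ V) P :=
      hindep.comp hφ hψ
    have hAs : MeasurableSet {ω | Z ω = r} := hZm measurableSet_eq
    have h1 : ∫ ω in {ω | Z ω = r}, g ω ∂P
        = ∫ ω, ((fun z : ℝ => if z = r then (1 : ℝ) else 0) ∘ Z) ω * (ψ ∘ V) ω ∂P := by
      rw [← integral_indicator hAs]
      refine integral_congr_ae (ae_of_all _ fun ω => ?_)
      simp only [Set.indicator_apply, Set.mem_setOf_eq, Function.comp_apply]
      by_cases h : Z ω = r <;> simp [h, hgv ω]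
    have h2 := hind.integral_fun_mul_eq_mul_integral (hφ.comp hZm).aestronglyMeasurable
      (hψV ▸ hg.aestronglyMeasurable)
    have h3 : ∫ ω, ((fun z : ℝ => if z = r then (1 : ℝ) else 0) ∘ Z) ω ∂P
        = (P {ω | Z ω = r}).toReal := by
      have : ((fun z : ℝ => if z = r then (1 : ℝ) else 0) ∘ Z)
          = Set.indicator {ω | Z ω = r} (fun _ => (1 : ℝ)) := by
        funext ω
        simp [Set.indicator_apply, Set.mem_setOf_eq, Function.comp_apply]
      rw [this, integral_indicator_const _ hAs]
      simp
      rfl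
    rw [h1, h2, h3, hψV]
  -- measurability and integrability facts
  have int01 : ∀ f : Ω → ℝ, Measurable f → (∀ ω, ‖f ω‖ ≤ 1) → Integrable f P :=
    fun f hm hb => (integrable_const 1).mono' hm.aestronglyMeasurable (ae_of_all _ hb)
  have hA1 : MeasurableSet {ω | Z ω = 1} := hZm measurableSet_eq
  have hA0 : MeasurableSet {ω | Z ω = 0} := hZm measurableSet_eq
  have hc01 : {ω | Z ω = 0} = {ω | Z ω = 1}ᶜ := by
    ext ω; rcases hZb ω with h | h <;> simp [h]
  have hP0 : (P {ω | Z ω = 0}).toReal = 1 - (P {ω | Z ω = 1}).toReal := by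
    rw [hc01, prob_compl_eq_one_sub hA1,
      ENNReal.toReal_sub_of_le prob_le_one (by norm_num)]
    simp
  have hP0pos : 0 < (P {ω | Z ω = 0}).toReal := by rw [hP0]; linarith
  have hZ1ne : (P {ω | Z ω = 1}).toReal ≠ 0 := ne_of_gt hZpos
  have hZ0ne : (P {ω | Z ω = 0}).toReal ≠ 0 := ne_of_gt hP0pos
  -- bounds for 0/1-valued products
  have hbDS1 : Measurable (fun ω => D1 ω * S1 ω) := hD1m.mul hS1m
  have hbDS0 : Measurable (fun ω => D0 ω * S1 ω) := hD0m.mul hS1m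
  have hbNS0 : Measurable (fun ω => (1 - D0 ω) * S0 ω) := (measurable_const.sub hD0m).mul hS0m
  have hbNS1 : Measurable (fun ω => (1 - D1 ω) * S0 ω) := (measurable_const.sub hD1m).mul hS0m
  have hn1 : ∀ ω, ‖D1 ω * S1 ω‖ ≤ 1 := by
    intro ω; rcases hD1b ω with h | h <;> rcases hS1b ω with h' | h' <;> simp [h, h']
  have hn2 : ∀ ω, ‖D0 ω * S1 ω‖ ≤ 1 := by
    intro ω; rcases hD0b ω with h | h <;> rcases hS1b ω with h' | h' <;> simp [h, h']
  have hn3 : ∀ ω, ‖(1 - D0 ω) * S0 ω‖ ≤ 1 := by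
    intro ω; rcases hD0b ω with h | h <;> rcases hS0b ω with h' | h' <;> simp [h, h']
  have hn4 : ∀ ω, ‖(1 - D1 ω) * S0 ω‖ ≤ 1 := by
    intro ω; rcases hD1b ω with h | h <;> rcases hS0b ω with h' | h' <;> simp [h, h']
  have hi1 : Integrable (fun ω => D1 ω * S1 ω) P := int01 _ hbDS1 hn1
  have hi2 : Integrable (fun ω => D0 ω * S1 ω) P := int01 _ hbDS0 hn2
  have hi3 : Integrable (fun ω => (1 - D0 ω) * S0 ω) P := int01 _ hbNS0 hn3
  have hi4 : Integrable (fun ω => (1 - D1 ω) * S0 ω) P := int01 _ hbNS1 hn4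
  -- pointwise identities on the Z-events
  have hDZ1 : ∀ ω ∈ {ω | Z ω = 1}, D ω = D1 ω := by
    intro ω hω; simp only [Set.mem_setOf_eq] at hω; rw [hD ω, hω]; ring
  have hDZ0 : ∀ ω ∈ {ω | Z ω = 0}, D ω = D0 ω := by
    intro ω hω; simp only [Set.mem_setOf_eq] at hω; rw [hD ω, hω]; ring
  have hDSZ1 : Set.EqOn (fun ω => D ω * S ω) (fun ω => D1 ω * S1 ω) {ω | Z ω = 1} := by
    intro ω hω
    have hd := hDZ1 ω hω
    rcases hD1b ω with h | h <;> simp [hS ω, hd, h] <;> ring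
  have hDSZ0 : Set.EqOn (fun ω => D ω * S ω) (fun ω => D0 ω * S1 ω) {ω | Z ω = 0} := by
    intro ω hω
    have hd := hDZ0 ω hω
    rcases hD0b ω with h | h <;> simp [hS ω, hd, h] <;> ring
  have hNSZ0 : Set.EqOn (fun ω => (1 - D ω) * S ω) (fun ω => (1 - D0 ω) * S0 ω) {ω | Z ω = 0} := by
    intro ω hω
    have hd := hDZ0 ω hω
    rcases hD0b ω with h | h <;> simp [hS ω, hd, h] <;> ring
  have hNSZ1 : Set.EqOn (fun ω => (1 - D ω) * S ω) (fun ω => (1 - D1 ω) * S0 ω) {ω | Z ω = 1} := by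
    intro ω hω
    have hd := hDZ1 ω hω
    rcases hD1b ω with h | h <;> simp [hS ω, hd, h] <;> ring
  -- compute the four conditional expectations
  have k1 : ∫ ω in {ω | Z ω = 1}, D1 ω * S1 ω ∂P
      = (P {ω | Z ω = 1}).toReal * ∫ ω, D1 ω * S1 ω ∂P :=
    key 1 _ (fun p => p.2.1 * p.2.2.2.1) hbDS1 (by fun_prop) (fun ω => rfl)
  have k2 : ∫ ω in {ω | Z ω = 0}, D0 ω * S1 ω ∂P
      = (P {ω | Z ω = 0}).toReal * ∫ ω, D0 ω * S1 ω ∂P :=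
    key 0 _ (fun p => p.1 * p.2.2.2.1) hbDS0 (by fun_prop) (fun ω => rfl)
  have k3 : ∫ ω in {ω | Z ω = 0}, (1 - D0 ω) * S0 ω ∂P
      = (P {ω | Z ω = 0}).toReal * ∫ ω, (1 - D0 ω) * S0 ω ∂P :=
    key 0 _ (fun p => (1 - p.1) * p.2.2.1) hbNS0 (by fun_prop) (fun ω => rfl)
  have k4 : ∫ ω in {ω | Z ω = 1}, (1 - D1 ω) * S0 ω ∂P
      = (P {ω | Z ω = 1}).toReal * ∫ ω, (1 - D1 ω) * S0 ω ∂P :=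
    key 1 _ (fun p => (1 - p.2.1) * p.2.2.1) hbNS1 (by fun_prop) (fun ω => rfl)
  have c1 : cexp P {ω | Z ω = 1} (fun ω => D ω * S ω) = ∫ ω, D1 ω * S1 ω ∂P := by
    rw [cexp, setIntegral_congr_fun hA1 hDSZ1, k1, mul_comm, mul_div_assoc, div_self hZ1ne, mul_one]
  have c2 : cexp P {ω | Z ω = 0} (fun ω => D ω * S ω) = ∫ ω, D0 ω * S1 ω ∂P := by
    rw [cexp, setIntegral_congr_fun hA0 hDSZ0, k2, mul_comm, mul_div_assoc, div_self hZ0ne, mul_one]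
  have c3 : cexp P {ω | Z ω = 0} (fun ω => (1 - D ω) * S ω) = ∫ ω, (1 - D0 ω) * S0 ω ∂P := by
    rw [cexp, setIntegral_congr_fun hA0 hNSZ0, k3, mul_comm, mul_div_assoc, div_self hZ0ne, mul_one]
  have c4 : cexp P {ω | Z ω = 1} (fun ω => (1 - D ω) * S ω) = ∫ ω, (1 - D1 ω) * S0 ω ∂P := by
    rw [cexp, setIntegral_congr_fun hA1 hNSZ1, k4, mul_comm, mul_div_assoc, div_self hZ1ne, mul_one]
  -- measurable strata sets
  have hE1 : MeasurableSet ({ω | D1 ω = 1 ∧ D0 ω = 0} ∩ {ω | S1 ω = 1}) := by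
    exact ((hD1m measurableSet_eq).inter (hD0m measurableSet_eq)).inter (hS1m measurableSet_eq)
  have hE0 : MeasurableSet ({ω | D1 ω = 1 ∧ D0 ω = 0} ∩ {ω | S0 ω = 1}) := by
    exact ((hD1m measurableSet_eq).inter (hD0m measurableSet_eq)).inter (hS0m measurableSet_eq)
  constructor
  · rw [c1, c2, ← integral_sub hi1 hi2]
    have : ∫ ω, (D1 ω * S1 ω - D0 ω * S1 ω) ∂P
        = ∫ ω, Set.indicator ({ω | D1 ω = 1 ∧ D0 ω = 0} ∩ {ω | S1 ω = 1}) (fun _ => (1 : ℝ)) ω ∂P := by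
      refine integral_congr_ae ?_
      filter_upwards [hmono] with ω hm
      rcases hD0b ω with h0 | h0 <;> rcases hD1b ω with h1 | h1 <;> rcases hS1b ω with hs1 | hs1 <;>
        simp [Set.indicator_apply, Set.mem_inter_iff, Set.mem_setOf_eq, h0, h1, hs1] <;>
        linarith
    rw [this, integral_indicator_const _ hE1]
    simp
    rfl
  · rw [c3, c4, ← integral_sub hi3 hi4]
    have : ∫ ω, ((1 - D0 ω) * S0 ω - (1 - D1 ω) * S0 ω) ∂P
        = ∫ ω, Set.indicator ({ω | D1 ω = 1 ∧ D0 ω = 0} ∩ {ω | S0 ω = 1}) (fun _ => (1 : ℝ)) ω ∂P := by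
      refine integral_congr_ae ?_
      filter_upwards [hmono] with ω hm
      rcases hD0b ω with h0 | h0 <;> rcases hD1b ω with h1 | h1 <;> rcases hS0b ω with hs0 | hs0 <;>
        simp [Set.indicator_apply, Set.mem_inter_iff, Set.mem_setOf_eq, h0, h1, hs0] <;>
        linarith
    rw [this, integral_indicator_const _ hE0]
    simp
    rfl
end

section
/- Suppose P(cl) > 0, P(cp) > 0 and P(ch) > 0, and principal ignorability holds. Then the conditional means of the potential outcomes among observed-survivor compliers coincide with those among survived compliers: E[Y₁ | c ∩ {S₁=1}] = E[Y₁ | cl] and E[Y₀ | c ∩ {S₀=1}] = E[Y₀ | cl]. -/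
open MeasureTheory ProbabilityTheory

variable {Ω : Type*} [MeasurableSpace Ω]

lemma cexp_union (P : Measure Ω) [IsFiniteMeasure P] {A B : Set Ω}
    (hB : MeasurableSet B) (hd : Disjoint A B)
    (hpA : 0 < (P A).toReal) (hpB : 0 < (P B).toReal)
    {X : Ω → ℝ} (hX : Integrable X P)
    (h : cexp P A X = cexp P B X) : cexp P (A ∪ B) X = cexp P A X := by
  have hIA : ∫ ω in A, X ω ∂P = cexp P A X * (P A).toReal := by
    rw [cexp]; field_simp
  have hIB : ∫ ω in B, X ω ∂P = cexp P A X * (P B).toReal := by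
    rw [h, cexp]; field_simp
  have hint : ∫ ω in A ∪ B, X ω ∂P = cexp P A X * ((P A).toReal + (P B).toReal) := by
    rw [setIntegral_union hd hB hX.integrableOn hX.integrableOn, hIA, hIB]; ring
  have hmeas : (P (A ∪ B)).toReal = (P A).toReal + (P B).toReal := by
    rw [measure_union hd hB, ENNReal.toReal_add (measure_ne_top _ _) (measure_ne_top _ _)]
  rw [cexp, hint, hmeas]
  field_simp

/-- If `P(cl) > 0`, `P(cp) > 0`, `P(ch) > 0` and principal ignorability holds, then `E[Y₁ | c ∩ {S₁=1}] = E[Y₁ | cl]` and `E[Y₀ | c ∩ {S₀=1}] = E[Y₀ | cl]`. -/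
theorem stmt_6
    (P : Measure Ω) [IsProbabilityMeasure P]
    (D0 D1 S0 S1 Y0 Y1 : Ω → ℝ)
    (hD0m : Measurable D0) (hD1m : Measurable D1)
    (hS0m : Measurable S0) (hS1m : Measurable S1)
    (hY0i : Integrable Y0 P) (hY1i : Integrable Y1 P)
    (hD0b : ∀ ω, D0 ω = 0 ∨ D0 ω = 1)
    (hD1b : ∀ ω, D1 ω = 0 ∨ D1 ω = 1)
    (hS0b : ∀ ω, S0 ω = 0 ∨ S0 ω = 1)
    (hS1b : ∀ ω, S1 ω = 0 ∨ S1 ω = 1)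
    (hclpos : 0 < (P {ω | D1 ω = 1 ∧ D0 ω = 0 ∧ S1 ω = 1 ∧ S0 ω = 1}).toReal)
    (hcppos : 0 < (P {ω | D1 ω = 1 ∧ D0 ω = 0 ∧ S1 ω = 1 ∧ S0 ω = 0}).toReal)
    (hchpos : 0 < (P {ω | D1 ω = 1 ∧ D0 ω = 0 ∧ S1 ω = 0 ∧ S0 ω = 1}).toReal)
    (hPI1 : cexp P {ω | D1 ω = 1 ∧ D0 ω = 0 ∧ S1 ω = 1 ∧ S0 ω = 1} Y1
      = cexp P {ω | D1 ω = 1 ∧ D0 ω = 0 ∧ S1 ω = 1 ∧ S0 ω = 0} Y1)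
    (hPI0 : cexp P {ω | D1 ω = 1 ∧ D0 ω = 0 ∧ S1 ω = 1 ∧ S0 ω = 1} Y0
      = cexp P {ω | D1 ω = 1 ∧ D0 ω = 0 ∧ S1 ω = 0 ∧ S0 ω = 1} Y0)
    :
    cexp P ({ω | D1 ω = 1 ∧ D0 ω = 0} ∩ {ω | S1 ω = 1}) Y1
      = cexp P {ω | D1 ω = 1 ∧ D0 ω = 0 ∧ S1 ω = 1 ∧ S0 ω = 1} Y1 ∧
    cexp P ({ω | D1 ω = 1 ∧ D0 ω = 0} ∩ {ω | S0 ω = 1}) Y0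
      = cexp P {ω | D1 ω = 1 ∧ D0 ω = 0 ∧ S1 ω = 1 ∧ S0 ω = 1} Y0 := by
  have hcl : MeasurableSet {ω | D1 ω = 1 ∧ D0 ω = 0 ∧ S1 ω = 1 ∧ S0 ω = 1} := by
    apply MeasurableSet.inter (hD1m (measurableSet_singleton 1))
    apply MeasurableSet.inter (hD0m (measurableSet_singleton 0))
    exact (hS1m (measurableSet_singleton 1)).inter (hS0m (measurableSet_singleton 1))
  have hcp : MeasurableSet {ω | D1 ω = 1 ∧ D0 ω = 0 ∧ S1 ω = 1 ∧ S0 ω = 0} := by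
    apply MeasurableSet.inter (hD1m (measurableSet_singleton 1))
    apply MeasurableSet.inter (hD0m (measurableSet_singleton 0))
    exact (hS1m (measurableSet_singleton 1)).inter (hS0m (measurableSet_singleton 0))
  have hch : MeasurableSet {ω | D1 ω = 1 ∧ D0 ω = 0 ∧ S1 ω = 0 ∧ S0 ω = 1} := by
    apply MeasurableSet.inter (hD1m (measurableSet_singleton 1))
    apply MeasurableSet.inter (hD0m (measurableSet_singleton 0))
    exact (hS1m (measurableSet_singleton 0)).inter (hS0m (measurableSet_singleton 1))
  have hU1 : ({ω | D1 ω = 1 ∧ D0 ω = 0} ∩ {ω | S1 ω = 1})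
      = {ω | D1 ω = 1 ∧ D0 ω = 0 ∧ S1 ω = 1 ∧ S0 ω = 1}
        ∪ {ω | D1 ω = 1 ∧ D0 ω = 0 ∧ S1 ω = 1 ∧ S0 ω = 0} := by
    ext ω
    have := hS0b ω
    simp only [Set.mem_inter_iff, Set.mem_setOf_eq, Set.mem_union]
    constructor
    · rintro ⟨⟨h1, h2⟩, h3⟩
      rcases this with h | h
      · exact Or.inr ⟨h1, h2, h3, h⟩
      · exact Or.inl ⟨h1, h2, h3, h⟩
    · rintro (⟨h1, h2, h3, _⟩ | ⟨h1, h2, h3, _⟩) <;> exact ⟨⟨h1, h2⟩, h3⟩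
  have hU0 : ({ω | D1 ω = 1 ∧ D0 ω = 0} ∩ {ω | S0 ω = 1})
      = {ω | D1 ω = 1 ∧ D0 ω = 0 ∧ S1 ω = 1 ∧ S0 ω = 1}
        ∪ {ω | D1 ω = 1 ∧ D0 ω = 0 ∧ S1 ω = 0 ∧ S0 ω = 1} := by
    ext ω
    have := hS1b ω
    simp only [Set.mem_inter_iff, Set.mem_setOf_eq, Set.mem_union]
    constructor
    · rintro ⟨⟨h1, h2⟩, h3⟩
      rcases this with h | h
      · exact Or.inr ⟨h1, h2, h, h3⟩
      · exact Or.inl ⟨h1, h2, h, h3⟩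
    · rintro (⟨h1, h2, _, h3⟩ | ⟨h1, h2, _, h3⟩) <;> exact ⟨⟨h1, h2⟩, h3⟩
  have hd1 : Disjoint {ω | D1 ω = 1 ∧ D0 ω = 0 ∧ S1 ω = 1 ∧ S0 ω = 1}
      {ω | D1 ω = 1 ∧ D0 ω = 0 ∧ S1 ω = 1 ∧ S0 ω = 0} := by
    rw [Set.disjoint_left]
    rintro ω ⟨_, _, _, h1⟩ ⟨_, _, _, h0⟩
    norm_num [h1] at h0
  have hd0 : Disjoint {ω | D1 ω = 1 ∧ D0 ω = 0 ∧ S1 ω = 1 ∧ S0 ω = 1}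
      {ω | D1 ω = 1 ∧ D0 ω = 0 ∧ S1 ω = 0 ∧ S0 ω = 1} := by
    rw [Set.disjoint_left]
    rintro ω ⟨_, _, h1, _⟩ ⟨_, _, h0, _⟩
    norm_num [h1] at h0
  constructor
  · rw [hU1]
    exact cexp_union P hcp hd1 hclpos hcppos hY1i hPI1
  · rw [hU0]
    exact cexp_union P hch hd0 hclpos hchpos hY0i hPI0
end

section
/- Under randomization and monotonicity, the observed-cell means of Y·S equal expectations of the potential products over the corresponding unions of principal strata: if P(Z=1, D=1) > 0 then E[Y·S | Z=1, D=1] = E[Y₁·S₁ | a ∪ c]; if P(Z=0, D=1) > 0 then E[Y·S | Z=0, D=1] = E[Y₁·S₁ | a]; if P(Z=1, D=0) > 0 then E[Y·S | Z=1, D=0] = E[Y₀·S₀ | n]; and if P(Z=0, D=0) > 0 then E[Y·S | Z=0, D=0] = E[Y₀·S₀ | c ∪ n]. -/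
open MeasureTheory ProbabilityTheory

variable {Ω : Type*} [MeasurableSpace Ω]

lemma cexp_congr_ae (P : Measure Ω) {A B : Set Ω} (h : Ω → ℝ) (hAB : A =ᵐ[P] B) :
    cexp P A h = cexp P B h := by
  unfold cexp
  rw [setIntegral_congr_set hAB, measure_congr hAB]

lemma factor_int (P : Measure Ω) [IsProbabilityMeasure P]
    (Z W h : Ω → ℝ) (hZ : Measurable Z) (hW : Measurable W)
    (hhm : AEStronglyMeasurable h P)
    (hind : IndepFun Z (fun ω => (W ω, h ω)) P) (z w : ℝ) :
    (∫ ω in {ω | Z ω = z} ∩ {ω | W ω = w}, h ω ∂P)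
      = (P {ω | Z ω = z}).toReal * ∫ ω in {ω | W ω = w}, h ω ∂P := by
  have hAz : MeasurableSet {ω | Z ω = z} := hZ (measurableSet_singleton z)
  have hBw : MeasurableSet {ω | W ω = w} := hW (measurableSet_singleton w)
  set F : Ω → ℝ := fun ω => ({z} : Set ℝ).indicator (fun _ => (1:ℝ)) (Z ω) with hF
  set G : Ω → ℝ := fun ω => ({w} : Set ℝ).indicator (fun _ => (1:ℝ)) (W ω) * h ω with hG
  have hφ : Measurable (({z} : Set ℝ).indicator (fun _ => (1:ℝ))) :=
    measurable_const.indicator (measurableSet_singleton z)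
  have hψ : Measurable (fun p : ℝ × ℝ => ({w} : Set ℝ).indicator (fun _ => (1:ℝ)) p.1 * p.2) :=
    ((measurable_const.indicator (measurableSet_singleton w)).comp measurable_fst).mul
      measurable_snd
  have hFG : IndepFun F G P := hind.comp hφ hψ
  have hFeq : F = ({ω | Z ω = z} : Set Ω).indicator (fun _ => (1:ℝ)) := by
    ext ω
    by_cases hω : Z ω = z <;> simp [hF, Set.indicator_apply, hω]
  have hGeq : G = ({ω | W ω = w} : Set Ω).indicator h := by
    ext ω
    by_cases hω : W ω = w <;> simp [hG, Set.indicator_apply, hω]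
  have hFGeq : (F * G) = (({ω | Z ω = z} ∩ {ω | W ω = w} : Set Ω)).indicator h := by
    ext ω
    by_cases h1 : Z ω = z <;> by_cases h2 : W ω = w <;>
      simp [hF, hG, Set.indicator_apply, h1, h2]
  have hFm : AEStronglyMeasurable F P := by
    rw [hFeq]
    exact (stronglyMeasurable_const.indicator hAz).aestronglyMeasurable
  have hGm : AEStronglyMeasurable G P := by
    rw [hGeq]
    exact hhm.indicator hBw
  have key := hFG.integral_mul_eq_mul_integral hFm hGm
  rw [hFGeq, hFeq, hGeq, integral_indicator (hAz.inter hBw), integral_indicator hBw] at key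
  have hone : (integral P (({ω | Z ω = z} : Set Ω).indicator fun _ => (1:ℝ)))
      = (P {ω | Z ω = z}).toReal := by
    rw [integral_indicator hAz]
    simp [Measure.real]
  rw [hone] at key
  exact key

lemma cell_eq (P : Measure Ω) [IsProbabilityMeasure P]
    (Z W h f : Ω → ℝ) (hZ : Measurable Z) (hW : Measurable W)
    (hhm : AEStronglyMeasurable h P)
    (hind : IndepFun Z (fun ω => (W ω, h ω)) P) (z w : ℝ)
    {A : Set Ω} (hA : A = {ω | Z ω = z} ∩ {ω | W ω = w})
    (hfh : ∀ ω ∈ A, f ω = h ω)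
    (hpos : 0 < (P A).toReal) :
    cexp P A f = cexp P {ω | W ω = w} h := by
  subst hA
  have hAz : MeasurableSet {ω | Z ω = z} := hZ (measurableSet_singleton z)
  have hBw : MeasurableSet {ω | W ω = w} := hW (measurableSet_singleton w)
  have hprod : P ({ω | Z ω = z} ∩ {ω | W ω = w})
      = P {ω | Z ω = z} * P {ω | W ω = w} := by
    have hindZW : IndepFun Z W P := hind.comp measurable_id measurable_fst
    exact hindZW.measure_inter_preimage_eq_mul {z} {w}
      (measurableSet_singleton z) (measurableSet_singleton w)
  have hprodR : (P ({ω | Z ω = z} ∩ {ω | W ω = w})).toReal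
      = (P {ω | Z ω = z}).toReal * (P {ω | W ω = w}).toReal := by
    rw [hprod, ENNReal.toReal_mul]
  have hZpos : 0 < (P {ω | Z ω = z}).toReal := by
    rcases (mul_pos_iff.mp (hprodR ▸ hpos)) with ⟨h1, _⟩ | ⟨h1, _⟩
    · exact h1
    · exact absurd h1 (not_lt.mpr ENNReal.toReal_nonneg)
  have hint : (∫ ω in {ω | Z ω = z} ∩ {ω | W ω = w}, f ω ∂P)
      = ∫ ω in {ω | Z ω = z} ∩ {ω | W ω = w}, h ω ∂P :=
    setIntegral_congr_fun (hAz.inter hBw) hfh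
  unfold cexp
  rw [hint, factor_int P Z W h hZ hW hhm hind z w, hprodR,
    mul_div_mul_left _ _ (ne_of_gt hZpos)]

/-- Under randomization and monotonicity, the observed-cell means of `Y·S` equal expectations of the potential products over the corresponding unions of principal strata: `E[Y·S | Z=1, D=1] = E[Y₁·S₁ | a ∪ c]`, `E[Y·S | Z=0, D=1] = E[Y₁·S₁ | a]`, `E[Y·S | Z=1, D=0] = E[Y₀·S₀ | n]`, `E[Y·S | Z=0, D=0] = E[Y₀·S₀ | c ∪ n]`. -/
theorem stmt_7
    (P : Measure Ω) [IsProbabilityMeasure P]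
    (Z D0 D1 S0 S1 Y0 Y1 D S Y : Ω → ℝ)
    (hZm : Measurable Z) (hD0m : Measurable D0) (hD1m : Measurable D1)
    (hS0m : Measurable S0) (hS1m : Measurable S1)
    (hY0i : Integrable Y0 P) (hY1i : Integrable Y1 P)
    (hZb : ∀ ω, Z ω = 0 ∨ Z ω = 1)
    (hD0b : ∀ ω, D0 ω = 0 ∨ D0 ω = 1)
    (hD1b : ∀ ω, D1 ω = 0 ∨ D1 ω = 1)
    (hS0b : ∀ ω, S0 ω = 0 ∨ S0 ω = 1)
    (hS1b : ∀ ω, S1 ω = 0 ∨ S1 ω = 1)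
    (hD : ∀ ω, D ω = Z ω * D1 ω + (1 - Z ω) * D0 ω)
    (hS : ∀ ω, S ω = D ω * S1 ω + (1 - D ω) * S0 ω)
    (hY : ∀ ω, Y ω = D ω * Y1 ω + (1 - D ω) * Y0 ω)
    (hindep : IndepFun Z (fun ω => (D0 ω, D1 ω, S0 ω, S1 ω, Y0 ω, Y1 ω)) P)
    (hZpos : 0 < (P {ω | Z ω = 1}).toReal)
    (hZlt1 : (P {ω | Z ω = 1}).toReal < 1)
    (hmono : ∀ᵐ ω ∂P, D0 ω ≤ D1 ω)
    :
    (0 < (P {ω | Z ω = 1 ∧ D ω = 1}).toReal →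
      cexp P {ω | Z ω = 1 ∧ D ω = 1} (fun ω => Y ω * S ω)
        = cexp P ({ω | D1 ω = 1 ∧ D0 ω = 1} ∪ {ω | D1 ω = 1 ∧ D0 ω = 0})
            (fun ω => Y1 ω * S1 ω)) ∧
    (0 < (P {ω | Z ω = 0 ∧ D ω = 1}).toReal →
      cexp P {ω | Z ω = 0 ∧ D ω = 1} (fun ω => Y ω * S ω)
        = cexp P {ω | D1 ω = 1 ∧ D0 ω = 1} (fun ω => Y1 ω * S1 ω)) ∧
    (0 < (P {ω | Z ω = 1 ∧ D ω = 0}).toReal →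
      cexp P {ω | Z ω = 1 ∧ D ω = 0} (fun ω => Y ω * S ω)
        = cexp P {ω | D1 ω = 0 ∧ D0 ω = 0} (fun ω => Y0 ω * S0 ω)) ∧
    (0 < (P {ω | Z ω = 0 ∧ D ω = 0}).toReal →
      cexp P {ω | Z ω = 0 ∧ D ω = 0} (fun ω => Y ω * S ω)
        = cexp P ({ω | D1 ω = 1 ∧ D0 ω = 0} ∪ {ω | D1 ω = 0 ∧ D0 ω = 0})
            (fun ω => Y0 ω * S0 ω)) := by
  have hDZ1 : ∀ ω, Z ω = 1 → D ω = D1 ω := fun ω hz => by rw [hD, hz]; ring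
  have hDZ0 : ∀ ω, Z ω = 0 → D ω = D0 ω := fun ω hz => by rw [hD, hz]; ring
  have hYS1 : ∀ ω, D ω = 1 → Y ω * S ω = Y1 ω * S1 ω := fun ω hd => by
    rw [hY, hS, hd]; ring
  have hYS0 : ∀ ω, D ω = 0 → Y ω * S ω = Y0 ω * S0 ω := fun ω hd => by
    rw [hY, hS, hd]; ring
  -- independence compositions
  have hind11 : IndepFun Z (fun ω => (D1 ω, Y1 ω * S1 ω)) P := by
    have hψ : Measurable (fun v : ℝ × ℝ × ℝ × ℝ × ℝ × ℝ =>
        (v.2.1, v.2.2.2.2.2 * v.2.2.2.1)) := by fun_prop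
    exact hindep.comp measurable_id hψ
  have hind01 : IndepFun Z (fun ω => (D0 ω, Y1 ω * S1 ω)) P := by
    have hψ : Measurable (fun v : ℝ × ℝ × ℝ × ℝ × ℝ × ℝ =>
        (v.1, v.2.2.2.2.2 * v.2.2.2.1)) := by fun_prop
    exact hindep.comp measurable_id hψ
  have hind10 : IndepFun Z (fun ω => (D1 ω, Y0 ω * S0 ω)) P := by
    have hψ : Measurable (fun v : ℝ × ℝ × ℝ × ℝ × ℝ × ℝ =>
        (v.2.1, v.2.2.2.2.1 * v.2.2.1)) := by fun_prop
    exact hindep.comp measurable_id hψ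
  have hind00 : IndepFun Z (fun ω => (D0 ω, Y0 ω * S0 ω)) P := by
    have hψ : Measurable (fun v : ℝ × ℝ × ℝ × ℝ × ℝ × ℝ =>
        (v.1, v.2.2.2.2.1 * v.2.2.1)) := by fun_prop
    exact hindep.comp measurable_id hψ
  -- a.e. strong measurability of the products
  have h1m : AEStronglyMeasurable (fun ω => Y1 ω * S1 ω) P :=
    hY1i.aestronglyMeasurable.mul hS1m.aestronglyMeasurable
  have h0m : AEStronglyMeasurable (fun ω => Y0 ω * S0 ω) P :=
    hY0i.aestronglyMeasurable.mul hS0m.aestronglyMeasurable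
  -- set identities
  have hA11 : {ω | Z ω = 1 ∧ D ω = 1} = {ω | Z ω = 1} ∩ {ω | D1 ω = 1} := by
    ext ω
    simp only [Set.mem_setOf_eq, Set.mem_inter_iff]
    constructor
    · rintro ⟨hz, hd⟩; exact ⟨hz, by rw [← hDZ1 ω hz]; exact hd⟩
    · rintro ⟨hz, hd⟩; exact ⟨hz, by rw [hDZ1 ω hz]; exact hd⟩
  have hA01 : {ω | Z ω = 0 ∧ D ω = 1} = {ω | Z ω = 0} ∩ {ω | D0 ω = 1} := by
    ext ω
    simp only [Set.mem_setOf_eq, Set.mem_inter_iff]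
    constructor
    · rintro ⟨hz, hd⟩; exact ⟨hz, by rw [← hDZ0 ω hz]; exact hd⟩
    · rintro ⟨hz, hd⟩; exact ⟨hz, by rw [hDZ0 ω hz]; exact hd⟩
  have hA10 : {ω | Z ω = 1 ∧ D ω = 0} = {ω | Z ω = 1} ∩ {ω | D1 ω = 0} := by
    ext ω
    simp only [Set.mem_setOf_eq, Set.mem_inter_iff]
    constructor
    · rintro ⟨hz, hd⟩; exact ⟨hz, by rw [← hDZ1 ω hz]; exact hd⟩
    · rintro ⟨hz, hd⟩; exact ⟨hz, by rw [hDZ1 ω hz]; exact hd⟩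
  have hA00 : {ω | Z ω = 0 ∧ D ω = 0} = {ω | Z ω = 0} ∩ {ω | D0 ω = 0} := by
    ext ω
    simp only [Set.mem_setOf_eq, Set.mem_inter_iff]
    constructor
    · rintro ⟨hz, hd⟩; exact ⟨hz, by rw [← hDZ0 ω hz]; exact hd⟩
    · rintro ⟨hz, hd⟩; exact ⟨hz, by rw [hDZ0 ω hz]; exact hd⟩
  -- strata identifications
  have hS11 : ({ω | D1 ω = 1} : Set Ω)
      = {ω | D1 ω = 1 ∧ D0 ω = 1} ∪ {ω | D1 ω = 1 ∧ D0 ω = 0} := by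
    ext ω
    simp only [Set.mem_setOf_eq, Set.mem_union]
    rcases hD0b ω with h | h <;> tauto
  have hS00 : ({ω | D0 ω = 0} : Set Ω)
      = {ω | D1 ω = 1 ∧ D0 ω = 0} ∪ {ω | D1 ω = 0 ∧ D0 ω = 0} := by
    ext ω
    simp only [Set.mem_setOf_eq, Set.mem_union]
    rcases hD1b ω with h | h <;> tauto
  have hS01 : ({ω | D0 ω = 1} : Set Ω) =ᵐ[P] ({ω | D1 ω = 1 ∧ D0 ω = 1} : Set Ω) := by
    rw [Filter.eventuallyEq_set]
    filter_upwards [hmono] with ω hm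
    constructor
    · intro h0
      refine ⟨?_, h0⟩
      rcases hD1b ω with h | h
      · rw [h0] at hm; rw [h] at hm; linarith
      · exact h
    · rintro ⟨_, h0⟩; exact h0
  have hS10 : ({ω | D1 ω = 0} : Set Ω) =ᵐ[P] ({ω | D1 ω = 0 ∧ D0 ω = 0} : Set Ω) := by
    rw [Filter.eventuallyEq_set]
    filter_upwards [hmono] with ω hm
    constructor
    · intro h1
      refine ⟨h1, ?_⟩
      rcases hD0b ω with h | h
      · exact h
      · rw [h1] at hm; rw [h] at hm; linarith
    · rintro ⟨h1, _⟩; exact h1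
  refine ⟨?_, ?_, ?_, ?_⟩
  · intro hpos
    rw [← hS11]
    exact cell_eq P Z D1 (fun ω => Y1 ω * S1 ω) (fun ω => Y ω * S ω)
      hZm hD1m h1m hind11 1 1 hA11 (fun ω hω => hYS1 ω hω.2) hpos
  · intro hpos
    rw [← cexp_congr_ae P _ hS01]
    exact cell_eq P Z D0 (fun ω => Y1 ω * S1 ω) (fun ω => Y ω * S ω)
      hZm hD0m h1m hind01 0 1 hA01 (fun ω hω => hYS1 ω hω.2) hpos
  · intro hpos
    rw [← cexp_congr_ae P _ hS10]
    exact cell_eq P Z D1 (fun ω => Y0 ω * S0 ω) (fun ω => Y ω * S ω)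
      hZm hD1m h0m hind10 1 0 hA10 (fun ω hω => hYS0 ω hω.2) hpos
  · intro hpos
    rw [← hS00]
    exact cell_eq P Z D0 (fun ω => Y0 ω * S0 ω) (fun ω => Y ω * S ω)
      hZm hD0m h0m hind00 0 0 hA00 (fun ω hω => hYS0 ω hω.2) hpos
end

section
/- Under randomization and monotonicity, the complier-restricted expectations of the potential products are identified as differences of observed-arm means: E[Y₁·S₁·1_c] = P(Z=1)⁻¹·E[D·S·Y·1_{Z=1}] − P(Z=0)⁻¹·E[D·S·Y·1_{Z=0}], i.e. E[Y₁·S₁·1_c] = E[D·S·Y | Z=1] − E[D·S·Y | Z=0]; and similarly E[Y₀·S₀·1_c] = E[(1−D)·S·Y | Z=0] − E[(1−D)·S·Y | Z=1]. -/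
open MeasureTheory ProbabilityTheory

variable {Ω : Type*} [MeasurableSpace Ω]

lemma indicator_mul_key
    (P : Measure Ω) [IsProbabilityMeasure P]
    {Z W : Ω → ℝ} (hindep : IndepFun Z W P)
    (hZm : Measurable Z) (hZb : ∀ ω, Z ω = 0 ∨ Z ω = 1)
    (hWi : Integrable W P) :
    ∫ ω, Z ω * W ω ∂P = (P {ω | Z ω = 1}).toReal * ∫ ω, W ω ∂P := by
  have hA : MeasurableSet {ω | Z ω = 1} := hZm (measurableSet_singleton 1)
  have hZeq : ∀ ω, Z ω = ({ω | Z ω = 1}).indicator (fun _ => (1:ℝ)) ω := by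
    intro ω
    rcases hZb ω with h | h <;> simp [Set.indicator_apply, Set.mem_setOf_eq, h]
  have hZint : Integrable Z P := by
    rw [funext hZeq]; exact (integrable_const (1:ℝ)).indicator hA
  have hEZ : ∫ ω, Z ω ∂P = (P {ω | Z ω = 1}).toReal := by
    rw [integral_congr_ae (Filter.Eventually.of_forall hZeq),
      integral_indicator_const (1:ℝ) hA, smul_eq_mul, mul_one, measureReal_def]
  rw [show (fun ω => Z ω * W ω) = Z * W from rfl,
    hindep.integral_mul_eq_mul_integral hZint.aestronglyMeasurable hWi.aestronglyMeasurable]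
  rw [show ∫ ω, Z ω ∂P = integral P Z from rfl] at hEZ
  rw [hEZ]

/-- Under randomization and monotonicity, `E[Y₁·S₁·1_c] = P(Z=1)⁻¹·E[D·S·Y·1_{Z=1}] − P(Z=0)⁻¹·E[D·S·Y·1_{Z=0}] = E[D·S·Y | Z=1] − E[D·S·Y | Z=0]`, and similarly `E[Y₀·S₀·1_c] = E[(1−D)·S·Y | Z=0] − E[(1−D)·S·Y | Z=1]`. -/
theorem stmt_8
    (P : Measure Ω) [IsProbabilityMeasure P]
    (Z D0 D1 S0 S1 Y0 Y1 D S Y : Ω → ℝ)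
    (hZm : Measurable Z) (hD0m : Measurable D0) (hD1m : Measurable D1)
    (hS0m : Measurable S0) (hS1m : Measurable S1)
    (hY0i : Integrable Y0 P) (hY1i : Integrable Y1 P)
    (hZb : ∀ ω, Z ω = 0 ∨ Z ω = 1)
    (hD0b : ∀ ω, D0 ω = 0 ∨ D0 ω = 1)
    (hD1b : ∀ ω, D1 ω = 0 ∨ D1 ω = 1)
    (hS0b : ∀ ω, S0 ω = 0 ∨ S0 ω = 1)
    (hS1b : ∀ ω, S1 ω = 0 ∨ S1 ω = 1)
    (hD : ∀ ω, D ω = Z ω * D1 ω + (1 - Z ω) * D0 ω)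
    (hS : ∀ ω, S ω = D ω * S1 ω + (1 - D ω) * S0 ω)
    (hY : ∀ ω, Y ω = D ω * Y1 ω + (1 - D ω) * Y0 ω)
    (hindep : IndepFun Z (fun ω => (D0 ω, D1 ω, S0 ω, S1 ω, Y0 ω, Y1 ω)) P)
    (hZpos : 0 < (P {ω | Z ω = 1}).toReal)
    (hZlt1 : (P {ω | Z ω = 1}).toReal < 1)
    (hmono : ∀ᵐ ω ∂P, D0 ω ≤ D1 ω)
    :
    (∫ ω in {ω | D1 ω = 1 ∧ D0 ω = 0}, Y1 ω * S1 ω ∂P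
      = (P {ω | Z ω = 1}).toReal⁻¹
          * ∫ ω in {ω | Z ω = 1}, D ω * S ω * Y ω ∂P
        - (P {ω | Z ω = 0}).toReal⁻¹
          * ∫ ω in {ω | Z ω = 0}, D ω * S ω * Y ω ∂P) ∧
    (∫ ω in {ω | D1 ω = 1 ∧ D0 ω = 0}, Y1 ω * S1 ω ∂P
      = cexp P {ω | Z ω = 1} (fun ω => D ω * S ω * Y ω)
        - cexp P {ω | Z ω = 0} (fun ω => D ω * S ω * Y ω)) ∧
    (∫ ω in {ω | D1 ω = 1 ∧ D0 ω = 0}, Y0 ω * S0 ω ∂P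
      = cexp P {ω | Z ω = 0} (fun ω => (1 - D ω) * S ω * Y ω)
        - cexp P {ω | Z ω = 1} (fun ω => (1 - D ω) * S ω * Y ω)) := by
  have hA1 : MeasurableSet {ω | Z ω = 1} := hZm (measurableSet_singleton 1)
  have hA0 : MeasurableSet {ω | Z ω = 0} := hZm (measurableSet_singleton 0)
  have hcm : MeasurableSet {ω | D1 ω = 1 ∧ D0 ω = 0} :=
    (hD1m (measurableSet_singleton 1)).inter (hD0m (measurableSet_singleton 0))
  -- probabilities
  set p1 := (P {ω | Z ω = 1}).toReal with hp1def
  have hsetc : {ω | Z ω = 0} = {ω | Z ω = 1}ᶜ := by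
    ext ω; rcases hZb ω with h | h <;> simp [h]
  have hp0 : (P {ω | Z ω = 0}).toReal = 1 - p1 := by
    rw [hsetc, prob_compl_eq_one_sub hA1,
      ENNReal.toReal_sub_of_le prob_le_one ENNReal.one_ne_top, ENNReal.toReal_one]
  have hp0pos : 0 < (P {ω | Z ω = 0}).toReal := by rw [hp0]; linarith
  -- boundedness facts
  have hbnd : ∀ a b : ℝ, (a = 0 ∨ a = 1) → (b = 0 ∨ b = 1) → ‖a * b‖ ≤ 1 := by
    rintro a b (rfl | rfl) (rfl | rfl) <;> norm_num
  have h1D0b : ∀ ω, (1 - D0 ω) = 0 ∨ (1 - D0 ω) = 1 := fun ω => by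
    rcases hD0b ω with h | h <;> simp [h]
  have h1D1b : ∀ ω, (1 - D1 ω) = 0 ∨ (1 - D1 ω) = 1 := fun ω => by
    rcases hD1b ω with h | h <;> simp [h]
  have h1Zb : ∀ ω, (1 - Z ω) = 0 ∨ (1 - Z ω) = 1 := fun ω => by
    rcases hZb ω with h | h <;> simp [h]
  -- integrability
  have hI1 : Integrable (fun ω => D1 ω * S1 ω * Y1 ω) P :=
    hY1i.bdd_mul ((hD1m.mul hS1m).aestronglyMeasurable)
      (Filter.Eventually.of_forall fun ω => hbnd _ _ (hD1b ω) (hS1b ω))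
  have hI0 : Integrable (fun ω => D0 ω * S1 ω * Y1 ω) P :=
    hY1i.bdd_mul ((hD0m.mul hS1m).aestronglyMeasurable)
      (Filter.Eventually.of_forall fun ω => hbnd _ _ (hD0b ω) (hS1b ω))
  have hJ0 : Integrable (fun ω => (1 - D0 ω) * S0 ω * Y0 ω) P :=
    hY0i.bdd_mul (((measurable_const.sub hD0m).mul hS0m).aestronglyMeasurable)
      (Filter.Eventually.of_forall fun ω => hbnd _ _ (h1D0b ω) (hS0b ω))
  have hJ1 : Integrable (fun ω => (1 - D1 ω) * S0 ω * Y0 ω) P :=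
    hY0i.bdd_mul (((measurable_const.sub hD1m).mul hS0m).aestronglyMeasurable)
      (Filter.Eventually.of_forall fun ω => hbnd _ _ (h1D1b ω) (hS0b ω))
  -- independence compositions
  have hψ1 : Measurable (fun w : ℝ × ℝ × ℝ × ℝ × ℝ × ℝ => w.2.1 * w.2.2.2.1 * w.2.2.2.2.2) := by
    fun_prop
  have hψ0 : Measurable (fun w : ℝ × ℝ × ℝ × ℝ × ℝ × ℝ => w.1 * w.2.2.2.1 * w.2.2.2.2.2) := by
    fun_prop
  have hφ1 : Measurable (fun w : ℝ × ℝ × ℝ × ℝ × ℝ × ℝ => (1 - w.2.1) * w.2.2.1 * w.2.2.2.2.1) := by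
    fun_prop
  have hφ0 : Measurable (fun w : ℝ × ℝ × ℝ × ℝ × ℝ × ℝ => (1 - w.1) * w.2.2.1 * w.2.2.2.2.1) := by
    fun_prop
  have hZ'm : Measurable (fun ω => 1 - Z ω) := measurable_const.sub hZm
  have hZ'set : {ω | 1 - Z ω = 1} = {ω | Z ω = 0} := by
    ext ω; constructor <;> (intro h; simp only [Set.mem_setOf_eq] at *; linarith)
  -- the four independence identities
  have key1 : ∫ ω, Z ω * (D1 ω * S1 ω * Y1 ω) ∂P
      = p1 * ∫ ω, D1 ω * S1 ω * Y1 ω ∂P :=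
    indicator_mul_key P (hindep.comp measurable_id hψ1) hZm hZb hI1
  have key0 : ∫ ω, (1 - Z ω) * (D0 ω * S1 ω * Y1 ω) ∂P
      = (P {ω | Z ω = 0}).toReal * ∫ ω, D0 ω * S1 ω * Y1 ω ∂P := by
    rw [← hZ'set]
    exact indicator_mul_key P
      (hindep.comp (measurable_const.sub measurable_id) hψ0) hZ'm h1Zb hI0
  have key1' : ∫ ω, Z ω * ((1 - D1 ω) * S0 ω * Y0 ω) ∂P
      = p1 * ∫ ω, (1 - D1 ω) * S0 ω * Y0 ω ∂P :=
    indicator_mul_key P (hindep.comp measurable_id hφ1) hZm hZb hJ1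
  have key0' : ∫ ω, (1 - Z ω) * ((1 - D0 ω) * S0 ω * Y0 ω) ∂P
      = (P {ω | Z ω = 0}).toReal * ∫ ω, (1 - D0 ω) * S0 ω * Y0 ω ∂P := by
    rw [← hZ'set]
    exact indicator_mul_key P
      (hindep.comp (measurable_const.sub measurable_id) hφ0) hZ'm h1Zb hJ0
  -- pointwise identities for the observed-arm integrands
  have e1 : ∀ ω, ({ω | Z ω = 1}).indicator (fun ω => D ω * S ω * Y ω) ω
      = Z ω * (D1 ω * S1 ω * Y1 ω) := by
    intro ω
    rcases hZb ω with hz | hz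
    · rw [Set.indicator_of_notMem (by simp [Set.mem_setOf_eq, hz] : ω ∉ {ω | Z ω = 1})]
      rw [hz]; ring
    · rw [Set.indicator_of_mem (s := {ω | Z ω = 1}) hz]
      have hd : D ω = D1 ω := by rw [hD ω, hz]; ring
      rcases hD1b ω with h1 | h1
      · rw [hd, h1, hz]; ring
      · have hdω : D ω = 1 := by rw [hd, h1]
        have hs : S ω = S1 ω := by rw [hS ω, hdω]; ring
        have hy : Y ω = Y1 ω := by rw [hY ω, hdω]; ring
        rw [hdω, hs, hy, hz, h1]; ring
  have e0 : ∀ ω, ({ω | Z ω = 0}).indicator (fun ω => D ω * S ω * Y ω) ω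
      = (1 - Z ω) * (D0 ω * S1 ω * Y1 ω) := by
    intro ω
    rcases hZb ω with hz | hz
    · rw [Set.indicator_of_mem (s := {ω | Z ω = 0}) hz]
      have hd : D ω = D0 ω := by rw [hD ω, hz]; ring
      rcases hD0b ω with h0 | h0
      · rw [hd, h0, hz]; ring
      · have hdω : D ω = 1 := by rw [hd, h0]
        have hs : S ω = S1 ω := by rw [hS ω, hdω]; ring
        have hy : Y ω = Y1 ω := by rw [hY ω, hdω]; ring
        rw [hdω, hs, hy, hz, h0]; ring
    · rw [Set.indicator_of_notMem (by simp [Set.mem_setOf_eq, hz] : ω ∉ {ω | Z ω = 0})]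
      rw [hz]; ring
  have f1 : ∀ ω, ({ω | Z ω = 1}).indicator (fun ω => (1 - D ω) * S ω * Y ω) ω
      = Z ω * ((1 - D1 ω) * S0 ω * Y0 ω) := by
    intro ω
    rcases hZb ω with hz | hz
    · rw [Set.indicator_of_notMem (by simp [Set.mem_setOf_eq, hz] : ω ∉ {ω | Z ω = 1})]
      rw [hz]; ring
    · rw [Set.indicator_of_mem (s := {ω | Z ω = 1}) hz]
      have hd : D ω = D1 ω := by rw [hD ω, hz]; ring
      rcases hD1b ω with h1 | h1
      · have hdω : D ω = 0 := by rw [hd, h1]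
        have hs : S ω = S0 ω := by rw [hS ω, hdω]; ring
        have hy : Y ω = Y0 ω := by rw [hY ω, hdω]; ring
        rw [hdω, hs, hy, hz, h1]; ring
      · rw [hd, h1, hz]; ring
  have f0 : ∀ ω, ({ω | Z ω = 0}).indicator (fun ω => (1 - D ω) * S ω * Y ω) ω
      = (1 - Z ω) * ((1 - D0 ω) * S0 ω * Y0 ω) := by
    intro ω
    rcases hZb ω with hz | hz
    · rw [Set.indicator_of_mem (s := {ω | Z ω = 0}) hz]
      have hd : D ω = D0 ω := by rw [hD ω, hz]; ring
      rcases hD0b ω with h0 | h0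
      · have hdω : D ω = 0 := by rw [hd, h0]
        have hs : S ω = S0 ω := by rw [hS ω, hdω]; ring
        have hy : Y ω = Y0 ω := by rw [hY ω, hdω]; ring
        rw [hdω, hs, hy, hz, h0]; ring
      · rw [hd, h0, hz]; ring
    · rw [Set.indicator_of_notMem (by simp [Set.mem_setOf_eq, hz] : ω ∉ {ω | Z ω = 0})]
      rw [hz]; ring
  -- observed-arm set integrals
  have E1 : ∫ ω in {ω | Z ω = 1}, D ω * S ω * Y ω ∂P
      = p1 * ∫ ω, D1 ω * S1 ω * Y1 ω ∂P := by
    rw [← integral_indicator hA1,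
      integral_congr_ae (Filter.Eventually.of_forall e1), key1]
  have E0 : ∫ ω in {ω | Z ω = 0}, D ω * S ω * Y ω ∂P
      = (P {ω | Z ω = 0}).toReal * ∫ ω, D0 ω * S1 ω * Y1 ω ∂P := by
    rw [← integral_indicator hA0,
      integral_congr_ae (Filter.Eventually.of_forall e0), key0]
  have F1 : ∫ ω in {ω | Z ω = 1}, (1 - D ω) * S ω * Y ω ∂P
      = p1 * ∫ ω, (1 - D1 ω) * S0 ω * Y0 ω ∂P := by
    rw [← integral_indicator hA1,
      integral_congr_ae (Filter.Eventually.of_forall f1), key1']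
  have F0 : ∫ ω in {ω | Z ω = 0}, (1 - D ω) * S ω * Y ω ∂P
      = (P {ω | Z ω = 0}).toReal * ∫ ω, (1 - D0 ω) * S0 ω * Y0 ω ∂P := by
    rw [← integral_indicator hA0,
      integral_congr_ae (Filter.Eventually.of_forall f0), key0']
  -- complier-side identities
  have hc1 : ∫ ω in {ω | D1 ω = 1 ∧ D0 ω = 0}, Y1 ω * S1 ω ∂P
      = (∫ ω, D1 ω * S1 ω * Y1 ω ∂P) - ∫ ω, D0 ω * S1 ω * Y1 ω ∂P := by
    have hae : (fun ω => ({ω | D1 ω = 1 ∧ D0 ω = 0}).indicator (fun ω => Y1 ω * S1 ω) ω)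
        =ᵐ[P] fun ω => D1 ω * S1 ω * Y1 ω - D0 ω * S1 ω * Y1 ω := by
      filter_upwards [hmono] with ω hle
      rcases hD1b ω with h1 | h1 <;> rcases hD0b ω with h0 | h0
      · rw [Set.indicator_of_notMem (s := {ω | D1 ω = 1 ∧ D0 ω = 0}) (by simp [Set.mem_setOf_eq, h1])]
        rw [h1, h0]; ring
      · exfalso; rw [h1, h0] at hle; linarith
      · rw [Set.indicator_of_mem (s := {ω | D1 ω = 1 ∧ D0 ω = 0}) ⟨h1, h0⟩]
        rw [h1, h0]; ring
      · rw [Set.indicator_of_notMem (s := {ω | D1 ω = 1 ∧ D0 ω = 0}) (by simp [Set.mem_setOf_eq, h0])]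
        rw [h1, h0]; ring
    rw [← integral_indicator hcm, integral_congr_ae hae, integral_sub hI1 hI0]
  have hc0 : ∫ ω in {ω | D1 ω = 1 ∧ D0 ω = 0}, Y0 ω * S0 ω ∂P
      = (∫ ω, (1 - D0 ω) * S0 ω * Y0 ω ∂P) - ∫ ω, (1 - D1 ω) * S0 ω * Y0 ω ∂P := by
    have hae : (fun ω => ({ω | D1 ω = 1 ∧ D0 ω = 0}).indicator (fun ω => Y0 ω * S0 ω) ω)
        =ᵐ[P] fun ω => (1 - D0 ω) * S0 ω * Y0 ω - (1 - D1 ω) * S0 ω * Y0 ω := by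
      filter_upwards [hmono] with ω hle
      rcases hD1b ω with h1 | h1 <;> rcases hD0b ω with h0 | h0
      · rw [Set.indicator_of_notMem (s := {ω | D1 ω = 1 ∧ D0 ω = 0}) (by simp [Set.mem_setOf_eq, h1])]
        rw [h1, h0]; ring
      · exfalso; rw [h1, h0] at hle; linarith
      · rw [Set.indicator_of_mem (s := {ω | D1 ω = 1 ∧ D0 ω = 0}) ⟨h1, h0⟩]
        rw [h1, h0]; ring
      · rw [Set.indicator_of_notMem (s := {ω | D1 ω = 1 ∧ D0 ω = 0}) (by simp [Set.mem_setOf_eq, h0])]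
        rw [h1, h0]; ring
    rw [← integral_indicator hcm, integral_congr_ae hae, integral_sub hJ0 hJ1]
  -- conclude
  have hp1ne : p1 ≠ 0 := ne_of_gt hZpos
  have hp0ne : (P {ω | Z ω = 0}).toReal ≠ 0 := ne_of_gt hp0pos
  refine ⟨?_, ?_, ?_⟩
  · rw [hc1, E1, E0, inv_mul_cancel_left₀ hp1ne, inv_mul_cancel_left₀ hp0ne]
  · simp only [cexp]
    rw [hc1, E1, E0, mul_div_cancel_left₀ _ hp1ne, mul_div_cancel_left₀ _ hp0ne]
  · simp only [cexp]
    rw [hc0, F1, F0, mul_div_cancel_left₀ _ hp1ne, mul_div_cancel_left₀ _ hp0ne]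
end

section
/- (Theorem 1, treated-arm part, no missingness.) Under randomization, monotonicity, relevance and principal ignorability, if P(cl) > 0, P(cp) > 0, P(ch) > 0 and P(c ∩ {S₁=1}) > 0, then the mean potential outcome under treatment among survived compliers is nonparametrically identified: E[Y₁ | cl] = (E[D·S·Y | Z=1] − E[D·S·Y | Z=0]) / (E[D·S | Z=1] − E[D·S | Z=0]), and the denominator is strictly positive. -/
open MeasureTheory ProbabilityTheory

variable {Ω : Type*} [MeasurableSpace Ω]

/-- Theorem 1, treated-arm part, no missingness: Under randomization, monotonicity, relevance and principal ignorability, if `P(cl) > 0`, `P(cp) > 0`, `P(ch) > 0` and `P(c ∩ {S₁=1}) > 0`, then `E[Y₁ | cl] = (E[D·S·Y | Z=1] − E[D·S·Y | Z=0]) / (E[D·S | Z=1] − E[D·S | Z=0])` and the denominator is strictly positive. -/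
theorem stmt_9
    (P : Measure Ω) [IsProbabilityMeasure P]
    (Z D0 D1 S0 S1 Y0 Y1 D S Y : Ω → ℝ)
    (hZm : Measurable Z) (hD0m : Measurable D0) (hD1m : Measurable D1)
    (hS0m : Measurable S0) (hS1m : Measurable S1)
    (hY0i : Integrable Y0 P) (hY1i : Integrable Y1 P)
    (hZb : ∀ ω, Z ω = 0 ∨ Z ω = 1)
    (hD0b : ∀ ω, D0 ω = 0 ∨ D0 ω = 1)
    (hD1b : ∀ ω, D1 ω = 0 ∨ D1 ω = 1)
    (hS0b : ∀ ω, S0 ω = 0 ∨ S0 ω = 1)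
    (hS1b : ∀ ω, S1 ω = 0 ∨ S1 ω = 1)
    (hD : ∀ ω, D ω = Z ω * D1 ω + (1 - Z ω) * D0 ω)
    (hS : ∀ ω, S ω = D ω * S1 ω + (1 - D ω) * S0 ω)
    (hY : ∀ ω, Y ω = D ω * Y1 ω + (1 - D ω) * Y0 ω)
    (hindep : IndepFun Z (fun ω => (D0 ω, D1 ω, S0 ω, S1 ω, Y0 ω, Y1 ω)) P)
    (hZpos : 0 < (P {ω | Z ω = 1}).toReal)
    (hZlt1 : (P {ω | Z ω = 1}).toReal < 1)
    (hmono : ∀ᵐ ω ∂P, D0 ω ≤ D1 ω)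
    (hrel : ∫ ω, D1 ω ∂P ≠ ∫ ω, D0 ω ∂P)
    (hclpos : 0 < (P {ω | D1 ω = 1 ∧ D0 ω = 0 ∧ S1 ω = 1 ∧ S0 ω = 1}).toReal)
    (hcppos : 0 < (P {ω | D1 ω = 1 ∧ D0 ω = 0 ∧ S1 ω = 1 ∧ S0 ω = 0}).toReal)
    (hchpos : 0 < (P {ω | D1 ω = 1 ∧ D0 ω = 0 ∧ S1 ω = 0 ∧ S0 ω = 1}).toReal)
    (hPI1 : cexp P {ω | D1 ω = 1 ∧ D0 ω = 0 ∧ S1 ω = 1 ∧ S0 ω = 1} Y1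
      = cexp P {ω | D1 ω = 1 ∧ D0 ω = 0 ∧ S1 ω = 1 ∧ S0 ω = 0} Y1)
    (hPI0 : cexp P {ω | D1 ω = 1 ∧ D0 ω = 0 ∧ S1 ω = 1 ∧ S0 ω = 1} Y0
      = cexp P {ω | D1 ω = 1 ∧ D0 ω = 0 ∧ S1 ω = 0 ∧ S0 ω = 1} Y0)
    (hcS1pos : 0 < (P ({ω | D1 ω = 1 ∧ D0 ω = 0} ∩ {ω | S1 ω = 1})).toReal)
    :
    0 < cexp P {ω | Z ω = 1} (fun ω => D ω * S ω)
        - cexp P {ω | Z ω = 0} (fun ω => D ω * S ω) ∧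
    cexp P {ω | D1 ω = 1 ∧ D0 ω = 0 ∧ S1 ω = 1 ∧ S0 ω = 1} Y1
      = (cexp P {ω | Z ω = 1} (fun ω => D ω * S ω * Y ω)
          - cexp P {ω | Z ω = 0} (fun ω => D ω * S ω * Y ω))
        / (cexp P {ω | Z ω = 1} (fun ω => D ω * S ω)
            - cexp P {ω | Z ω = 0} (fun ω => D ω * S ω)) := by
  classical
  have hA1 : MeasurableSet {ω | Z ω = 1} := hZm (measurableSet_singleton 1)
  have hA0 : MeasurableSet {ω | Z ω = 0} := hZm (measurableSet_singleton 0)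
  set U : Set Ω := {ω | D1 ω = 1 ∧ D0 ω = 0} ∩ {ω | S1 ω = 1} with hUdef
  have hUm : MeasurableSet U :=
    ((hD1m (measurableSet_singleton 1)).inter (hD0m (measurableSet_singleton 0))).inter
      (hS1m (measurableSet_singleton 1))
  have hbint : ∀ (f : Ω → ℝ), Measurable f → (∀ ω, |f ω| ≤ 1) → Integrable f P := by
    intro f hf hb
    exact ⟨hf.aestronglyMeasurable,
      HasFiniteIntegral.of_bounded (C := 1) (ae_of_all _ (by simpa using hb))⟩
  have habs : ∀ (f : Ω → ℝ), (∀ ω, f ω = 0 ∨ f ω = 1) → ∀ ω, |f ω| ≤ 1 := by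
    intro f hf ω; rcases hf ω with h | h <;> simp [h]
  have iZ : Integrable Z P := hbint Z hZm (habs Z hZb)
  have hV1b : ∀ ω, D1 ω * S1 ω = 0 ∨ D1 ω * S1 ω = 1 := fun ω => by
    rcases hD1b ω with h | h <;> rcases hS1b ω with h' | h' <;> simp [h, h']
  have hV0b : ∀ ω, D0 ω * S1 ω = 0 ∨ D0 ω * S1 ω = 1 := fun ω => by
    rcases hD0b ω with h | h <;> rcases hS1b ω with h' | h' <;> simp [h, h']
  have iV1 : Integrable (fun ω => D1 ω * S1 ω) P :=
    hbint _ (hD1m.mul hS1m) (habs _ hV1b)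
  have iV0 : Integrable (fun ω => D0 ω * S1 ω) P :=
    hbint _ (hD0m.mul hS1m) (habs _ hV0b)
  have iW1 : Integrable (fun ω => D1 ω * S1 ω * Y1 ω) P :=
    hY1i.bdd_mul (hD1m.mul hS1m).aestronglyMeasurable
      (c := 1) (ae_of_all _ fun ω => by rw [Real.norm_eq_abs]; exact habs _ hV1b ω)
  have iW0 : Integrable (fun ω => D0 ω * S1 ω * Y1 ω) P :=
    hY1i.bdd_mul (hD0m.mul hS1m).aestronglyMeasurable
      (c := 1) (ae_of_all _ fun ω => by rw [Real.norm_eq_abs]; exact habs _ hV0b ω)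
  have indV1 : IndepFun Z (fun ω => D1 ω * S1 ω) P :=
    hindep.comp measurable_id
      (show Measurable fun p : ℝ × ℝ × ℝ × ℝ × ℝ × ℝ => p.2.1 * p.2.2.2.1 by fun_prop)
  have indV0 : IndepFun Z (fun ω => D0 ω * S1 ω) P :=
    hindep.comp measurable_id
      (show Measurable fun p : ℝ × ℝ × ℝ × ℝ × ℝ × ℝ => p.1 * p.2.2.2.1 by fun_prop)
  have indW1 : IndepFun Z (fun ω => D1 ω * S1 ω * Y1 ω) P :=
    hindep.comp measurable_id
      (show Measurable fun p : ℝ × ℝ × ℝ × ℝ × ℝ × ℝ => p.2.1 * p.2.2.2.1 * p.2.2.2.2.2 by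
        fun_prop)
  have indW0 : IndepFun Z (fun ω => D0 ω * S1 ω * Y1 ω) P :=
    hindep.comp measurable_id
      (show Measurable fun p : ℝ × ℝ × ℝ × ℝ × ℝ × ℝ => p.1 * p.2.2.2.1 * p.2.2.2.2.2 by
        fun_prop)
  have hZint : ∫ ω, Z ω ∂P = (P {ω | Z ω = 1}).toReal := by
    have h : ∀ ω, Z ω = Set.indicator {ω | Z ω = 1} (fun _ => (1 : ℝ)) ω := by
      intro ω; rcases hZb ω with h | h <;> simp [Set.indicator_apply, h]
    rw [integral_congr_ae (ae_of_all _ h), integral_indicator hA1]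
    simp [measureReal_def]
  have key1 : ∀ (W L : Ω → ℝ), Integrable L P → IndepFun Z L P →
      (∀ ω, Z ω = 1 → W ω = L ω) →
      ∫ ω in {ω | Z ω = 1}, W ω ∂P = (P {ω | Z ω = 1}).toReal * ∫ ω, L ω ∂P := by
    intro W L hL hind hW
    have h1 : ∀ ω, Set.indicator {ω | Z ω = 1} W ω = Z ω * L ω := by
      intro ω
      rcases hZb ω with h | h
      · simp [Set.indicator_apply, h]
      · simp [Set.indicator_apply, h, hW ω h]
    rw [← integral_indicator hA1]
    calc ∫ ω, Set.indicator {ω | Z ω = 1} W ω ∂P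
        = ∫ ω, Z ω * L ω ∂P := by simp only [h1]
      _ = (∫ ω, Z ω ∂P) * ∫ ω, L ω ∂P := hind.integral_mul_eq_mul_integral iZ.aestronglyMeasurable hL.aestronglyMeasurable
      _ = (P {ω | Z ω = 1}).toReal * ∫ ω, L ω ∂P := by rw [hZint]
  have key0 : ∀ (W L : Ω → ℝ), Integrable L P → IndepFun Z L P →
      (∀ ω, Z ω = 0 → W ω = L ω) →
      ∫ ω in {ω | Z ω = 0}, W ω ∂P
        = (1 - (P {ω | Z ω = 1}).toReal) * ∫ ω, L ω ∂P := by
    intro W L hL hind hW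
    have iZL : Integrable (fun ω => Z ω * L ω) P :=
      hL.bdd_mul hZm.aestronglyMeasurable
        (c := 1) (ae_of_all _ fun ω => by rw [Real.norm_eq_abs]; exact habs Z hZb ω)
    have h1 : ∀ ω, Set.indicator {ω | Z ω = 0} W ω = L ω - Z ω * L ω := by
      intro ω
      rcases hZb ω with h | h
      · simp [Set.indicator_apply, h, hW ω h]
      · simp [Set.indicator_apply, h]
    rw [← integral_indicator hA0]
    calc ∫ ω, Set.indicator {ω | Z ω = 0} W ω ∂P
        = ∫ ω, (L ω - Z ω * L ω) ∂P := by simp only [h1]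
      _ = (∫ ω, L ω ∂P) - ∫ ω, Z ω * L ω ∂P := integral_sub hL iZL
      _ = (∫ ω, L ω ∂P) - (∫ ω, Z ω ∂P) * ∫ ω, L ω ∂P := by
          rw [show (∫ ω, Z ω * L ω ∂P) = (∫ ω, Z ω ∂P) * ∫ ω, L ω ∂P from
            hind.integral_mul_eq_mul_integral iZ.aestronglyMeasurable hL.aestronglyMeasurable]
      _ = (1 - (P {ω | Z ω = 1}).toReal) * ∫ ω, L ω ∂P := by rw [hZint]; ring
  -- pointwise identifications of observed products
  have pw1 : ∀ ω, Z ω = 1 → D ω * S ω = D1 ω * S1 ω := by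
    intro ω hz
    rcases hD1b ω with h1 | h1 <;> simp [hS ω, hD ω, hz, h1] <;> ring
  have pw0 : ∀ ω, Z ω = 0 → D ω * S ω = D0 ω * S1 ω := by
    intro ω hz
    rcases hD0b ω with h0 | h0 <;> simp [hS ω, hD ω, hz, h0] <;> ring
  have pw1y : ∀ ω, Z ω = 1 → D ω * S ω * Y ω = D1 ω * S1 ω * Y1 ω := by
    intro ω hz
    rcases hD1b ω with h1 | h1 <;> simp [hY ω, hS ω, hD ω, hz, h1] <;> ring
  have pw0y : ∀ ω, Z ω = 0 → D ω * S ω * Y ω = D0 ω * S1 ω * Y1 ω := by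
    intro ω hz
    rcases hD0b ω with h0 | h0 <;> simp [hY ω, hS ω, hD ω, hz, h0] <;> ring
  have hPZne : (P {ω | Z ω = 1}).toReal ≠ 0 := ne_of_gt hZpos
  have hPZne' : 1 - (P {ω | Z ω = 1}).toReal ≠ 0 := by linarith
  have hP0 : (P {ω | Z ω = 0}).toReal = 1 - (P {ω | Z ω = 1}).toReal := by
    have hc : {ω | Z ω = 0} = {ω | Z ω = 1}ᶜ := by
      ext ω; rcases hZb ω with h | h <;> simp [h]
    rw [hc, measure_compl hA1 (measure_ne_top _ _), measure_univ,
      ENNReal.toReal_sub_of_le prob_le_one ENNReal.one_ne_top]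
    simp
  -- conditional expectations in terms of latent integrals
  have den1 : cexp P {ω | Z ω = 1} (fun ω => D ω * S ω) = ∫ ω, D1 ω * S1 ω ∂P := by
    rw [show ∀ A X, cexp P A X = (∫ ω in A, X ω ∂P) / (P A).toReal from fun _ _ => rfl, key1 _ _ iV1 indV1 pw1, mul_div_cancel_left₀ _ hPZne]
  have den0 : cexp P {ω | Z ω = 0} (fun ω => D ω * S ω) = ∫ ω, D0 ω * S1 ω ∂P := by
    rw [show ∀ A X, cexp P A X = (∫ ω in A, X ω ∂P) / (P A).toReal from fun _ _ => rfl, key0 _ _ iV0 indV0 pw0, hP0, mul_div_cancel_left₀ _ hPZne']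
  have num1 : cexp P {ω | Z ω = 1} (fun ω => D ω * S ω * Y ω)
      = ∫ ω, D1 ω * S1 ω * Y1 ω ∂P := by
    rw [show ∀ A X, cexp P A X = (∫ ω in A, X ω ∂P) / (P A).toReal from fun _ _ => rfl, key1 _ _ iW1 indW1 pw1y, mul_div_cancel_left₀ _ hPZne]
  have num0 : cexp P {ω | Z ω = 0} (fun ω => D ω * S ω * Y ω)
      = ∫ ω, D0 ω * S1 ω * Y1 ω ∂P := by
    rw [show ∀ A X, cexp P A X = (∫ ω in A, X ω ∂P) / (P A).toReal from fun _ _ => rfl, key0 _ _ iW0 indW0 pw0y, hP0, mul_div_cancel_left₀ _ hPZne']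
  -- the two differences
  have hdiffden : (∫ ω, D1 ω * S1 ω ∂P) - ∫ ω, D0 ω * S1 ω ∂P = (P U).toReal := by
    rw [← integral_sub iV1 iV0]
    have hae : ∀ᵐ ω ∂P, D1 ω * S1 ω - D0 ω * S1 ω
        = Set.indicator U (fun _ => (1 : ℝ)) ω := by
      filter_upwards [hmono] with ω hm
      by_cases hU : ω ∈ U
      · obtain ⟨⟨e1, e0⟩, es⟩ := hU
        have hU' : ω ∈ U := ⟨⟨e1, e0⟩, es⟩
        rw [Set.indicator_of_mem hU', e1, e0, es]; ring
      · rw [Set.indicator_of_notMem hU]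
        rcases hD1b ω with h1 | h1 <;> rcases hD0b ω with h0 | h0 <;>
          rcases hS1b ω with hs | hs <;>
          first
            | (exact absurd (⟨⟨h1, h0⟩, hs⟩ : ω ∈ U) hU)
            | (exfalso; rw [h1, h0] at hm; linarith)
            | (rw [h1, h0, hs]; ring)
    rw [integral_congr_ae hae, integral_indicator hUm]
    simp [measureReal_def]
  have hdiffnum : (∫ ω, D1 ω * S1 ω * Y1 ω ∂P) - ∫ ω, D0 ω * S1 ω * Y1 ω ∂P
      = ∫ ω in U, Y1 ω ∂P := by
    rw [← integral_sub iW1 iW0]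
    have hae : ∀ᵐ ω ∂P, D1 ω * S1 ω * Y1 ω - D0 ω * S1 ω * Y1 ω
        = Set.indicator U Y1 ω := by
      filter_upwards [hmono] with ω hm
      by_cases hU : ω ∈ U
      · obtain ⟨⟨e1, e0⟩, es⟩ := hU
        have hU' : ω ∈ U := ⟨⟨e1, e0⟩, es⟩
        rw [Set.indicator_of_mem hU', e1, e0, es]; ring
      · rw [Set.indicator_of_notMem hU]
        rcases hD1b ω with h1 | h1 <;> rcases hD0b ω with h0 | h0 <;>
          rcases hS1b ω with hs | hs <;>
          first
            | (exact absurd (⟨⟨h1, h0⟩, hs⟩ : ω ∈ U) hU)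
            | (exfalso; rw [h1, h0] at hm; linarith)
            | (rw [h1, h0, hs]; ring)
    rw [integral_congr_ae hae, integral_indicator hUm]
  -- splitting U into survived and protected compliers
  set Acl : Set Ω := {ω | D1 ω = 1 ∧ D0 ω = 0 ∧ S1 ω = 1 ∧ S0 ω = 1} with hAdef
  set Bcp : Set Ω := {ω | D1 ω = 1 ∧ D0 ω = 0 ∧ S1 ω = 1 ∧ S0 ω = 0} with hBdef
  have hBm : MeasurableSet Bcp := by
    have : Bcp = ({ω | D1 ω = 1} ∩ ({ω | D0 ω = 0} ∩ ({ω | S1 ω = 1} ∩ {ω | S0 ω = 0}))) := by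
      ext ω; simp [hBdef, Set.mem_setOf_eq]
    rw [this]
    exact (hD1m (measurableSet_singleton 1)).inter ((hD0m (measurableSet_singleton 0)).inter
      ((hS1m (measurableSet_singleton 1)).inter (hS0m (measurableSet_singleton 0))))
  have hUAB : U = Acl ∪ Bcp := by
    ext ω
    rcases hS0b ω with h | h <;>
      simp [hUdef, hAdef, hBdef, Set.mem_setOf_eq, h] <;> tauto
  have hdisj : Disjoint Acl Bcp := by
    rw [Set.disjoint_left]
    intro ω hA hB
    have h1 : S0 ω = 1 := hA.2.2.2
    have h0 : S0 ω = 0 := hB.2.2.2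
    rw [h1] at h0; norm_num at h0
  have hPU : (P U).toReal = (P Acl).toReal + (P Bcp).toReal := by
    rw [hUAB, measure_union hdisj hBm,
      ENNReal.toReal_add (measure_ne_top _ _) (measure_ne_top _ _)]
  have hintU : ∫ ω in U, Y1 ω ∂P = (∫ ω in Acl, Y1 ω ∂P) + ∫ ω in Bcp, Y1 ω ∂P := by
    rw [hUAB]
    exact setIntegral_union hdisj hBm hY1i.integrableOn hY1i.integrableOn
  have hAint : ∫ ω in Acl, Y1 ω ∂P = cexp P Acl Y1 * (P Acl).toReal := by
    rw [show ∀ A X, cexp P A X = (∫ ω in A, X ω ∂P) / (P A).toReal from fun _ _ => rfl, div_mul_cancel₀ _ (ne_of_gt hclpos)]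
  have hBint : ∫ ω in Bcp, Y1 ω ∂P = cexp P Acl Y1 * (P Bcp).toReal := by
    rw [hPI1, cexp, div_mul_cancel₀ _ (ne_of_gt hcppos)]
  have hUcexp : (∫ ω in U, Y1 ω ∂P) / (P U).toReal = cexp P Acl Y1 := by
    rw [hintU, hPU, hAint, hBint, ← mul_add, mul_div_assoc,
      div_self (by positivity), mul_one]
  refine ⟨by rw [den1, den0, hdiffden]; exact hcS1pos, ?_⟩
  rw [den1, den0, num1, num0, hdiffden, hdiffnum, hUcexp]
end

section
/- (Theorem 1, control-arm part, no missingness.) Under randomization, monotonicity, relevance and principal ignorability, if P(cl) > 0, P(cp) > 0, P(ch) > 0 and P(c ∩ {S₀=1}) > 0, then the mean potential outcome under control among survived compliers is nonparametrically identified: E[Y₀ | cl] = (E[(1−D)·S·Y | Z=0] − E[(1−D)·S·Y | Z=1]) / (E[(1−D)·S | Z=0] − E[(1−D)·S | Z=1]), and the denominator is strictly positive. -/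
open MeasureTheory ProbabilityTheory

variable {Ω : Type*} [MeasurableSpace Ω]

/-- Theorem 1, control-arm part, no missingness: Under randomization, monotonicity, relevance and principal ignorability, if `P(cl) > 0`, `P(cp) > 0`, `P(ch) > 0` and `P(c ∩ {S₀=1}) > 0`, then `E[Y₀ | cl] = (E[(1−D)·S·Y | Z=0] − E[(1−D)·S·Y | Z=1]) / (E[(1−D)·S | Z=0] − E[(1−D)·S | Z=1])` and the denominator is strictly positive. -/
theorem stmt_10
    (P : Measure Ω) [IsProbabilityMeasure P]
    (Z D0 D1 S0 S1 Y0 Y1 D S Y : Ω → ℝ)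
    (hZm : Measurable Z) (hD0m : Measurable D0) (hD1m : Measurable D1)
    (hS0m : Measurable S0) (hS1m : Measurable S1)
    (hY0i : Integrable Y0 P) (hY1i : Integrable Y1 P)
    (hZb : ∀ ω, Z ω = 0 ∨ Z ω = 1)
    (hD0b : ∀ ω, D0 ω = 0 ∨ D0 ω = 1)
    (hD1b : ∀ ω, D1 ω = 0 ∨ D1 ω = 1)
    (hS0b : ∀ ω, S0 ω = 0 ∨ S0 ω = 1)
    (hS1b : ∀ ω, S1 ω = 0 ∨ S1 ω = 1)
    (hD : ∀ ω, D ω = Z ω * D1 ω + (1 - Z ω) * D0 ω)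
    (hS : ∀ ω, S ω = D ω * S1 ω + (1 - D ω) * S0 ω)
    (hY : ∀ ω, Y ω = D ω * Y1 ω + (1 - D ω) * Y0 ω)
    (hindep : IndepFun Z (fun ω => (D0 ω, D1 ω, S0 ω, S1 ω, Y0 ω, Y1 ω)) P)
    (hZpos : 0 < (P {ω | Z ω = 1}).toReal)
    (hZlt1 : (P {ω | Z ω = 1}).toReal < 1)
    (hmono : ∀ᵐ ω ∂P, D0 ω ≤ D1 ω)
    (hrel : ∫ ω, D1 ω ∂P ≠ ∫ ω, D0 ω ∂P)
    (hclpos : 0 < (P {ω | D1 ω = 1 ∧ D0 ω = 0 ∧ S1 ω = 1 ∧ S0 ω = 1}).toReal)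
    (hcppos : 0 < (P {ω | D1 ω = 1 ∧ D0 ω = 0 ∧ S1 ω = 1 ∧ S0 ω = 0}).toReal)
    (hchpos : 0 < (P {ω | D1 ω = 1 ∧ D0 ω = 0 ∧ S1 ω = 0 ∧ S0 ω = 1}).toReal)
    (hPI1 : cexp P {ω | D1 ω = 1 ∧ D0 ω = 0 ∧ S1 ω = 1 ∧ S0 ω = 1} Y1
      = cexp P {ω | D1 ω = 1 ∧ D0 ω = 0 ∧ S1 ω = 1 ∧ S0 ω = 0} Y1)
    (hPI0 : cexp P {ω | D1 ω = 1 ∧ D0 ω = 0 ∧ S1 ω = 1 ∧ S0 ω = 1} Y0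
      = cexp P {ω | D1 ω = 1 ∧ D0 ω = 0 ∧ S1 ω = 0 ∧ S0 ω = 1} Y0)
    (hcS0pos : 0 < (P ({ω | D1 ω = 1 ∧ D0 ω = 0} ∩ {ω | S0 ω = 1})).toReal)
    :
    0 < cexp P {ω | Z ω = 0} (fun ω => (1 - D ω) * S ω)
        - cexp P {ω | Z ω = 1} (fun ω => (1 - D ω) * S ω) ∧
    cexp P {ω | D1 ω = 1 ∧ D0 ω = 0 ∧ S1 ω = 1 ∧ S0 ω = 1} Y0
      = (cexp P {ω | Z ω = 0} (fun ω => (1 - D ω) * S ω * Y ω)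
          - cexp P {ω | Z ω = 1} (fun ω => (1 - D ω) * S ω * Y ω))
        / (cexp P {ω | Z ω = 0} (fun ω => (1 - D ω) * S ω)
            - cexp P {ω | Z ω = 1} (fun ω => (1 - D ω) * S ω)) := by
  classical
  set W : Ω → ℝ × ℝ × ℝ × ℝ × ℝ × ℝ := fun ω => (D0 ω, D1 ω, S0 ω, S1 ω, Y0 ω, Y1 ω) with hWdef
  -- key independence lemma
  have key : ∀ g : ℝ × ℝ × ℝ × ℝ × ℝ × ℝ → ℝ, Measurable g →
      Integrable (fun ω => g (W ω)) P → ∀ z : ℝ,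
      ∫ ω in {ω | Z ω = z}, g (W ω) ∂P
        = (P {ω | Z ω = z}).toReal * ∫ ω, g (W ω) ∂P := by
    intro g hg hgi z
    have hA : MeasurableSet {ω | Z ω = z} := hZm (measurableSet_singleton z)
    have hsi : IndepFun (fun ω => Set.indicator ({z} : Set ℝ) (fun _ => (1:ℝ)) (Z ω))
        (fun ω => g (W ω)) P :=
      hindep.comp (measurable_const.indicator (measurableSet_singleton z)) hg
    have heq : (fun ω => Set.indicator ({z} : Set ℝ) (fun _ => (1:ℝ)) (Z ω))
        = Set.indicator {ω | Z ω = z} (fun _ => (1:ℝ)) := by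
      funext ω; by_cases h : Z ω = z <;> simp [Set.indicator, h]
    rw [heq] at hsi
    have hii : Integrable (Set.indicator {ω | Z ω = z} (fun _ => (1:ℝ))) P :=
      (integrable_const (1:ℝ)).indicator hA
    have hmul := hsi.integral_mul_eq_mul_integral hii.aestronglyMeasurable hgi.aestronglyMeasurable
    have h2 : (Set.indicator {ω | Z ω = z} (fun _ => (1:ℝ)) * fun ω => g (W ω))
        = Set.indicator {ω | Z ω = z} (fun ω => g (W ω)) := by
      funext ω; by_cases h : ω ∈ {ω | Z ω = z} <;>
        simp [Set.indicator, h]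
    rw [h2, integral_indicator hA] at hmul
    rw [hmul, integral_indicator_const (1:ℝ) hA]
    simp [mul_comm, measureReal_def]
  -- binarity of D and arm-wise formulas
  have hDb : ∀ ω, D ω = 0 ∨ D ω = 1 := by
    intro ω
    rcases hZb ω with h | h <;> rw [hD ω, h] <;> simp [hD0b ω, hD1b ω]
  have hDS : ∀ ω, (1 - D ω) * S ω = (1 - D ω) * S0 ω := by
    intro ω
    rcases hDb ω with h | h <;> rw [hS ω, h] <;> ring
  have hDSY : ∀ ω, (1 - D ω) * S ω * Y ω = (1 - D ω) * S0 ω * Y0 ω := by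
    intro ω
    rcases hDb ω with h | h <;> rw [hS ω, hY ω, h] <;> ring
  have hDz : ∀ ω, (Z ω = 1 → D ω = D1 ω) ∧ (Z ω = 0 → D ω = D0 ω) := by
    intro ω
    constructor <;> intro h <;> rw [hD ω, h] <;> ring
  -- the four product-space functions
  have hg00m : Measurable fun w : ℝ × ℝ × ℝ × ℝ × ℝ × ℝ => (1 - w.1) * w.2.2.1 := by
    fun_prop
  have hg01m : Measurable fun w : ℝ × ℝ × ℝ × ℝ × ℝ × ℝ => (1 - w.2.1) * w.2.2.1 := by
    fun_prop
  have hg10m : Measurable fun w : ℝ × ℝ × ℝ × ℝ × ℝ × ℝ => (1 - w.1) * w.2.2.1 * w.2.2.2.2.1 := by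
    fun_prop
  have hg11m : Measurable fun w : ℝ × ℝ × ℝ × ℝ × ℝ × ℝ => (1 - w.2.1) * w.2.2.1 * w.2.2.2.2.1 := by
    fun_prop
  -- integrability of composed functions
  have bnd : ∀ (a b : ℝ), (a = 0 ∨ a = 1) → (b = 0 ∨ b = 1) → ‖(1 - a) * b‖ ≤ 1 := by
    rintro a b (rfl | rfl) (rfl | rfl) <;> norm_num
  have hi00 : Integrable (fun ω => (1 - D0 ω) * S0 ω) P := by
    refine (integrable_const (1:ℝ)).mono' ?_ ?_
    · exact ((measurable_const.sub hD0m).mul hS0m).aestronglyMeasurable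
    · exact Filter.Eventually.of_forall fun ω => bnd _ _ (hD0b ω) (hS0b ω)
  have hi01 : Integrable (fun ω => (1 - D1 ω) * S0 ω) P := by
    refine (integrable_const (1:ℝ)).mono' ?_ ?_
    · exact ((measurable_const.sub hD1m).mul hS0m).aestronglyMeasurable
    · exact Filter.Eventually.of_forall fun ω => bnd _ _ (hD1b ω) (hS0b ω)
  have hi10 : Integrable (fun ω => (1 - D0 ω) * S0 ω * Y0 ω) P := by
    refine Integrable.bdd_mul hY0i
      ((measurable_const.sub hD0m).mul hS0m).aestronglyMeasurable (c := 1) ?_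
    exact Filter.Eventually.of_forall fun ω => bnd _ _ (hD0b ω) (hS0b ω)
  have hi11 : Integrable (fun ω => (1 - D1 ω) * S0 ω * Y0 ω) P := by
    refine Integrable.bdd_mul hY0i
      ((measurable_const.sub hD1m).mul hS0m).aestronglyMeasurable (c := 1) ?_
    exact Filter.Eventually.of_forall fun ω => bnd _ _ (hD1b ω) (hS0b ω)
  -- measurability of Z-sets, positivity
  have hA1 : MeasurableSet {ω | Z ω = 1} := hZm (measurableSet_singleton 1)
  have hA0 : MeasurableSet {ω | Z ω = 0} := hZm (measurableSet_singleton 0)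
  have hZ0 : ({ω | Z ω = 0} : Set Ω) = {ω | Z ω = 1}ᶜ := by
    ext ω; rcases hZb ω with h | h <;> simp [h]
  have hZ0real : (P {ω | Z ω = 0}).toReal = 1 - (P {ω | Z ω = 1}).toReal := by
    rw [hZ0, prob_compl_eq_one_sub hA1, ENNReal.toReal_sub_of_le prob_le_one ENNReal.one_ne_top]
    simp
  have hZ0pos : 0 < (P {ω | Z ω = 0}).toReal := by rw [hZ0real]; linarith
  -- cexp identities
  have cexp_eq : ∀ (f : Ω → ℝ) (g : ℝ × ℝ × ℝ × ℝ × ℝ × ℝ → ℝ) (z : ℝ),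
      Measurable g → Integrable (fun ω => g (W ω)) P →
      (0 : ℝ) < (P {ω | Z ω = z}).toReal →
      (∀ ω ∈ {ω | Z ω = z}, f ω = g (W ω)) →
      cexp P {ω | Z ω = z} f = ∫ ω, g (W ω) ∂P := by
    intro f g z hg hgi hpos hfg
    have hA : MeasurableSet {ω | Z ω = z} := hZm (measurableSet_singleton z)
    unfold cexp
    rw [setIntegral_congr_fun hA hfg, key g hg hgi z, mul_comm, mul_div_assoc,
      div_self hpos.ne', mul_one]
  have e00 : cexp P {ω | Z ω = 0} (fun ω => (1 - D ω) * S ω)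
      = ∫ ω, (1 - D0 ω) * S0 ω ∂P := by
    exact cexp_eq _ (fun w => (1 - w.1) * w.2.2.1) 0 hg00m hi00 hZ0pos
      (fun ω hω => by rw [hDS ω, (hDz ω).2 hω])
  have e01 : cexp P {ω | Z ω = 1} (fun ω => (1 - D ω) * S ω)
      = ∫ ω, (1 - D1 ω) * S0 ω ∂P := by
    exact cexp_eq _ (fun w => (1 - w.2.1) * w.2.2.1) 1 hg01m hi01 hZpos
      (fun ω hω => by rw [hDS ω, (hDz ω).1 hω])
  have e10 : cexp P {ω | Z ω = 0} (fun ω => (1 - D ω) * S ω * Y ω)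
      = ∫ ω, (1 - D0 ω) * S0 ω * Y0 ω ∂P := by
    exact cexp_eq _ (fun w => (1 - w.1) * w.2.2.1 * w.2.2.2.2.1) 0 hg10m hi10 hZ0pos
      (fun ω hω => by rw [hDSY ω, (hDz ω).2 hω])
  have e11 : cexp P {ω | Z ω = 1} (fun ω => (1 - D ω) * S ω * Y ω)
      = ∫ ω, (1 - D1 ω) * S0 ω * Y0 ω ∂P := by
    exact cexp_eq _ (fun w => (1 - w.2.1) * w.2.2.1 * w.2.2.2.2.1) 1 hg11m hi11 hZpos
      (fun ω hω => by rw [hDSY ω, (hDz ω).1 hω])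
  -- E := c ∩ {S0 = 1}
  set E : Set Ω := {ω | D1 ω = 1 ∧ D0 ω = 0} ∩ {ω | S0 ω = 1} with hEdef
  have hEm : MeasurableSet E :=
    (((hD1m (measurableSet_singleton 1)).inter (hD0m (measurableSet_singleton 0)))).inter
      (hS0m (measurableSet_singleton 1))
  -- a.e. identities with indicator of E
  have hae1 : (fun ω => (1 - D0 ω) * S0 ω - (1 - D1 ω) * S0 ω)
      =ᵐ[P] E.indicator (fun _ => (1:ℝ)) := by
    filter_upwards [hmono] with ω hm
    by_cases hE : ω ∈ E
    · rw [Set.indicator_of_mem hE]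
      obtain ⟨⟨h1, h0⟩, hs⟩ := hE
      simp only [Set.mem_setOf_eq] at h1 h0 hs
      rw [h1, h0, hs]; norm_num
    · rw [Set.indicator_of_notMem hE]
      rcases hD0b ω with h0 | h0 <;> rcases hD1b ω with h1 | h1
      · rw [h0, h1]; ring
      · rcases hS0b ω with hs | hs
        · rw [h0, h1, hs]; ring
        · exact absurd ⟨⟨h1, h0⟩, hs⟩ hE
      · rw [h0, h1] at hm; linarith
      · rw [h0, h1]; ring
  have hae2 : (fun ω => (1 - D0 ω) * S0 ω * Y0 ω - (1 - D1 ω) * S0 ω * Y0 ω)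
      =ᵐ[P] E.indicator Y0 := by
    filter_upwards [hmono] with ω hm
    by_cases hE : ω ∈ E
    · rw [Set.indicator_of_mem hE]
      obtain ⟨⟨h1, h0⟩, hs⟩ := hE
      simp only [Set.mem_setOf_eq] at h1 h0 hs
      rw [h1, h0, hs]; ring
    · rw [Set.indicator_of_notMem hE]
      rcases hD0b ω with h0 | h0 <;> rcases hD1b ω with h1 | h1
      · rw [h0, h1]; ring
      · rcases hS0b ω with hs | hs
        · rw [h0, h1, hs]; ring
        · exact absurd ⟨⟨h1, h0⟩, hs⟩ hE
      · rw [h0, h1] at hm; linarith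
      · rw [h0, h1]; ring
  have den : ∫ ω, (1 - D0 ω) * S0 ω ∂P - ∫ ω, (1 - D1 ω) * S0 ω ∂P = (P E).toReal := by
    rw [← integral_sub hi00 hi01, integral_congr_ae hae1, integral_indicator_const (1:ℝ) hEm]
    simp [measureReal_def]
  have num : ∫ ω, (1 - D0 ω) * S0 ω * Y0 ω ∂P - ∫ ω, (1 - D1 ω) * S0 ω * Y0 ω ∂P
      = ∫ ω in E, Y0 ω ∂P := by
    rw [← integral_sub hi10 hi11, integral_congr_ae hae2, integral_indicator hEm]
  -- splitting E into cl and ch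
  set A : Set Ω := {ω | D1 ω = 1 ∧ D0 ω = 0 ∧ S1 ω = 1 ∧ S0 ω = 1} with hAdef
  set B : Set Ω := {ω | D1 ω = 1 ∧ D0 ω = 0 ∧ S1 ω = 0 ∧ S0 ω = 1} with hBdef
  have hAm : MeasurableSet A := by
    apply (hD1m (measurableSet_singleton 1)).inter
    apply (hD0m (measurableSet_singleton 0)).inter
    exact (hS1m (measurableSet_singleton 1)).inter (hS0m (measurableSet_singleton 1))
  have hBm : MeasurableSet B := by
    apply (hD1m (measurableSet_singleton 1)).inter
    apply (hD0m (measurableSet_singleton 0)).inter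
    exact (hS1m (measurableSet_singleton 0)).inter (hS0m (measurableSet_singleton 1))
  have hEAB : E = A ∪ B := by
    ext ω
    simp only [hEdef, hAdef, hBdef, Set.mem_inter_iff, Set.mem_union, Set.mem_setOf_eq]
    constructor
    · rintro ⟨⟨h1, h0⟩, hs⟩
      rcases hS1b ω with h | h
      · exact Or.inr ⟨h1, h0, h, hs⟩
      · exact Or.inl ⟨h1, h0, h, hs⟩
    · rintro (⟨h1, h0, _, hs0⟩ | ⟨h1, h0, _, hs0⟩) <;> exact ⟨⟨h1, h0⟩, hs0⟩
  have hdisj : Disjoint A B := by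
    rw [Set.disjoint_left]
    rintro ω ⟨_, _, h1, _⟩ ⟨_, _, h0, _⟩
    rw [h1] at h0; norm_num at h0
  have hPE : (P E).toReal = (P A).toReal + (P B).toReal := by
    rw [hEAB, measure_union hdisj hBm, ENNReal.toReal_add (measure_ne_top P A) (measure_ne_top P B)]
  have hintE : ∫ ω in E, Y0 ω ∂P = ∫ ω in A, Y0 ω ∂P + ∫ ω in B, Y0 ω ∂P := by
    rw [hEAB, setIntegral_union hdisj hBm hY0i.integrableOn hY0i.integrableOn]
  -- principal ignorability
  set m : ℝ := cexp P A Y0 with hmdef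
  have hIA : ∫ ω in A, Y0 ω ∂P = (P A).toReal * m := by
    rw [hmdef]; unfold cexp
    rw [mul_comm, div_mul_cancel₀ _ hclpos.ne']
  have hIB : ∫ ω in B, Y0 ω ∂P = (P B).toReal * m := by
    rw [hPI0]; unfold cexp
    rw [mul_comm, div_mul_cancel₀ _ hchpos.ne']
  have hnum' : ∫ ω in E, Y0 ω ∂P = (P E).toReal * m := by
    rw [hintE, hIA, hIB, hPE]; ring
  -- conclude
  constructor
  · rw [e00, e01, den]; exact hcS0pos
  · rw [e00, e01, e10, e11, den, num, hnum',
      mul_comm, mul_div_assoc, div_self hcS0pos.ne', mul_one]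
end

section
/- (Theorem 1 / Remark 3: identification of the principal average causal effect without missingness.) Under randomization, monotonicity, relevance and principal ignorability, if P(cl) > 0, P(cp) > 0, P(ch) > 0, P(c ∩ {S₁=1}) > 0 and P(c ∩ {S₀=1}) > 0, then the principal average causal effect τ = E[Y₁ − Y₀ | cl] is nonparametrically identified and equals τ = (E[D·S·Y | Z=1] − E[D·S·Y | Z=0]) / (E[D·S | Z=1] − E[D·S | Z=0]) − (E[(1−D)·S·Y | Z=1] − E[(1−D)·S·Y | Z=0]) / (E[(1−D)·S | Z=1] − E[(1−D)·S | Z=0]). -/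
open MeasureTheory ProbabilityTheory

variable {Ω : Type*} [MeasurableSpace Ω]

lemma cexp_eq_integral (P : Measure Ω) [IsProbabilityMeasure P]
    (W f g : Ω → ℝ) (hWm : Measurable W) (hWb : ∀ ω, W ω = 0 ∨ W ω = 1)
    (hfg : ∀ ω, W ω * f ω = W ω * g ω)
    (hind : IndepFun W g P)
    (hgm : AEStronglyMeasurable g P)
    (hpos : (P {ω | W ω = 1}).toReal ≠ 0) :
    cexp P {ω | W ω = 1} f = ∫ ω, g ω ∂P := by
  have hA : MeasurableSet {ω | W ω = 1} := hWm (measurableSet_singleton 1)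
  have h1 : ∫ ω in {ω | W ω = 1}, f ω ∂P = ∫ ω, W ω * f ω ∂P := by
    rw [← integral_indicator hA]
    refine integral_congr_ae (Filter.Eventually.of_forall fun ω => ?_)
    rcases hWb ω with h | h <;>
      simp [Set.indicator_apply, Set.mem_setOf_eq, h]
  have h2 : ∫ ω, W ω * g ω ∂P = (∫ ω, W ω ∂P) * ∫ ω, g ω ∂P :=
    hind.integral_mul_eq_mul_integral hWm.aestronglyMeasurable hgm
  have h3 : ∫ ω, W ω ∂P = (P {ω | W ω = 1}).toReal := by
    rw [← measureReal_def, ← integral_indicator_one hA]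
    refine integral_congr_ae (Filter.Eventually.of_forall fun ω => ?_)
    rcases hWb ω with h | h <;>
      simp [Set.indicator_apply, Set.mem_setOf_eq, h]
  have h4 : ∫ ω, W ω * f ω ∂P = ∫ ω, W ω * g ω ∂P :=
    integral_congr_ae (Filter.Eventually.of_forall hfg)
  unfold cexp
  rw [h1, h4, h2, h3]
  exact mul_div_cancel_left₀ _ hpos

lemma cexp_union_eq (P : Measure Ω) [IsProbabilityMeasure P] (A B : Set Ω) (X : Ω → ℝ)
    (hB : MeasurableSet B) (hdisj : Disjoint A B)
    (hApos : 0 < (P A).toReal) (hBpos : 0 < (P B).toReal)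
    (hXi : Integrable X P)
    (heq : cexp P A X = cexp P B X) :
    cexp P (A ∪ B) X = cexp P A X := by
  have hsum : (P (A ∪ B)).toReal = (P A).toReal + (P B).toReal := by
    rw [measure_union hdisj hB, ENNReal.toReal_add (measure_ne_top _ _) (measure_ne_top _ _)]
  have hint : ∫ ω in A ∪ B, X ω ∂P = (∫ ω in A, X ω ∂P) + ∫ ω in B, X ω ∂P :=
    setIntegral_union hdisj hB hXi.integrableOn hXi.integrableOn
  unfold cexp at *
  rw [hint, hsum]
  rw [div_eq_div_iff hApos.ne' hBpos.ne'] at heq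
  rw [div_eq_div_iff (by linarith : (0:ℝ) < (P A).toReal + (P B).toReal).ne' hApos.ne']
  ring_nf
  ring_nf at heq
  linarith

/-- Theorem 1 / Remark 3: Under randomization, monotonicity, relevance and principal ignorability, with `P(cl), P(cp), P(ch), P(c ∩ {S₁=1}), P(c ∩ {S₀=1})` all positive, the principal average causal effect `τ = E[Y₁ − Y₀ | cl]` equals `(E[D·S·Y | Z=1] − E[D·S·Y | Z=0]) / (E[D·S | Z=1] − E[D·S | Z=0]) − (E[(1−D)·S·Y | Z=1] − E[(1−D)·S·Y | Z=0]) / (E[(1−D)·S | Z=1] − E[(1−D)·S | Z=0])`. -/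
theorem stmt_11
    (P : Measure Ω) [IsProbabilityMeasure P]
    (Z D0 D1 S0 S1 Y0 Y1 D S Y : Ω → ℝ)
    (hZm : Measurable Z) (hD0m : Measurable D0) (hD1m : Measurable D1)
    (hS0m : Measurable S0) (hS1m : Measurable S1)
    (hY0i : Integrable Y0 P) (hY1i : Integrable Y1 P)
    (hZb : ∀ ω, Z ω = 0 ∨ Z ω = 1)
    (hD0b : ∀ ω, D0 ω = 0 ∨ D0 ω = 1)
    (hD1b : ∀ ω, D1 ω = 0 ∨ D1 ω = 1)
    (hS0b : ∀ ω, S0 ω = 0 ∨ S0 ω = 1)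
    (hS1b : ∀ ω, S1 ω = 0 ∨ S1 ω = 1)
    (hD : ∀ ω, D ω = Z ω * D1 ω + (1 - Z ω) * D0 ω)
    (hS : ∀ ω, S ω = D ω * S1 ω + (1 - D ω) * S0 ω)
    (hY : ∀ ω, Y ω = D ω * Y1 ω + (1 - D ω) * Y0 ω)
    (hindep : IndepFun Z (fun ω => (D0 ω, D1 ω, S0 ω, S1 ω, Y0 ω, Y1 ω)) P)
    (hZpos : 0 < (P {ω | Z ω = 1}).toReal)
    (hZlt1 : (P {ω | Z ω = 1}).toReal < 1)
    (hmono : ∀ᵐ ω ∂P, D0 ω ≤ D1 ω)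
    (hrel : ∫ ω, D1 ω ∂P ≠ ∫ ω, D0 ω ∂P)
    (hclpos : 0 < (P {ω | D1 ω = 1 ∧ D0 ω = 0 ∧ S1 ω = 1 ∧ S0 ω = 1}).toReal)
    (hcppos : 0 < (P {ω | D1 ω = 1 ∧ D0 ω = 0 ∧ S1 ω = 1 ∧ S0 ω = 0}).toReal)
    (hchpos : 0 < (P {ω | D1 ω = 1 ∧ D0 ω = 0 ∧ S1 ω = 0 ∧ S0 ω = 1}).toReal)
    (hPI1 : cexp P {ω | D1 ω = 1 ∧ D0 ω = 0 ∧ S1 ω = 1 ∧ S0 ω = 1} Y1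
      = cexp P {ω | D1 ω = 1 ∧ D0 ω = 0 ∧ S1 ω = 1 ∧ S0 ω = 0} Y1)
    (hPI0 : cexp P {ω | D1 ω = 1 ∧ D0 ω = 0 ∧ S1 ω = 1 ∧ S0 ω = 1} Y0
      = cexp P {ω | D1 ω = 1 ∧ D0 ω = 0 ∧ S1 ω = 0 ∧ S0 ω = 1} Y0)
    (hcS1pos : 0 < (P ({ω | D1 ω = 1 ∧ D0 ω = 0} ∩ {ω | S1 ω = 1})).toReal)
    (hcS0pos : 0 < (P ({ω | D1 ω = 1 ∧ D0 ω = 0} ∩ {ω | S0 ω = 1})).toReal)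
    :
    cexp P {ω | D1 ω = 1 ∧ D0 ω = 0 ∧ S1 ω = 1 ∧ S0 ω = 1} (fun ω => Y1 ω - Y0 ω)
      = (cexp P {ω | Z ω = 1} (fun ω => D ω * S ω * Y ω)
          - cexp P {ω | Z ω = 0} (fun ω => D ω * S ω * Y ω))
        / (cexp P {ω | Z ω = 1} (fun ω => D ω * S ω)
            - cexp P {ω | Z ω = 0} (fun ω => D ω * S ω))
        - (cexp P {ω | Z ω = 1} (fun ω => (1 - D ω) * S ω * Y ω)
            - cexp P {ω | Z ω = 0} (fun ω => (1 - D ω) * S ω * Y ω))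
          / (cexp P {ω | Z ω = 1} (fun ω => (1 - D ω) * S ω)
              - cexp P {ω | Z ω = 0} (fun ω => (1 - D ω) * S ω)) := by
  -- abbreviations for sets
  have hA0eq : {ω | Z ω = 0} = {ω | (fun ω => 1 - Z ω) ω = 1} := by
    ext ω; simp only [Set.mem_setOf_eq]; constructor <;> intro h <;> linarith
  have hZ1m : MeasurableSet {ω | Z ω = 1} := hZm (measurableSet_singleton 1)
  have hZ0val : (P {ω | Z ω = 0}).toReal = 1 - (P {ω | Z ω = 1}).toReal := by
    have hcompl : {ω | Z ω = 0} = {ω | Z ω = 1}ᶜ := by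
      ext ω; rcases hZb ω with h | h <;> simp [h]
    rw [hcompl, measure_compl hZ1m (measure_ne_top _ _), measure_univ,
      ENNReal.toReal_sub_of_le prob_le_one ENNReal.one_ne_top, ENNReal.toReal_one]
  have hZ0pos : (P {ω | Z ω = 0}).toReal ≠ 0 := by rw [hZ0val]; intro h; linarith
  have hW'm : Measurable (fun ω => 1 - Z ω) := measurable_const.sub hZm
  have hW'b : ∀ ω, (1:ℝ) - Z ω = 0 ∨ 1 - Z ω = 1 := fun ω => by
    rcases hZb ω with h | h <;> simp [h]
  have hW'pos : (P {ω | (fun ω => 1 - Z ω) ω = 1}).toReal ≠ 0 := by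
    rw [← hA0eq]; exact hZ0pos
  -- measurability of the eight g-functions as compositions of the big vector
  have m1 : Measurable (fun p : ℝ × ℝ × ℝ × ℝ × ℝ × ℝ => p.2.1 * p.2.2.2.1 * p.2.2.2.2.2) := by
    fun_prop
  have m2 : Measurable (fun p : ℝ × ℝ × ℝ × ℝ × ℝ × ℝ => p.1 * p.2.2.2.1 * p.2.2.2.2.2) := by
    fun_prop
  have m3 : Measurable (fun p : ℝ × ℝ × ℝ × ℝ × ℝ × ℝ => p.2.1 * p.2.2.2.1) := by fun_prop
  have m4 : Measurable (fun p : ℝ × ℝ × ℝ × ℝ × ℝ × ℝ => p.1 * p.2.2.2.1) := by fun_prop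
  have m5 : Measurable (fun p : ℝ × ℝ × ℝ × ℝ × ℝ × ℝ => (1 - p.2.1) * p.2.2.1 * p.2.2.2.2.1) := by
    fun_prop
  have m6 : Measurable (fun p : ℝ × ℝ × ℝ × ℝ × ℝ × ℝ => (1 - p.1) * p.2.2.1 * p.2.2.2.2.1) := by
    fun_prop
  have m7 : Measurable (fun p : ℝ × ℝ × ℝ × ℝ × ℝ × ℝ => (1 - p.2.1) * p.2.2.1) := by fun_prop
  have m8 : Measurable (fun p : ℝ × ℝ × ℝ × ℝ × ℝ × ℝ => (1 - p.1) * p.2.2.1) := by fun_prop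
  -- independence facts
  have i1 : IndepFun Z (fun ω => D1 ω * S1 ω * Y1 ω) P := hindep.comp measurable_id m1
  have i2 : IndepFun (fun ω => 1 - Z ω) (fun ω => D0 ω * S1 ω * Y1 ω) P :=
    hindep.comp (measurable_const.sub measurable_id) m2
  have i3 : IndepFun Z (fun ω => D1 ω * S1 ω) P := hindep.comp measurable_id m3
  have i4 : IndepFun (fun ω => 1 - Z ω) (fun ω => D0 ω * S1 ω) P :=
    hindep.comp (measurable_const.sub measurable_id) m4
  have i5 : IndepFun Z (fun ω => (1 - D1 ω) * S0 ω * Y0 ω) P := hindep.comp measurable_id m5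
  have i6 : IndepFun (fun ω => 1 - Z ω) (fun ω => (1 - D0 ω) * S0 ω * Y0 ω) P :=
    hindep.comp (measurable_const.sub measurable_id) m6
  have i7 : IndepFun Z (fun ω => (1 - D1 ω) * S0 ω) P := hindep.comp measurable_id m7
  have i8 : IndepFun (fun ω => 1 - Z ω) (fun ω => (1 - D0 ω) * S0 ω) P :=
    hindep.comp (measurable_const.sub measurable_id) m8
  -- measurability (aestrongly) of the g functions
  have a1 : AEStronglyMeasurable (fun ω => D1 ω * S1 ω * Y1 ω) P :=
    ((hD1m.mul hS1m).aestronglyMeasurable).mul hY1i.1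
  have a2 : AEStronglyMeasurable (fun ω => D0 ω * S1 ω * Y1 ω) P :=
    ((hD0m.mul hS1m).aestronglyMeasurable).mul hY1i.1
  have a3 : AEStronglyMeasurable (fun ω => D1 ω * S1 ω) P := (hD1m.mul hS1m).aestronglyMeasurable
  have a4 : AEStronglyMeasurable (fun ω => D0 ω * S1 ω) P := (hD0m.mul hS1m).aestronglyMeasurable
  have a5 : AEStronglyMeasurable (fun ω => (1 - D1 ω) * S0 ω * Y0 ω) P :=
    (((measurable_const.sub hD1m).mul hS0m).aestronglyMeasurable).mul hY0i.1
  have a6 : AEStronglyMeasurable (fun ω => (1 - D0 ω) * S0 ω * Y0 ω) P :=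
    (((measurable_const.sub hD0m).mul hS0m).aestronglyMeasurable).mul hY0i.1
  have a7 : AEStronglyMeasurable (fun ω => (1 - D1 ω) * S0 ω) P :=
    ((measurable_const.sub hD1m).mul hS0m).aestronglyMeasurable
  have a8 : AEStronglyMeasurable (fun ω => (1 - D0 ω) * S0 ω) P :=
    ((measurable_const.sub hD0m).mul hS0m).aestronglyMeasurable
  -- pointwise identities
  have p1 : ∀ ω, Z ω * (D ω * S ω * Y ω) = Z ω * (D1 ω * S1 ω * Y1 ω) := by
    intro ω
    rcases hZb ω with hz | hz <;> rcases hD1b ω with h1 | h1 <;> rcases hD0b ω with h0 | h0 <;>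
      simp [hD ω, hS ω, hY ω, hz, h1, h0] <;> ring
  have p2 : ∀ ω, (1 - Z ω) * (D ω * S ω * Y ω) = (1 - Z ω) * (D0 ω * S1 ω * Y1 ω) := by
    intro ω
    rcases hZb ω with hz | hz <;> rcases hD1b ω with h1 | h1 <;> rcases hD0b ω with h0 | h0 <;>
      simp [hD ω, hS ω, hY ω, hz, h1, h0] <;> ring
  have p3 : ∀ ω, Z ω * (D ω * S ω) = Z ω * (D1 ω * S1 ω) := by
    intro ω
    rcases hZb ω with hz | hz <;> rcases hD1b ω with h1 | h1 <;> rcases hD0b ω with h0 | h0 <;>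
      simp [hD ω, hS ω, hz, h1, h0] <;> ring
  have p4 : ∀ ω, (1 - Z ω) * (D ω * S ω) = (1 - Z ω) * (D0 ω * S1 ω) := by
    intro ω
    rcases hZb ω with hz | hz <;> rcases hD1b ω with h1 | h1 <;> rcases hD0b ω with h0 | h0 <;>
      simp [hD ω, hS ω, hz, h1, h0] <;> ring
  have p5 : ∀ ω, Z ω * ((1 - D ω) * S ω * Y ω) = Z ω * ((1 - D1 ω) * S0 ω * Y0 ω) := by
    intro ω
    rcases hZb ω with hz | hz <;> rcases hD1b ω with h1 | h1 <;> rcases hD0b ω with h0 | h0 <;>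
      simp [hD ω, hS ω, hY ω, hz, h1, h0] <;> ring
  have p6 : ∀ ω, (1 - Z ω) * ((1 - D ω) * S ω * Y ω)
      = (1 - Z ω) * ((1 - D0 ω) * S0 ω * Y0 ω) := by
    intro ω
    rcases hZb ω with hz | hz <;> rcases hD1b ω with h1 | h1 <;> rcases hD0b ω with h0 | h0 <;>
      simp [hD ω, hS ω, hY ω, hz, h1, h0] <;> ring
  have p7 : ∀ ω, Z ω * ((1 - D ω) * S ω) = Z ω * ((1 - D1 ω) * S0 ω) := by
    intro ω
    rcases hZb ω with hz | hz <;> rcases hD1b ω with h1 | h1 <;> rcases hD0b ω with h0 | h0 <;>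
      simp [hD ω, hS ω, hz, h1, h0] <;> ring
  have p8 : ∀ ω, (1 - Z ω) * ((1 - D ω) * S ω) = (1 - Z ω) * ((1 - D0 ω) * S0 ω) := by
    intro ω
    rcases hZb ω with hz | hz <;> rcases hD1b ω with h1 | h1 <;> rcases hD0b ω with h0 | h0 <;>
      simp [hD ω, hS ω, hz, h1, h0] <;> ring
  -- the eight conditional expectations
  have e1 : cexp P {ω | Z ω = 1} (fun ω => D ω * S ω * Y ω) = ∫ ω, D1 ω * S1 ω * Y1 ω ∂P :=
    cexp_eq_integral P Z _ _ hZm hZb p1 i1 a1 hZpos.ne'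
  have e2 : cexp P {ω | Z ω = 0} (fun ω => D ω * S ω * Y ω) = ∫ ω, D0 ω * S1 ω * Y1 ω ∂P := by
    rw [hA0eq]; exact cexp_eq_integral P _ _ _ hW'm hW'b p2 i2 a2 hW'pos
  have e3 : cexp P {ω | Z ω = 1} (fun ω => D ω * S ω) = ∫ ω, D1 ω * S1 ω ∂P :=
    cexp_eq_integral P Z _ _ hZm hZb p3 i3 a3 hZpos.ne'
  have e4 : cexp P {ω | Z ω = 0} (fun ω => D ω * S ω) = ∫ ω, D0 ω * S1 ω ∂P := by
    rw [hA0eq]; exact cexp_eq_integral P _ _ _ hW'm hW'b p4 i4 a4 hW'pos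
  have e5 : cexp P {ω | Z ω = 1} (fun ω => (1 - D ω) * S ω * Y ω)
      = ∫ ω, (1 - D1 ω) * S0 ω * Y0 ω ∂P :=
    cexp_eq_integral P Z _ _ hZm hZb p5 i5 a5 hZpos.ne'
  have e6 : cexp P {ω | Z ω = 0} (fun ω => (1 - D ω) * S ω * Y ω)
      = ∫ ω, (1 - D0 ω) * S0 ω * Y0 ω ∂P := by
    rw [hA0eq]; exact cexp_eq_integral P _ _ _ hW'm hW'b p6 i6 a6 hW'pos
  have e7 : cexp P {ω | Z ω = 1} (fun ω => (1 - D ω) * S ω) = ∫ ω, (1 - D1 ω) * S0 ω ∂P :=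
    cexp_eq_integral P Z _ _ hZm hZb p7 i7 a7 hZpos.ne'
  have e8 : cexp P {ω | Z ω = 0} (fun ω => (1 - D ω) * S ω) = ∫ ω, (1 - D0 ω) * S0 ω ∂P := by
    rw [hA0eq]; exact cexp_eq_integral P _ _ _ hW'm hW'b p8 i8 a8 hW'pos
  -- measurable sets
  have hc1m : MeasurableSet ({ω | D1 ω = 1 ∧ D0 ω = 0} ∩ {ω | S1 ω = 1}) :=
    ((hD1m (measurableSet_singleton 1)).inter (hD0m (measurableSet_singleton 0))).inter
      (hS1m (measurableSet_singleton 1))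
  have hc0m : MeasurableSet ({ω | D1 ω = 1 ∧ D0 ω = 0} ∩ {ω | S0 ω = 1}) :=
    ((hD1m (measurableSet_singleton 1)).inter (hD0m (measurableSet_singleton 0))).inter
      (hS0m (measurableSet_singleton 1))
  have hcpm : MeasurableSet {ω | D1 ω = 1 ∧ D0 ω = 0 ∧ S1 ω = 1 ∧ S0 ω = 0} :=
    (hD1m (measurableSet_singleton 1)).inter ((hD0m (measurableSet_singleton 0)).inter
      ((hS1m (measurableSet_singleton 1)).inter (hS0m (measurableSet_singleton 0))))
  have hchm : MeasurableSet {ω | D1 ω = 1 ∧ D0 ω = 0 ∧ S1 ω = 0 ∧ S0 ω = 1} :=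
    (hD1m (measurableSet_singleton 1)).inter ((hD0m (measurableSet_singleton 0)).inter
      ((hS1m (measurableSet_singleton 0)).inter (hS0m (measurableSet_singleton 1))))
  -- integrability
  have hbY1 : Integrable (fun ω => D1 ω * S1 ω * Y1 ω) P := by
    refine hY1i.bdd_mul (hD1m.mul hS1m).aestronglyMeasurable (c := 1) (Filter.Eventually.of_forall fun ω => ?_)
    rcases hD1b ω with h | h <;> rcases hS1b ω with h' | h' <;> simp [h, h']
  have hbY2 : Integrable (fun ω => D0 ω * S1 ω * Y1 ω) P := by
    refine hY1i.bdd_mul (hD0m.mul hS1m).aestronglyMeasurable (c := 1) (Filter.Eventually.of_forall fun ω => ?_)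
    rcases hD0b ω with h | h <;> rcases hS1b ω with h' | h' <;> simp [h, h']
  have hbJ1 : Integrable (fun ω => D1 ω * S1 ω) P := by
    refine (integrable_const (1:ℝ)).mono' (hD1m.mul hS1m).aestronglyMeasurable ?_
    filter_upwards with ω
    rcases hD1b ω with h | h <;> rcases hS1b ω with h' | h' <;> simp [h, h']
  have hbJ2 : Integrable (fun ω => D0 ω * S1 ω) P := by
    refine (integrable_const (1:ℝ)).mono' (hD0m.mul hS1m).aestronglyMeasurable ?_
    filter_upwards with ω
    rcases hD0b ω with h | h <;> rcases hS1b ω with h' | h' <;> simp [h, h']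
  have hbK1 : Integrable (fun ω => (1 - D1 ω) * S0 ω * Y0 ω) P := by
    refine hY0i.bdd_mul ((measurable_const.sub hD1m).mul hS0m).aestronglyMeasurable
      (c := 1) (Filter.Eventually.of_forall fun ω => ?_)
    rcases hD1b ω with h | h <;> rcases hS0b ω with h' | h' <;> simp [h, h']
  have hbK2 : Integrable (fun ω => (1 - D0 ω) * S0 ω * Y0 ω) P := by
    refine hY0i.bdd_mul ((measurable_const.sub hD0m).mul hS0m).aestronglyMeasurable
      (c := 1) (Filter.Eventually.of_forall fun ω => ?_)
    rcases hD0b ω with h | h <;> rcases hS0b ω with h' | h' <;> simp [h, h']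
  have hbL1 : Integrable (fun ω => (1 - D1 ω) * S0 ω) P := by
    refine (integrable_const (1:ℝ)).mono'
      ((measurable_const.sub hD1m).mul hS0m).aestronglyMeasurable ?_
    filter_upwards with ω
    rcases hD1b ω with h | h <;> rcases hS0b ω with h' | h' <;> simp [h, h']
  have hbL2 : Integrable (fun ω => (1 - D0 ω) * S0 ω) P := by
    refine (integrable_const (1:ℝ)).mono'
      ((measurable_const.sub hD0m).mul hS0m).aestronglyMeasurable ?_
    filter_upwards with ω
    rcases hD0b ω with h | h <;> rcases hS0b ω with h' | h' <;> simp [h, h']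
  -- differences as set integrals
  have d1 : ∫ ω, D1 ω * S1 ω * Y1 ω ∂P - ∫ ω, D0 ω * S1 ω * Y1 ω ∂P
      = ∫ ω in ({ω | D1 ω = 1 ∧ D0 ω = 0} ∩ {ω | S1 ω = 1}), Y1 ω ∂P := by
    rw [← integral_sub hbY1 hbY2, ← integral_indicator hc1m]
    refine integral_congr_ae ?_
    filter_upwards [hmono] with ω hm
    rcases hD1b ω with h1 | h1 <;> rcases hD0b ω with h0 | h0 <;> rcases hS1b ω with hs | hs <;>
      simp [Set.indicator_apply, Set.mem_inter_iff, Set.mem_setOf_eq, h1, h0, hs] <;> linarith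
  have d2 : ∫ ω, D1 ω * S1 ω ∂P - ∫ ω, D0 ω * S1 ω ∂P
      = (P ({ω | D1 ω = 1 ∧ D0 ω = 0} ∩ {ω | S1 ω = 1})).toReal := by
    rw [← integral_sub hbJ1 hbJ2, ← measureReal_def, ← integral_indicator_one hc1m]
    refine integral_congr_ae ?_
    filter_upwards [hmono] with ω hm
    rcases hD1b ω with h1 | h1 <;> rcases hD0b ω with h0 | h0 <;> rcases hS1b ω with hs | hs <;>
      simp [Set.indicator_apply, Set.mem_inter_iff, Set.mem_setOf_eq, h1, h0, hs] <;> linarith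
  have d3 : ∫ ω, (1 - D1 ω) * S0 ω * Y0 ω ∂P - ∫ ω, (1 - D0 ω) * S0 ω * Y0 ω ∂P
      = -∫ ω in ({ω | D1 ω = 1 ∧ D0 ω = 0} ∩ {ω | S0 ω = 1}), Y0 ω ∂P := by
    rw [← integral_sub hbK1 hbK2, ← integral_indicator hc0m, ← integral_neg]
    refine integral_congr_ae ?_
    filter_upwards [hmono] with ω hm
    rcases hD1b ω with h1 | h1 <;> rcases hD0b ω with h0 | h0 <;> rcases hS0b ω with hs | hs <;>
      simp [Set.indicator_apply, Set.mem_inter_iff, Set.mem_setOf_eq, h1, h0, hs] <;> linarith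
  have d4 : ∫ ω, (1 - D1 ω) * S0 ω ∂P - ∫ ω, (1 - D0 ω) * S0 ω ∂P
      = -(P ({ω | D1 ω = 1 ∧ D0 ω = 0} ∩ {ω | S0 ω = 1})).toReal := by
    rw [← integral_sub hbL1 hbL2, ← measureReal_def, ← integral_indicator_one hc0m, ← integral_neg]
    refine integral_congr_ae ?_
    filter_upwards [hmono] with ω hm
    rcases hD1b ω with h1 | h1 <;> rcases hD0b ω with h0 | h0 <;> rcases hS0b ω with hs | hs <;>
      simp [Set.indicator_apply, Set.mem_inter_iff, Set.mem_setOf_eq, h1, h0, hs] <;> linarith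
  -- set decompositions
  have hc1u : ({ω | D1 ω = 1 ∧ D0 ω = 0} ∩ {ω | S1 ω = 1})
      = {ω | D1 ω = 1 ∧ D0 ω = 0 ∧ S1 ω = 1 ∧ S0 ω = 1}
        ∪ {ω | D1 ω = 1 ∧ D0 ω = 0 ∧ S1 ω = 1 ∧ S0 ω = 0} := by
    ext ω
    rcases hS0b ω with h | h <;>
      simp only [Set.mem_inter_iff, Set.mem_union, Set.mem_setOf_eq, h] <;> norm_num <;> tauto
  have hc0u : ({ω | D1 ω = 1 ∧ D0 ω = 0} ∩ {ω | S0 ω = 1})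
      = {ω | D1 ω = 1 ∧ D0 ω = 0 ∧ S1 ω = 1 ∧ S0 ω = 1}
        ∪ {ω | D1 ω = 1 ∧ D0 ω = 0 ∧ S1 ω = 0 ∧ S0 ω = 1} := by
    ext ω
    rcases hS1b ω with h | h <;>
      simp only [Set.mem_inter_iff, Set.mem_union, Set.mem_setOf_eq, h] <;> norm_num <;> tauto
  have hdisj1 : Disjoint {ω | D1 ω = 1 ∧ D0 ω = 0 ∧ S1 ω = 1 ∧ S0 ω = 1}
      {ω | D1 ω = 1 ∧ D0 ω = 0 ∧ S1 ω = 1 ∧ S0 ω = 0} := by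
    rw [Set.disjoint_left]
    rintro ω ⟨_, _, _, h1⟩ ⟨_, _, _, h2⟩
    rw [h1] at h2; exact one_ne_zero h2
  have hdisj0 : Disjoint {ω | D1 ω = 1 ∧ D0 ω = 0 ∧ S1 ω = 1 ∧ S0 ω = 1}
      {ω | D1 ω = 1 ∧ D0 ω = 0 ∧ S1 ω = 0 ∧ S0 ω = 1} := by
    rw [Set.disjoint_left]
    rintro ω ⟨_, _, h1, _⟩ ⟨_, _, h2, _⟩
    rw [h1] at h2; exact one_ne_zero h2
  -- principal ignorability steps
  have hq1 : cexp P ({ω | D1 ω = 1 ∧ D0 ω = 0} ∩ {ω | S1 ω = 1}) Y1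
      = cexp P {ω | D1 ω = 1 ∧ D0 ω = 0 ∧ S1 ω = 1 ∧ S0 ω = 1} Y1 := by
    rw [hc1u]
    exact cexp_union_eq P _ _ Y1 hcpm hdisj1 hclpos hcppos hY1i hPI1
  have hq0 : cexp P ({ω | D1 ω = 1 ∧ D0 ω = 0} ∩ {ω | S0 ω = 1}) Y0
      = cexp P {ω | D1 ω = 1 ∧ D0 ω = 0 ∧ S1 ω = 1 ∧ S0 ω = 1} Y0 := by
    rw [hc0u]
    exact cexp_union_eq P _ _ Y0 hchm hdisj0 hclpos hchpos hY0i hPI0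
  -- put everything together
  rw [e1, e2, e3, e4, e5, e6, e7, e8, d1, d2, d3, d4, neg_div_neg_eq]
  show _ = cexp P ({ω | D1 ω = 1 ∧ D0 ω = 0} ∩ {ω | S1 ω = 1}) Y1
      - cexp P ({ω | D1 ω = 1 ∧ D0 ω = 0} ∩ {ω | S0 ω = 1}) Y0
  rw [hq1, hq0]
  unfold cexp
  rw [integral_sub hY1i.integrableOn hY0i.integrableOn, sub_div]
end
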